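/- arXiv:1804.02643 — 14 statements merged into one kernel-verified Lean document; each statement's English description precedes it below -/
import Mathlib

section
/- For every x ∈ (0, π) and every a ∈ (1, 3/2), the inequalities cos²(x/2) ≤ ((sin x)/x)^a ≤ (sin x)/x hold. -/
/-!
Write `t = x / 2`, so that `sin x / x = cos t * (sin t / t)`. The classical inequality
`t³ cos t ≤ sin³ t` on `[0, π/2]` follows from the Taylor bounds `t - t³/6 ≤ sin t` and
`cos t ≤ 1 - t²/2 + t⁴/24`, and gives `cos⁴ (x/2) ≤ (sin x / x)³`, i.e.
`cos² (x/2) ≤ (sin x / x) ^ (3/2)`. Both bounds then come from the monotonicity of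
`a ↦ s ^ a` for `0 < s ≤ 1`.
-/

open Real

namespace Real

lemma cos_le_one_sub_sq_div_two_add_pow_four_div (t : ℝ) :
    cos t ≤ 1 - t ^ 2 / 2 + t ^ 4 / 24 := by
  wlog ht : 0 ≤ t
  · have := this (-t) (by linarith)
    rwa [cos_neg, neg_sq, Even.neg_pow (by decide)] at this
  let g : ℝ → ℝ := fun u ↦ 1 - u ^ 2 / 2 + u ^ 4 / 24 - cos u
  have hg : ∀ y, HasDerivAt g (sin y - (y - y ^ 3 / 6)) y := fun y ↦ by
    refine ((((hasDerivAt_const y 1).sub ((hasDerivAt_pow 2 y).div_const 2)).add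
      ((hasDerivAt_pow 4 y).div_const 24)).sub (hasDerivAt_cos y)).congr_deriv ?_
    push_cast
    ring
  have hmono : MonotoneOn g (Set.Ici 0) := by
    refine monotoneOn_of_deriv_nonneg (convex_Ici 0)
      (fun y _ ↦ (hg y).continuousAt.continuousWithinAt)
      (fun y _ ↦ (hg y).differentiableAt.differentiableWithinAt) fun y hy ↦ ?_
    rw [interior_Ici] at hy
    rw [(hg y).deriv, sub_nonneg]
    exact sin_ge_sub_cube hy.le
  have hg₀ : g 0 = 0 := by simp [g]
  have := hmono Set.self_mem_Ici ht ht
  rw [hg₀] at this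
  exact sub_nonneg.1 this

lemma pow_three_mul_cos_le_sin_pow_three {t : ℝ} (ht₀ : 0 ≤ t) (ht : t ≤ π / 2) :
    t ^ 3 * cos t ≤ sin t ^ 3 := by
  have ht2 : t ^ 2 ≤ 6 := by nlinarith [pi_lt_d2]
  have hsub : 0 ≤ t - t ^ 3 / 6 := by nlinarith [mul_nonneg ht₀ (sub_nonneg.2 ht2)]
  calc t ^ 3 * cos t ≤ t ^ 3 * (1 - t ^ 2 / 2 + t ^ 4 / 24) :=
        mul_le_mul_of_nonneg_left (cos_le_one_sub_sq_div_two_add_pow_four_div t) (by positivity)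
    _ ≤ (t - t ^ 3 / 6) ^ 3 := by
        -- the difference is `t⁷ (9 - t²) / 216`
        nlinarith [mul_nonneg (pow_nonneg ht₀ 7) (by linarith : 0 ≤ 9 - t ^ 2)]
    _ ≤ sin t ^ 3 := pow_le_pow_left₀ hsub (sin_ge_sub_cube ht₀) 3

lemma cos_half_pow_four_le_sin_div_pow_three {x : ℝ} (hx₀ : 0 < x) (hx : x ≤ π) :
    cos (x / 2) ^ 4 ≤ (sin x / x) ^ 3 := by
  set t := x / 2 with ht
  have ht₀ : 0 < t := by positivity
  have hcos : 0 ≤ cos t := cos_nonneg_of_mem_Icc ⟨by linarith [pi_pos], by linarith⟩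
  have hsin : sin x / x = cos t * (sin t / t) := by
    rw [show x = 2 * t by ring, sin_two_mul]; field_simp
  have hsinc : cos t ≤ sin t ^ 3 / t ^ 3 := by
    rw [le_div_iff₀ (by positivity), mul_comm]
    exact pow_three_mul_cos_le_sin_pow_three ht₀.le (by linarith)
  rw [hsin, mul_pow, div_pow, pow_succ]
  exact mul_le_mul_of_nonneg_left hsinc (by positivity)

end Real

lemma sq_le_rpow_three_halves_of_pow_four_le_pow_three {c s : ℝ} (hs : 0 ≤ s)
    (h : c ^ 4 ≤ s ^ 3) : c ^ 2 ≤ s ^ (3 / 2 : ℝ) := by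
  refine le_of_pow_le_pow_left₀ two_ne_zero (by positivity) ?_
  rw [← rpow_mul_natCast hs, ← pow_mul]
  norm_num [h]

theorem sinc_pow_a_between (x : ℝ) (hx : x ∈ Set.Ioo (0 : ℝ) π)
    (a : ℝ) (ha : a ∈ Set.Ioo (1 : ℝ) (3 / 2)) :
    Real.cos (x / 2) ^ 2 ≤ (Real.sin x / x) ^ a ∧
      (Real.sin x / x) ^ a ≤ Real.sin x / x := by
  obtain ⟨hx₀, hxπ⟩ := hx
  obtain ⟨ha₁, ha₂⟩ := ha
  have hs₀ : 0 < sin x / x := div_pos (sin_pos_of_pos_of_lt_pi hx₀ hxπ) hx₀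
  have hs₁ : sin x / x ≤ 1 := (div_le_one hx₀).2 (sin_le hx₀.le)
  constructor
  · calc cos (x / 2) ^ 2 ≤ (sin x / x) ^ (3 / 2 : ℝ) :=
          sq_le_rpow_three_halves_of_pow_four_le_pow_three hs₀.le
            (cos_half_pow_four_le_sin_div_pow_three hx₀ hxπ.le)
      _ ≤ (sin x / x) ^ a := rpow_le_rpow_of_exponent_ge hs₀ hs₁ ha₂.le
  · simpa using rpow_le_rpow_of_exponent_ge hs₀ hs₁ ha₁.le
end

section
/- For every x ∈ (0, π), the inequalities cos²(x/2) ≤ ((sin x)/x)^(3/2) ≤ (sin x)/x hold. -/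
open Real

lemma taylor_sin_ge : ∀ t : ℝ, 0 ≤ t → t - t^3/6 ≤ Real.sin t := by
  have key : MonotoneOn (fun t : ℝ => Real.sin t - t + t^3/6) (Set.Ici 0) := by
    have hd : ∀ t : ℝ, HasDerivAt (fun t : ℝ => Real.sin t - t + t^3/6)
        (Real.cos t - 1 + t^2/2) t := by
      intro t
      have h1 := (Real.hasDerivAt_sin t).sub (hasDerivAt_id t)
      have h2 := ((hasDerivAt_pow 3 t).div_const 6)
      have := h1.add h2
      exact this.congr_deriv (by rw [show (3:ℕ) - 1 = 2 from rfl]; push_cast; ring)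
    apply monotoneOn_of_deriv_nonneg (convex_Ici 0)
    · exact (Continuous.continuousOn (by continuity))
    · intro t ht
      exact (hd t).differentiableAt.differentiableWithinAt
    · intro t ht
      rw [(hd t).deriv]
      have := Real.one_sub_sq_div_two_le_cos (x := t)
      nlinarith
  intro t ht
  have h0 := key (Set.self_mem_Ici) ht ht
  simp at h0
  nlinarith [h0]

lemma taylor_cos_le : ∀ t : ℝ, 0 ≤ t → Real.cos t ≤ 1 - t^2/2 + t^4/24 := by
  have key : MonotoneOn (fun t : ℝ => 1 - t^2/2 + t^4/24 - Real.cos t) (Set.Ici 0) := by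
    have hd : ∀ t : ℝ, HasDerivAt (fun t : ℝ => 1 - t^2/2 + t^4/24 - Real.cos t)
        (-t + t^3/6 + Real.sin t) t := by
      intro t
      have h1 := ((hasDerivAt_pow 2 t).div_const 2)
      have h2 := ((hasDerivAt_pow 4 t).div_const 24)
      have := (((hasDerivAt_const t (1:ℝ)).sub h1).add h2).sub (Real.hasDerivAt_cos t)
      exact this.congr_deriv (by rw [show (2:ℕ) - 1 = 1 from rfl, show (4:ℕ) - 1 = 3 from rfl]; push_cast; ring)
    apply monotoneOn_of_deriv_nonneg (convex_Ici 0)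
    · exact (Continuous.continuousOn (by continuity))
    · intro t ht
      exact (hd t).differentiableAt.differentiableWithinAt
    · intro t ht
      rw [(hd t).deriv]
      have := taylor_sin_ge t (le_of_lt (by simpa using ht))
      nlinarith
  intro t ht
  have h0 := key (Set.self_mem_Ici) ht ht
  simp at h0
  nlinarith [h0]

lemma cos_le_sinc_cube {t : ℝ} (h0 : 0 < t) (h1 : t < π/2) :
    Real.cos t * t^3 ≤ Real.sin t ^ 3 := by
  have hs := taylor_sin_ge t h0.le
  have hc := taylor_cos_le t h0.le
  have ht2 : t^2 < 4 := by
    nlinarith [Real.pi_lt_d2]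
  have hpos : 0 < t - t^3/6 := by nlinarith
  calc Real.cos t * t^3 ≤ (1 - t^2/2 + t^4/24) * t^3 := mul_le_mul_of_nonneg_right hc (by positivity)
    _ ≤ (t - t^3/6)^3 := by nlinarith [sq_nonneg t, sq_nonneg (t^2), sq_nonneg (t^3)]
    _ ≤ Real.sin t ^ 3 := pow_le_pow_left₀ hpos.le hs 3

theorem sinc_pow_three_halves_between (x : ℝ) (hx : x ∈ Set.Ioo (0 : ℝ) π) :
    Real.cos (x / 2) ^ 2 ≤ (Real.sin x / x) ^ ((3 : ℝ) / 2) ∧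
      (Real.sin x / x) ^ ((3 : ℝ) / 2) ≤ Real.sin x / x := by
  obtain ⟨hx0, hxpi⟩ := hx
  have hsinpos : 0 < Real.sin x := Real.sin_pos_of_pos_of_lt_pi hx0 hxpi
  have hslt : Real.sin x < x := Real.sin_lt hx0
  have hs_pos : 0 < Real.sin x / x := div_pos hsinpos hx0
  have hs_lt1 : Real.sin x / x < 1 := (div_lt_one hx0).2 hslt
  constructor
  · set t := x / 2 with ht_def
    have ht0 : 0 < t := by positivity
    have ht1 : t < π / 2 := by rw [ht_def]; linarith
    have hct : 0 < Real.cos t := Real.cos_pos_of_mem_Ioo ⟨by linarith [Real.pi_pos], ht1⟩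
    have hst : 0 < Real.sin t :=
      Real.sin_pos_of_pos_of_lt_pi ht0 (ht1.trans (by linarith [Real.pi_pos]))
    have key := cos_le_sinc_cube ht0 ht1
    have hs_eq : Real.sin x / x = Real.sin t * Real.cos t / t := by
      have hx2 : x = 2 * t := by rw [ht_def]; ring
      rw [hx2, Real.sin_two_mul]
      field_simp
    rw [hs_eq]
    have hrw : (Real.sin t * Real.cos t / t) ^ ((3:ℝ)/2)
        = Real.sqrt ((Real.sin t * Real.cos t / t) ^ 3) := by
      rw [Real.sqrt_eq_rpow, ← Real.rpow_natCast (Real.sin t * Real.cos t / t) 3,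
        ← Real.rpow_mul (by positivity)]
      norm_num
    rw [hrw, Real.le_sqrt (by positivity), div_pow, le_div_iff₀ (by positivity)]
    nlinarith [mul_le_mul_of_nonneg_right key (pow_nonneg hct.le 3), pow_pos hct 3,
      pow_pos ht0 3]
    positivity
  · calc (Real.sin x / x) ^ ((3:ℝ)/2)
        ≤ (Real.sin x / x) ^ (1:ℝ) :=
          Real.rpow_le_rpow_of_exponent_ge hs_pos hs_lt1.le (by norm_num)
      _ = Real.sin x / x := Real.rpow_one _
end

section
/- For every x ∈ (0, π), ln((sin x)/x) = − ∑_{k=1}^∞ (2^{2k−1} · |B_{2k}| / (k · (2k)!)) · x^{2k}, where the series converges. -/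
open Real

theorem log_sinc_series (x : ℝ) (hx : x ∈ Set.Ioo (0 : ℝ) π) :
    HasSum
      (fun k : ℕ =>
        -(2 ^ (2 * (k + 1) - 1) * |(bernoulli (2 * (k + 1)) : ℝ)| /
            ((k + 1 : ℝ) * (Nat.factorial (2 * (k + 1)) : ℝ)) * x ^ (2 * (k + 1))))
      (Real.log (Real.sin x / x)) := by
  obtain ⟨hx0, hxπ⟩ := hx
  have hπ : (0 : ℝ) < π := Real.pi_pos
  have hπ0 : (π : ℝ) ≠ 0 := ne_of_gt hπ
  have hx0' : x ≠ 0 := ne_of_gt hx0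
  set a : ℕ → ℝ := fun n => x ^ 2 / (((n : ℝ) + 1) ^ 2 * π ^ 2) with ha
  have hapos : ∀ n, 0 < a n := by
    intro n
    apply div_pos (by positivity)
    positivity
  have halt : ∀ n, a n < 1 := by
    intro n
    rw [ha, div_lt_one (by positivity)]
    have h1 : x ^ 2 < π ^ 2 := by nlinarith
    have h2 : (1 : ℝ) ≤ ((n : ℝ) + 1) ^ 2 := by
      have : (1 : ℝ) ≤ (n : ℝ) + 1 := by
        have := Nat.cast_nonneg (α := ℝ) n; linarith
      nlinarith
    nlinarith
  have hsinpos : 0 < Real.sin x := Real.sin_pos_of_pos_of_lt_pi hx0 hxπ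
  have hq : 0 < Real.sin x / x := div_pos hsinpos hx0
  -- Step A: HasSum (fun n => -log (1 - a n)) (-log (sin x / x))
  have hA : HasSum (fun n => -Real.log (1 - a n)) (-Real.log (Real.sin x / x)) := by
    have heuler := Real.tendsto_euler_sin_prod (x / π)
    have heq : ∀ n : ℕ, π * (x / π) * ∏ j ∈ Finset.range n,
        ((1 : ℝ) - (x / π) ^ 2 / ((j : ℝ) + 1) ^ 2) =
        x * ∏ j ∈ Finset.range n, (1 - a j) := by
      intro n
      rw [mul_div_cancel₀ _ hπ0]
      congr 1
      apply Finset.prod_congr rfl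
      intro j _
      rw [ha]
      field_simp
    have hsin : Real.sin (π * (x / π)) = Real.sin x := by
      rw [mul_div_cancel₀ _ hπ0]
    rw [hsin] at heuler
    simp only [heq] at heuler
    have hP : Filter.Tendsto (fun n : ℕ => ∏ j ∈ Finset.range n, (1 - a j))
        Filter.atTop (nhds (Real.sin x / x)) := by
      have := heuler.div_const x
      simpa [mul_div_assoc, mul_div_cancel_left₀ _ hx0'] using this
    have hlogP : Filter.Tendsto (fun n : ℕ => Real.log (∏ j ∈ Finset.range n, (1 - a j)))
        Filter.atTop (nhds (Real.log (Real.sin x / x))) :=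
      ((Real.continuousAt_log (ne_of_gt hq)).tendsto.comp hP)
    have hlogsum : ∀ n : ℕ, Real.log (∏ j ∈ Finset.range n, (1 - a j)) =
        ∑ j ∈ Finset.range n, Real.log (1 - a j) := by
      intro n
      exact Real.log_prod (fun j _ => ne_of_gt (by linarith [halt j]))
    simp only [hlogsum] at hlogP
    rw [hasSum_iff_tendsto_nat_of_nonneg]
    · simpa [← Finset.sum_neg_distrib] using hlogP.neg
    · intro n
      simp only [neg_nonneg]
      exact Real.log_nonpos (by linarith [halt n]) (by linarith [hapos n])
  -- Step B: per n, expand the log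
  have hB : ∀ n : ℕ, HasSum (fun k : ℕ => (a n) ^ (k + 1) / (k + 1))
      (-Real.log (1 - a n)) := by
    intro n
    exact hasSum_pow_div_log_of_abs_lt_one
      (by rw [abs_of_pos (hapos n)]; exact halt n)
  -- Step C: summability on ℕ × ℕ
  set g : ℕ × ℕ → ℝ := fun p => (a p.1) ^ (p.2 + 1) / (p.2 + 1) with hg
  have hgnonneg : ∀ p : ℕ × ℕ, 0 ≤ g p := by
    intro p
    apply div_nonneg (le_of_lt (pow_pos (hapos p.1) _))
    positivity
  have hgsum : Summable g := by
    rw [summable_prod_of_nonneg hgnonneg]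
    constructor
    · intro n
      exact (hB n).summable
    · have : (fun n => ∑' k, g (n, k)) = fun n => -Real.log (1 - a n) := by
        funext n
        exact (hB n).tsum_eq
      rw [this]
      exact hA.summable
  have hgg : HasSum g (-Real.log (Real.sin x / x)) := by
    have h1 := hgsum.hasSum.prod_fiberwise (fun n => hB n)
    have h2 : -Real.log (Real.sin x / x) = ∑' p, g p := hA.unique h1
    rw [h2]
    exact hgsum.hasSum
  -- swap coordinates
  set f : ℕ × ℕ → ℝ := fun p => (a p.2) ^ (p.1 + 1) / (p.1 + 1) with hf
  have hff : HasSum f (-Real.log (Real.sin x / x)) := by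
    have : f = g ∘ (Equiv.prodComm ℕ ℕ) := by
      funext p
      simp [hf, hg, Equiv.prodComm]
    rw [this]
    exact (Equiv.prodComm ℕ ℕ).hasSum_iff.mpr hgg
  -- Step D: fiber sums over n, using zeta values
  have hD : ∀ k : ℕ, HasSum (fun n : ℕ => f (k, n))
      (2 ^ (2 * (k + 1) - 1) * |(bernoulli (2 * (k + 1)) : ℝ)| /
        ((k + 1 : ℝ) * (Nat.factorial (2 * (k + 1)) : ℝ)) * x ^ (2 * (k + 1))) := by
    intro k
    set m : ℕ := k + 1 with hm
    have hm0 : m ≠ 0 := Nat.succ_ne_zero k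
    have hzeta := hasSum_zeta_nat hm0
    set Z : ℝ := (-1 : ℝ) ^ (m + 1) * (2 : ℝ) ^ (2 * m - 1) * π ^ (2 * m) *
        (bernoulli (2 * m) : ℝ) / (Nat.factorial (2 * m) : ℝ) with hZ
    -- Z > 0
    have hZpos : 0 < Z := by
      have h1 : (1 : ℝ) ≤ Z := by
        have := le_hasSum hzeta 1 (fun n _ => by positivity)
        simpa using this
      linarith
    -- shift the sum to start at 1
    have hshift : HasSum (fun n : ℕ => 1 / ((n : ℝ) + 1) ^ (2 * m)) Z := by
      have h := (hasSum_nat_add_iff' (f := fun n : ℕ => 1 / (n : ℝ) ^ (2 * m)) 1).mpr hzeta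
      simp only [Finset.sum_range_one, Nat.cast_zero,
        zero_pow (by omega : 2 * m ≠ 0), div_zero, sub_zero, Nat.cast_add,
        Nat.cast_one] at h
      exact h
    -- multiply by the constant
    have hmul := hshift.mul_left (x ^ (2 * m) / (π ^ (2 * m) * m))
    have hterm : ∀ n : ℕ, x ^ (2 * m) / (π ^ (2 * m) * m) *
        (1 / ((n : ℝ) + 1) ^ (2 * m)) = f (k, n) := by
      intro n
      have han : (a n) ^ m = x ^ (2 * m) / (((n : ℝ) + 1) ^ (2 * m) * π ^ (2 * m)) := by
        rw [ha]
        rw [div_pow, ← pow_mul, mul_pow, ← pow_mul, ← pow_mul]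
      simp only [hf]
      rw [show k + 1 = m from rfl, han]
      have h1 : (0 : ℝ) < ((n : ℝ) + 1) ^ (2 * m) := by positivity
      have h2 : (0 : ℝ) < π ^ (2 * m) := by positivity
      have h3 : (0 : ℝ) < (m : ℝ) := by exact_mod_cast Nat.pos_of_ne_zero hm0
      push_cast
      field_simp
      ring
      push_cast [hm]; ring
    simp only [hterm] at hmul
    -- identify the target value
    have hBsign : |(bernoulli (2 * m) : ℝ)| = (-1 : ℝ) ^ (m + 1) * (bernoulli (2 * m) : ℝ) := by
      have hfac : (0 : ℝ) < (Nat.factorial (2 * m) : ℝ) := by positivity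
      have hb : 0 < (-1 : ℝ) ^ (m + 1) * (bernoulli (2 * m) : ℝ) := by
        by_contra hcon
        push_neg at hcon
        have : Z ≤ 0 := by
          rw [hZ]
          apply div_nonpos_of_nonpos_of_nonneg _ (le_of_lt hfac)
          have hre : (-1 : ℝ) ^ (m + 1) * (2 : ℝ) ^ (2 * m - 1) * π ^ (2 * m) *
              (bernoulli (2 * m) : ℝ) = ((2 : ℝ) ^ (2 * m - 1) * π ^ (2 * m)) *
              ((-1 : ℝ) ^ (m + 1) * (bernoulli (2 * m) : ℝ)) := by ring
          rw [hre]
          exact mul_nonpos_of_nonneg_of_nonpos (by positivity) hcon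
        linarith
      calc |(bernoulli (2 * m) : ℝ)| = |(-1 : ℝ) ^ (m + 1) * (bernoulli (2 * m) : ℝ)| := by
            rw [abs_mul, abs_pow, abs_neg, abs_one, one_pow, one_mul]
        _ = (-1 : ℝ) ^ (m + 1) * (bernoulli (2 * m) : ℝ) := abs_of_pos hb
    have hval : x ^ (2 * m) / (π ^ (2 * m) * m) * Z =
        2 ^ (2 * m - 1) * |(bernoulli (2 * m) : ℝ)| /
          ((m : ℝ) * (Nat.factorial (2 * m) : ℝ)) * x ^ (2 * m) := by
      rw [hBsign, hZ]
      have h2 : (0 : ℝ) < π ^ (2 * m) := by positivity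
      have h3 : (0 : ℝ) < (m : ℝ) := by exact_mod_cast Nat.pos_of_ne_zero hm0
      have hfac : (0 : ℝ) < (Nat.factorial (2 * m) : ℝ) := by positivity
      field_simp
    rw [show ((k : ℝ) + 1) = (m : ℝ) by push_cast [hm]; ring, ← hval]
    exact hmul
  -- conclude
  have hfinal := hff.prod_fiberwise hD
  have := hfinal.neg
  simpa using this
end

section
/- For every x ∈ (−π/2, π/2), ln(cos x) = − ∑_{k=1}^∞ (2^{2k−1} · (2^{2k} − 1) · |B_{2k}| / (k · (2k)!)) · x^{2k}, where the series converges. -/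
/-!
Euler's product `cos x = ∏ₙ (1 - (2x/π)² / (2n+1)²)` (the even-index half of the sine product for
`sin 2x`, divided by the product for `2 sin x`) turns `-log (cos x)` into `∑ₙ -log (1 - qₙ)` with
`qₙ = (2x/π)² / (2n+1)²`. Expanding each logarithm gives a double series of nonnegative terms
`qₙ^m / m`; summing it in the other order, the column of `m` is `(2x/π)^(2m) / m` times the sum of
`(2n+1)^(-2m)`, which is `(1 - 2^(-2m)) ζ(2m)`, and Euler's formula for `ζ(2m)` gives the
Bernoulli coefficients.
-/

open Real Filter Finset Topology
open scoped Nat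

theorem prod_range_two_mul {M : Type*} [CommMonoid M] (f : ℕ → M) (n : ℕ) :
    ∏ j ∈ range (2 * n), f j = (∏ i ∈ range n, f (2 * i)) * ∏ i ∈ range n, f (2 * i + 1) := by
  induction n with
  | zero => simp
  | succ n ih =>
    rw [Nat.mul_succ, prod_range_succ, prod_range_succ, prod_range_succ, prod_range_succ, ih]
    ac_rfl

theorem tendsto_euler_cos_prod {x : ℝ} (hx : sin x ≠ 0) :
    Tendsto (fun n : ℕ => ∏ i ∈ range n, (1 - (2 * x / π) ^ 2 / (2 * i + 1) ^ 2)) atTop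
      (𝓝 (cos x)) := by
  have hsin2 := (tendsto_euler_sin_prod (2 * x / π)).comp (tendsto_id.const_mul_atTop' two_pos)
  have hsin := (tendsto_euler_sin_prod (x / π)).const_mul 2
  rw [show π * (2 * x / π) = 2 * x by field_simp] at hsin2
  rw [show π * (x / π) = x by field_simp] at hsin
  have hden : 2 * sin x ≠ 0 := mul_ne_zero two_ne_zero hx
  have hcos : sin (2 * x) / (2 * sin x) = cos x := by
    rw [sin_two_mul]; field_simp
  rw [← hcos]
  refine (hsin2.div hsin hden).congr' ?_
  filter_upwards [hsin.eventually_ne hden] with n hn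
  have hodd : ∀ i : ℕ, 1 - (2 * x / π) ^ 2 / (((2 * i + 1 : ℕ) : ℝ) + 1) ^ 2 =
      1 - (x / π) ^ 2 / ((i : ℝ) + 1) ^ 2 := fun i => by
    push_cast; field_simp; ring
  simp only [Pi.div_apply, Function.comp_apply, id_eq, prod_range_two_mul, hodd]
  rw [div_eq_iff hn]
  push_cast
  ring

theorem hasSum_log_of_tendsto_prod {f : ℕ → ℝ} {P : ℝ} (hf₀ : ∀ n, 0 < f n) (hf₁ : ∀ n, f n ≤ 1)
    (hP : 0 < P) (h : Tendsto (fun n => ∏ i ∈ range n, f i) atTop (𝓝 P)) :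
    HasSum (fun n => log (f n)) (log P) := by
  suffices HasSum (fun n => -log (f n)) (-log P) by simpa using this.neg
  rw [hasSum_iff_tendsto_nat_of_nonneg fun n => neg_nonneg.2 (log_nonpos (hf₀ n).le (hf₁ n))]
  refine ((continuousAt_log hP.ne').tendsto.comp h).neg.congr fun n => ?_
  simp [log_prod fun i _ => (hf₀ i).ne']

theorem HasSum.sum_comm_of_nonneg {α β : Type*} {F : α × β → ℝ} {L : α → ℝ} {C : β → ℝ} {S : ℝ}
    (hL : HasSum L S) (hF : 0 ≤ F) (hrow : ∀ a, HasSum (fun b => F (a, b)) (L a))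
    (hcol : ∀ b, HasSum (fun a => F (a, b)) (C b)) : HasSum C S := by
  have hFs : Summable F := (summable_prod_of_nonneg hF).2
    ⟨fun a => (hrow a).summable, hL.summable.congr fun a => (hrow a).tsum_eq.symm⟩
  have hFS : HasSum F S := by
    rw [← (hFs.hasSum.prod_fiberwise hrow).unique hL]
    exact hFs.hasSum
  exact ((Equiv.prodComm β α).hasSum_iff.2 hFS).prod_fiberwise hcol

/-- The sign `(-1) ^ (k + 1)` in Euler's formula is that of `B_{2k}`, since `ζ(2k) > 0`. -/
theorem hasSum_zeta_nat_abs {k : ℕ} (hk : k ≠ 0) :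
    HasSum (fun n : ℕ => 1 / (n : ℝ) ^ (2 * k))
      (2 ^ (2 * k - 1) * π ^ (2 * k) * |(bernoulli (2 * k) : ℝ)| / (2 * k)!) := by
  have h := hasSum_zeta_nat hk
  have hc : (0 : ℝ) < 2 ^ (2 * k - 1) * π ^ (2 * k) / (2 * k)! := by positivity
  have hζ : 0 < (-1 : ℝ) ^ (k + 1) * 2 ^ (2 * k - 1) * π ^ (2 * k) * bernoulli (2 * k) / (2 * k)! :=
    lt_of_lt_of_le one_pos (by simpa using le_hasSum h 1 fun n _ => by positivity)
  have hB : 0 < (-1 : ℝ) ^ (k + 1) * bernoulli (2 * k) := by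
    have e : (-1 : ℝ) ^ (k + 1) * 2 ^ (2 * k - 1) * π ^ (2 * k) * bernoulli (2 * k) / (2 * k)! =
        2 ^ (2 * k - 1) * π ^ (2 * k) / (2 * k)! * ((-1 : ℝ) ^ (k + 1) * bernoulli (2 * k)) := by
      ring
    exact pos_of_mul_pos_right (e ▸ hζ) hc.le
  have habs : |(bernoulli (2 * k) : ℝ)| = (-1 : ℝ) ^ (k + 1) * bernoulli (2 * k) := by
    rw [← abs_of_pos hB, abs_mul, abs_pow, abs_neg, abs_one, one_pow, one_mul]
  convert h using 1
  rw [habs]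
  ring

theorem HasSum.one_div_odd_pow {p : ℕ} {Z : ℝ} (h : HasSum (fun n : ℕ => 1 / (n : ℝ) ^ p) Z) :
    HasSum (fun n : ℕ => 1 / (2 * n + 1 : ℝ) ^ p) ((1 - (2 ^ p)⁻¹) * Z) := by
  have heven : HasSum (fun n : ℕ => 1 / ((2 * n : ℕ) : ℝ) ^ p) ((2 ^ p)⁻¹ * Z) :=
    (h.mul_left _).congr_fun fun n => by push_cast; rw [mul_pow]; field_simp
  obtain ⟨S, hodd⟩ : Summable fun n : ℕ => 1 / ((2 * n + 1 : ℕ) : ℝ) ^ p :=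
    h.summable.comp_injective (i := fun n => 2 * n + 1) fun a b hab => by simpa using hab
  have hS : S = (1 - (2 ^ p)⁻¹) * Z := by
    linarith [(HasSum.even_add_odd (f := fun n : ℕ => 1 / (n : ℝ) ^ p) heven hodd).unique h]
  rw [← hS]
  convert hodd using 3
  push_cast; rfl

theorem hasSum_sq_div_odd_sq_pow_div (x : ℝ) {m : ℕ} (hm : m ≠ 0) :
    HasSum (fun n : ℕ => ((2 * x / π) ^ 2 / (2 * n + 1) ^ 2) ^ m / m)
      (2 ^ (2 * m - 1) * (2 ^ (2 * m) - 1) * |(bernoulli (2 * m) : ℝ)| / (m * (2 * m)!) *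
        x ^ (2 * m)) := by
  have h := (hasSum_zeta_nat_abs hm).one_div_odd_pow.mul_left ((2 * x / π) ^ (2 * m) / m)
  have h2 : (2 : ℝ) ^ (2 * m) = 2 * 2 ^ (2 * m - 1) := (mul_pow_sub_one (by omega) 2).symm
  have hm' : (m : ℝ) ≠ 0 := by exact_mod_cast hm
  have hval : 2 ^ (2 * m - 1) * (2 ^ (2 * m) - 1) * |(bernoulli (2 * m) : ℝ)| / (m * (2 * m)!) *
      x ^ (2 * m) = (2 * x / π) ^ (2 * m) / m * ((1 - (2 ^ (2 * m))⁻¹) *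
        (2 ^ (2 * m - 1) * π ^ (2 * m) * |(bernoulli (2 * m) : ℝ)| / (2 * m)!)) := by
    rw [div_pow, mul_pow, h2]
    field_simp
  rw [hval]
  refine h.congr_fun fun n => ?_
  rw [div_pow _ ((2 * n + 1 : ℝ) ^ 2), ← pow_mul, ← pow_mul]
  ring

theorem log_cos_series (x : ℝ) (hx : x ∈ Set.Ioo (-(π / 2)) (π / 2)) :
    HasSum
      (fun k : ℕ =>
        -(2 ^ (2 * (k + 1) - 1) * (2 ^ (2 * (k + 1)) - 1) * |(bernoulli (2 * (k + 1)) : ℝ)| /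
            ((k + 1 : ℝ) * (Nat.factorial (2 * (k + 1)) : ℝ)) * x ^ (2 * (k + 1))))
      (Real.log (Real.cos x)) := by
  rcases eq_or_ne x 0 with rfl | hx0
  · simp
  set q : ℕ → ℝ := fun n => (2 * x / π) ^ 2 / (2 * n + 1) ^ 2
  have ha : (2 * x / π) ^ 2 < 1 := by
    rw [sq_lt_one_iff_abs_lt_one, abs_lt, lt_div_iff₀ pi_pos, div_lt_one pi_pos]
    constructor <;> linarith [hx.1, hx.2]
  have hq : ∀ n, 0 ≤ q n ∧ q n < 1 := fun n => by
    refine ⟨by positivity, (div_lt_one (by positivity)).2 (ha.trans_le ?_)⟩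
    exact one_le_pow₀ (by linarith [n.cast_nonneg (α := ℝ)])
  have hsin : sin x ≠ 0 := by
    rwa [Ne, sin_eq_zero_iff_of_lt_of_lt (by linarith [hx.1, pi_pos]) (by linarith [hx.2, pi_pos])]
  have hlog : HasSum (fun n => -log (1 - q n)) (-log (cos x)) :=
    (hasSum_log_of_tendsto_prod (fun n => by linarith [hq n]) (fun n => by linarith [hq n])
      (cos_pos_of_mem_Ioo hx) (tendsto_euler_cos_prod hsin)).neg
  have hrow : ∀ n, HasSum (fun k : ℕ => q n ^ (k + 1) / (k + 1)) (-log (1 - q n)) := fun n =>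
    hasSum_pow_div_log_of_abs_lt_one (abs_lt.2 ⟨by linarith [hq n], (hq n).2⟩)
  have hcol : ∀ k : ℕ, HasSum (fun n => q n ^ (k + 1) / (k + 1))
      (2 ^ (2 * (k + 1) - 1) * (2 ^ (2 * (k + 1)) - 1) * |(bernoulli (2 * (k + 1)) : ℝ)| /
            ((k + 1 : ℝ) * (Nat.factorial (2 * (k + 1)) : ℝ)) * x ^ (2 * (k + 1))) := fun k => by
    have h := hasSum_sq_div_odd_sq_pow_div x k.succ_ne_zero
    push_cast at h
    exact h
  have hF : 0 ≤ fun p : ℕ × ℕ => q p.1 ^ (p.2 + 1) / (p.2 + 1) := fun p => by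
    have := (hq p.1).1
    positivity
  simpa using (hlog.sum_comm_of_nonneg hF hrow hcol).neg
end

section
/- Let c > 0, let m be a positive integer, and let f : ℝ → ℝ be real analytic on the interval (0, c) such that for every integer k ≥ m and every x ∈ (0, c) the k-th derivative satisfies f^{(k)}(x) > 0. Suppose that (1) there exists δ ∈ (0, c) such that for every x ∈ (0, δ) and every k ∈ {0, 1, …, m−1} one has f^{(k)}(x) < 0, and (2) for every k ∈ {0, 1, …, m−1} the left limit f^{(k)}(c−) := lim_{x→c−} f^{(k)}(x) exists and is strictly positive. Then f has exactly one zero in (0, c), i.e. there is exactly one x₀ ∈ (0, c) with f(x₀) = 0. -/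
open Real

/-!
Downward induction on `k`: each `f⁽ᵏ⁾` with `k < m` is negative on `(0, w)` and positive on
`(w, c)` for some `w`. Indeed, if `f⁽ᵏ⁺¹⁾` has this sign pattern (for `k + 1 = m` with `w = 0`),
then `f⁽ᵏ⁾` decreases and then increases; being negative near `0` it stays negative up to the
turning point, and being positive near `c` it crosses zero exactly once after it.
-/

open Set Filter Topology

def NegPosAround (g : ℝ → ℝ) (a z b : ℝ) : Prop :=
  (∀ x ∈ Ioo a z, g x < 0) ∧ ∀ x ∈ Ioo z b, 0 < g x

section

variable {g : ℝ → ℝ} {a z b : ℝ}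

theorem NegPosAround.existsUnique_zero {w : ℝ} (h : NegPosAround g a w b) (hw : w ∈ Ioo a b)
    (hgw : g w = 0) : ∃! x, x ∈ Ioo a b ∧ g x = 0 := by
  refine ⟨w, ⟨hw, hgw⟩, fun y ⟨hy, hgy⟩ => ?_⟩
  rcases lt_trichotomy y w with hyw | rfl | hwy
  · exact absurd hgy (h.1 y ⟨hy.1, hyw⟩).ne
  · rfl
  · exact absurd hgy (h.2 y ⟨hwy, hy.2⟩).ne'

theorem neg_on_Ioc_of_deriv_neg (hg : ContinuousOn g (Ioo a b)) (hzb : z < b)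
    (hderiv : ∀ x ∈ Ioo a z, deriv g x < 0) (hneg : ∀ᶠ x in 𝓝[>] a, g x < 0) :
    ∀ x ∈ Ioc a z, g x < 0 := by
  have hanti : StrictAntiOn g (Ioc a z) :=
    strictAntiOn_of_deriv_neg (convex_Ioc a z)
      (hg.mono fun x hx => ⟨hx.1, hx.2.trans_lt hzb⟩) (by rwa [interior_Ioc])
  intro x hx
  obtain ⟨y, hgy, hy⟩ := (hneg.and (Ioo_mem_nhdsGT hx.1)).exists
  calc g x < g y := hanti ⟨hy.1, hy.2.le.trans hx.2⟩ hx hy.2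
    _ < 0 := hgy

theorem exists_zero_negPosAround_of_deriv (hg : ContinuousOn g (Ioo a b)) (hz : z ∈ Ico a b)
    (hderiv : NegPosAround (deriv g) a z b) (hneg : ∀ᶠ x in 𝓝[>] a, g x < 0)
    (hpos : ∀ᶠ x in 𝓝[<] b, 0 < g x) :
    ∃ w ∈ Ioo a b, NegPosAround g a w b ∧ g w = 0 := by
  have hnegIoc := neg_on_Ioc_of_deriv_neg hg hz.2 hderiv.1 hneg
  set J := Ioo a b ∩ Ici z
  have hJ : Convex ℝ J := (convex_Ioo a b).inter (convex_Ici z)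
  have hgJ : ContinuousOn g J := hg.mono inter_subset_left
  have hmono : StrictMonoOn g J := strictMonoOn_of_deriv_pos hJ hgJ fun x hx => by
    rw [interior_inter, interior_Ioo, interior_Ici] at hx
    exact hderiv.2 x ⟨hx.2, hx.1.2⟩
  obtain ⟨n, hnJ, hgn⟩ : ∃ n ∈ J, g n < 0 := by
    obtain ⟨y, hgy, hy⟩ := (hneg.and (Ioo_mem_nhdsGT (hz.1.trans_lt hz.2))).exists
    rcases le_total y z with hyz | hzy
    · exact ⟨z, ⟨⟨hy.1.trans_le hyz, hz.2⟩, self_mem_Ici⟩, hnegIoc z ⟨hy.1.trans_le hyz, le_rfl⟩⟩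
    · exact ⟨y, ⟨hy, hzy⟩, hgy⟩
  obtain ⟨p, hgp, hpJ⟩ : ∃ p, 0 < g p ∧ p ∈ J := by
    refine (hpos.and (mem_of_superset (Ioo_mem_nhdsLT (max_lt (hz.1.trans_lt hz.2) hz.2))
      fun x hx => ?_)).exists
    exact ⟨⟨(le_max_left a z).trans_lt hx.1, hx.2⟩, (le_max_right a z).trans hx.1.le⟩
  obtain ⟨w, hwJ, hgw⟩ := hJ.isPreconnected.intermediate_value hnJ hpJ hgJ ⟨hgn.le, hgp.le⟩
  refine ⟨w, hwJ.1, ⟨fun x hx => ?_, fun x hx => ?_⟩, hgw⟩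
  · rcases le_or_gt x z with hxz | hzx
    · exact hnegIoc x ⟨hx.1, hxz⟩
    · exact hgw ▸ hmono ⟨⟨hx.1, hx.2.trans hwJ.1.2⟩, hzx.le⟩ hwJ hx.2
  · exact hgw ▸ hmono hwJ ⟨⟨hwJ.1.1.trans hx.1, hx.2⟩, hwJ.2.trans hx.1.le⟩ hx.1

end

theorem exactly_one_zero (c : ℝ) (hc : 0 < c) (m : ℕ) (hm : 0 < m) (f : ℝ → ℝ)
    (hf : AnalyticOnNhd ℝ f (Set.Ioo 0 c))
    (hpos : ∀ k : ℕ, m ≤ k → ∀ x ∈ Set.Ioo (0 : ℝ) c, 0 < iteratedDeriv k f x)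
    (hneg : ∃ δ ∈ Set.Ioo (0 : ℝ) c, ∀ x ∈ Set.Ioo (0 : ℝ) δ, ∀ k < m,
      iteratedDeriv k f x < 0)
    (hlim : ∀ k < m, ∃ L : ℝ, 0 < L ∧
      Filter.Tendsto (iteratedDeriv k f) (nhdsWithin c (Set.Iio c)) (nhds L)) :
    ∃! x₀ : ℝ, x₀ ∈ Set.Ioo (0 : ℝ) c ∧ f x₀ = 0 := by
  obtain ⟨δ, hδ, hδneg⟩ := hneg
  have hstep : ∀ k < m, (∃ z ∈ Ico 0 c, NegPosAround (iteratedDeriv (k + 1) f) 0 z c) →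
      ∃ w ∈ Ioo 0 c, NegPosAround (iteratedDeriv k f) 0 w c ∧ iteratedDeriv k f w = 0 := by
    rintro k hk ⟨z, hz, hsign⟩
    obtain ⟨L, hL, hfL⟩ := hlim k hk
    have hcont : ContinuousOn (iteratedDeriv k f) (Ioo 0 c) := by
      rw [iteratedDeriv_eq_iterate]
      exact (hf.iterated_deriv k).continuousOn
    exact exists_zero_negPosAround_of_deriv hcont hz (by rwa [← iteratedDeriv_succ])
      (mem_of_superset (Ioo_mem_nhdsGT hδ.1) fun x hx => hδneg x hx k hk)
      (hfL.eventually (eventually_gt_nhds hL))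
  have hsigns : ∀ k ≤ m, ∃ z ∈ Ico 0 c, NegPosAround (iteratedDeriv k f) 0 z c := by
    intro k hk
    induction hk using Nat.decreasingInduction with
    | self => exact ⟨0, ⟨le_rfl, hc⟩, fun x hx => absurd hx.2 hx.1.not_gt, hpos m le_rfl⟩
    | of_succ k hk ih =>
      obtain ⟨w, hw, hsign, -⟩ := hstep k hk ih
      exact ⟨w, Ioo_subset_Ico_self hw, hsign⟩
  obtain ⟨w, hw, hsign, hzero⟩ := hstep 0 hm (hsigns 1 hm)
  simpa only [iteratedDeriv_zero] using hsign.existsUnique_zero hw hzero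
end

section
/- For every x ∈ (0, π), (3/2)·ln((sin x)/x) − 2·ln(cos(x/2)) > 0. -/
open Real

lemma sin_gt_sub_cube' (t : ℝ) (ht : 0 < t) : t - t ^ 3 / 6 < Real.sin t := by
  have hmono : StrictMonoOn (fun s : ℝ => Real.sin s - s + s ^ 3 / 6) (Set.Ici (0 : ℝ)) := by
    apply strictMonoOn_of_deriv_pos (convex_Ici 0)
    · fun_prop
    · intro s hs
      rw [interior_Ici] at hs
      have hd : HasDerivAt (fun s : ℝ => Real.sin s - s + s ^ 3 / 6)
          (Real.cos s - 1 + 3 * s ^ 2 / 6) s := by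
        have := ((Real.hasDerivAt_sin s).sub (hasDerivAt_id s)).add
          ((hasDerivAt_pow 3 s).div_const 6)
        exact this.congr_deriv (by ring)
      rw [hd.deriv]
      have := Real.one_sub_sq_div_two_lt_cos (x := s) (ne_of_gt hs)
      nlinarith
  have h0 : (0:ℝ) ∈ Set.Ici (0:ℝ) := Set.self_mem_Ici
  have ht' : t ∈ Set.Ici (0:ℝ) := le_of_lt ht
  have := hmono h0 ht' ht
  simp only [Real.sin_zero] at this
  nlinarith [this]

lemma cos_lt_quartic (t : ℝ) (ht : 0 < t) : Real.cos t < 1 - t ^ 2 / 2 + t ^ 4 / 24 := by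
  have hmono : StrictMonoOn (fun s : ℝ => 1 - s ^ 2 / 2 + s ^ 4 / 24 - Real.cos s)
      (Set.Ici (0 : ℝ)) := by
    apply strictMonoOn_of_deriv_pos (convex_Ici 0)
    · fun_prop
    · intro s hs
      rw [interior_Ici] at hs
      have hd : HasDerivAt (fun s : ℝ => 1 - s ^ 2 / 2 + s ^ 4 / 24 - Real.cos s)
          (-(2 * s) / 2 + 4 * s ^ 3 / 24 - (-Real.sin s)) s := by
        have := (((hasDerivAt_const s (1:ℝ)).sub ((hasDerivAt_pow 2 s).div_const 2)).add
          ((hasDerivAt_pow 4 s).div_const 24)).sub (Real.hasDerivAt_cos s)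
        exact this.congr_deriv (by ring)
      rw [hd.deriv]
      have := sin_gt_sub_cube' s hs
      nlinarith
  have := hmono (Set.self_mem_Ici) (le_of_lt ht : t ∈ Set.Ici (0:ℝ)) ht
  simp only [Real.cos_zero] at this
  nlinarith [this]

theorem f_three_halves_pos (x : ℝ) (hx : x ∈ Set.Ioo (0 : ℝ) π) :
    0 < (3 / 2 : ℝ) * Real.log (Real.sin x / x) - 2 * Real.log (Real.cos (x / 2)) := by
  obtain ⟨hx0, hxπ⟩ := hx
  set t := x / 2 with ht_def
  have ht0 : 0 < t := by positivity
  have htπ : t < π / 2 := by simp only [ht_def]; linarith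
  have hsin_t : 0 < Real.sin t := Real.sin_pos_of_pos_of_lt_pi ht0 (by linarith [Real.pi_pos])
  have hcos_t : 0 < Real.cos t := Real.cos_pos_of_mem_Ioo ⟨by linarith, htπ⟩
  have hsin_x : 0 < Real.sin x := Real.sin_pos_of_pos_of_lt_pi hx0 hxπ
  have hx2t : x = 2 * t := by rw [ht_def]; ring
  have hsinx_eq : Real.sin x = 2 * Real.sin t * Real.cos t := by
    rw [hx2t, Real.sin_two_mul]
  have ht16 : t < 1.6 := by
    have := Real.pi_lt_d2
    linarith
  -- key polynomial inequality: x^3 * cos(t)^4 < sin(x)^3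
  have key : x ^ 3 * Real.cos t ^ 4 < Real.sin x ^ 3 := by
    rw [hsinx_eq, hx2t]
    have h1 := sin_gt_sub_cube' t ht0
    have h2 := cos_lt_quartic t ht0
    have hst : 0 < t - t ^ 3 / 6 := by nlinarith
    have hcube : (t - t ^ 3 / 6) ^ 3 < Real.sin t ^ 3 :=
      pow_lt_pow_left₀ h1 (le_of_lt hst) (by norm_num)
    have step1 : t ^ 3 * Real.cos t < Real.sin t ^ 3 := by
      nlinarith [mul_pos (mul_pos ht0 ht0) ht0, sq_nonneg t,
        mul_nonneg (mul_nonneg (le_of_lt ht0) (le_of_lt ht0)) (sq_nonneg (t*t)),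
        pow_pos ht0 7]
    have hmul := mul_lt_mul_of_pos_right step1 (by positivity : (0:ℝ) < 8 * Real.cos t ^ 3)
    nlinarith [hmul]
  -- take logs
  have hlog : Real.log (Real.cos t ^ 4) < Real.log (Real.sin x ^ 3 / x ^ 3) := by
    apply Real.log_lt_log (by positivity)
    rw [lt_div_iff₀ (by positivity)]
    linarith [key]
  rw [Real.log_pow, Real.log_div (by positivity) (by positivity), Real.log_pow,
    Real.log_pow] at hlog
  have hld : Real.log (Real.sin x / x) = Real.log (Real.sin x) - Real.log x :=
    Real.log_div (ne_of_gt hsin_x) (ne_of_gt hx0)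
  rw [hld]
  push_cast at hlog
  linarith
end

section
/- For every real a ≥ 2 and every x ∈ (0, π), ((sin x)/x)^a ≤ cos²(x/2). -/
open Real

/- Halving the angle factors `sinc x = sinc (x / 2) * cos (x / 2)`; since `sinc ≤ 1`, this gives
`sin x / x ≤ cos (x / 2)` wherever the cosine is nonnegative, in particular on `(0, π)`. There
`0 < sin x / x ≤ 1`, so raising to a power `a ≥ 2` only decreases it below its square. -/

namespace Real

theorem sinc_eq_sinc_half_mul_cos_half (x : ℝ) : sinc x = sinc (x / 2) * cos (x / 2) := by
  rcases eq_or_ne x 0 with rfl | hx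
  · simp
  have hx2 : x / 2 ≠ 0 := div_ne_zero hx two_ne_zero
  rw [sinc_of_ne_zero hx, sinc_of_ne_zero hx2]
  conv_lhs => rw [← mul_div_cancel₀ x two_ne_zero, sin_two_mul]
  field_simp

theorem sinc_le_cos_half {x : ℝ} (hcos : 0 ≤ cos (x / 2)) : sinc x ≤ cos (x / 2) := by
  rw [sinc_eq_sinc_half_mul_cos_half]
  exact mul_le_of_le_one_left hcos (sinc_le_one _)

end Real

theorem sinc_pow_le_cos_sq (a : ℝ) (ha : 2 ≤ a) (x : ℝ) (hx : x ∈ Set.Ioo (0 : ℝ) π) :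
    (Real.sin x / x) ^ a ≤ Real.cos (x / 2) ^ 2 := by
  obtain ⟨hx0, hxπ⟩ := hx
  have hpos : 0 < sin x / x := div_pos (sin_pos_of_pos_of_lt_pi hx0 hxπ) hx0
  have hcos : 0 ≤ cos (x / 2) := cos_nonneg_of_mem_Icc ⟨by linarith [pi_pos], by linarith⟩
  have hle : sin x / x ≤ cos (x / 2) := sinc_of_ne_zero hx0.ne' ▸ sinc_le_cos_half hcos
  calc (sin x / x) ^ a ≤ (sin x / x) ^ (2 : ℝ) :=
        rpow_le_rpow_of_exponent_ge hpos (hle.trans (cos_le_one _)) ha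
    _ = (sin x / x) ^ 2 := rpow_two _
    _ ≤ cos (x / 2) ^ 2 := pow_le_pow_left₀ hpos.le hle 2
end

section
/- For every a ∈ (3/2, 2), the function f_a(x) = a·ln((sin x)/x) − 2·ln(cos(x/2)) has exactly one zero in the interval (0, π): there is exactly one x_a ∈ (0, π) with f_a(x_a) = 0. -/
open Real

open Set Filter

noncomputable def Gf (u : ℝ) : ℝ := Real.log u - Real.log (Real.sin u)
noncomputable def Hf (u : ℝ) : ℝ := -Real.log (Real.cos u)
noncomputable def psi (u : ℝ) : ℝ := (1/u - Real.cos u / Real.sin u) * (Real.cos u / Real.sin u)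

lemma aux_nonneg (f f' : ℝ → ℝ) (hd : ∀ x, HasDerivAt f (f' x) x)
    (h0 : f 0 = 0) (hf' : ∀ x, 0 ≤ x → 0 ≤ f' x) {x : ℝ} (hx : 0 ≤ x) : 0 ≤ f x := by
  have hmono : MonotoneOn f (Ici 0) := by
    apply monotoneOn_of_deriv_nonneg (convex_Ici 0)
    · exact fun y _ => ((hd y).differentiableAt.continuousAt).continuousWithinAt
    · exact fun y _ => (hd y).differentiableAt.differentiableWithinAt
    · intro y hy
      rw [(hd y).deriv]
      exact hf' y (le_of_lt (by simpa using hy))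
  have := hmono (le_refl (0:ℝ)) hx hx
  simpa [h0] using this

lemma sin_le_id {x : ℝ} (hx : 0 ≤ x) : Real.sin x ≤ x := by
  have := aux_nonneg (fun x => x - Real.sin x) (fun x => 1 - Real.cos x)
    (fun x => (hasDerivAt_id x).sub (Real.hasDerivAt_sin x))
    (by simp) (fun x _ => by show (0:ℝ) ≤ 1 - Real.cos x; nlinarith [Real.cos_le_one x]) hx
  linarith

lemma cos_ge_quad {x : ℝ} (hx : 0 ≤ x) : 1 - x^2/2 ≤ Real.cos x := by
  have := aux_nonneg (fun x => Real.cos x - (1 - x^2/2)) (fun x => x - Real.sin x)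
    (fun x => by
      have h1 : HasDerivAt (fun x : ℝ => Real.cos x - (1 - x^2/2)) (-Real.sin x - (0 - (2*x^1)/2)) x := by
        exact (Real.hasDerivAt_cos x).sub ((hasDerivAt_const x (1:ℝ)).sub (((hasDerivAt_pow 2 x)).div_const 2))
      convert h1 using 1; ring)
    (by simp) (fun x hx => by show (0:ℝ) ≤ x - Real.sin x; nlinarith [sin_le_id hx]) hx
  linarith

lemma sin_ge_cubic {x : ℝ} (hx : 0 ≤ x) : x - x^3/6 ≤ Real.sin x := by
  have := aux_nonneg (fun x => Real.sin x - (x - x^3/6)) (fun x => Real.cos x - (1 - x^2/2))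
    (fun x => by
      have h1 := (Real.hasDerivAt_sin x).sub ((hasDerivAt_id x).sub ((hasDerivAt_pow 3 x).div_const 6))
      exact h1.congr_deriv (by ring))
    (by simp) (fun x hx => by show (0:ℝ) ≤ Real.cos x - (1 - x^2/2); nlinarith [cos_ge_quad hx]) hx
  linarith

lemma cos_le_quart {x : ℝ} (hx : 0 ≤ x) : Real.cos x ≤ 1 - x^2/2 + x^4/24 := by
  have := aux_nonneg (fun x => 1 - x^2/2 + x^4/24 - Real.cos x) (fun x => Real.sin x - (x - x^3/6))
    (fun x => by
      have h1 := ((((hasDerivAt_const x (1:ℝ)).sub ((hasDerivAt_pow 2 x).div_const 2)).add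
        ((hasDerivAt_pow 4 x).div_const 24)).sub (Real.hasDerivAt_cos x))
      exact h1.congr_deriv (by ring))
    (by simp) (fun x hx => by show (0:ℝ) ≤ Real.sin x - (x - x^3/6); nlinarith [sin_ge_cubic hx]) hx
  linarith

lemma P_pos {t : ℝ} (h0 : 0 < t) (h : t < π/2) :
    2 * Real.cos t * t^2 < Real.cos t * Real.sin t^2 + t * Real.sin t := by
  have hpi : t < 1.58 := by nlinarith [Real.pi_lt_d2]
  have hs0 : 0 < Real.sin t := Real.sin_pos_of_pos_of_lt_pi h0 (by nlinarith [Real.pi_gt_three])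
  have h1 : Real.sin t ≤ t := sin_le_id h0.le
  have h2 : t - t^3/6 ≤ Real.sin t := sin_ge_cubic h0.le
  have h3 : Real.cos t ≤ 1 - t^2/2 + t^4/24 := cos_le_quart h0.le
  have h2' : 0 ≤ t - t^3/6 := by nlinarith
  have hu : t^2 < 2.4964 := by nlinarith
  have hC : (0:ℝ) < 1 - t^2/2 + t^4/24 := by nlinarith [sq_nonneg (2.4964 - t^2)]
  have hX : Real.sin t^2 - 2*t^2 < 0 := by nlinarith
  have e2 : Real.cos t * (Real.sin t^2 - 2*t^2) ≥
      (1 - t^2/2 + t^4/24) * ((t - t^3/6)^2 - 2*t^2) := by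
    have s1 : Real.cos t * (Real.sin t^2 - 2*t^2) ≥
        (1 - t^2/2 + t^4/24) * (Real.sin t^2 - 2*t^2) := by
      apply mul_le_mul_of_nonpos_right h3 hX.le
    have s2 : (1 - t^2/2 + t^4/24) * (Real.sin t^2 - 2*t^2) ≥
        (1 - t^2/2 + t^4/24) * ((t - t^3/6)^2 - 2*t^2) := by
      apply mul_le_mul_of_nonneg_left _ hC.le
      nlinarith
    linarith
  have hQ : 0 < t^6 * (11/72 - t^2/36 + (t^2)^2/864) :=
    mul_pos (pow_pos h0 6) (by nlinarith [sq_nonneg (t^2)])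
  nlinarith [e2, mul_le_mul_of_nonneg_left h2 h0.le, hQ]

lemma cot_hasDeriv {u : ℝ} (hs : Real.sin u ≠ 0) :
    HasDerivAt (fun x => Real.cos x / Real.sin x) (-1 / Real.sin u ^ 2) u := by
  have h := (Real.hasDerivAt_cos u).div (Real.hasDerivAt_sin u) hs
  refine h.congr_deriv ?_
  have := Real.sin_sq_add_cos_sq u
  field_simp
  nlinarith [this]

lemma psi_hasDeriv {u : ℝ} (hu : u ≠ 0) (hs : Real.sin u ≠ 0) :
    HasDerivAt psi
      ((-1/u^2 + 1/Real.sin u^2) * (Real.cos u / Real.sin u)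
        + (1/u - Real.cos u / Real.sin u) * (-1 / Real.sin u ^ 2)) u := by
  have h1 : HasDerivAt (fun x : ℝ => 1/x - Real.cos x / Real.sin x)
      (-1/u^2 + 1/Real.sin u^2) u := by
    have ha : HasDerivAt (fun x : ℝ => 1/x) (-1/u^2) u := by
      have := hasDerivAt_inv hu
      simp only [one_div]
      refine this.congr_deriv ?_
      field_simp
    have := ha.sub (cot_hasDeriv hs)
    exact this.congr_deriv (by ring)
  exact h1.mul (cot_hasDeriv hs)

lemma psi_deriv_neg {u : ℝ} (h0 : 0 < u) (h : u < π/2) :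
    deriv psi u < 0 := by
  have hs0 : 0 < Real.sin u := Real.sin_pos_of_pos_of_lt_pi h0 (by nlinarith [Real.pi_gt_three])
  have hd := psi_hasDeriv h0.ne' hs0.ne'
  rw [hd.deriv]
  have hP := P_pos h0 h
  have key : (-1/u^2 + 1/Real.sin u^2) * (Real.cos u / Real.sin u)
        + (1/u - Real.cos u / Real.sin u) * (-1 / Real.sin u ^ 2)
      = (2 * Real.cos u * u^2 - (Real.cos u * Real.sin u^2 + u * Real.sin u)) / (u^2 * Real.sin u^3) := by
    field_simp
    ring
  rw [key]
  apply div_neg_of_neg_of_pos (by linarith)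
  positivity

lemma psi_anti : StrictAntiOn psi (Ioo 0 (π/2)) := by
  apply strictAntiOn_of_deriv_neg (convex_Ioo _ _)
  · intro u hu
    have hs0 : 0 < Real.sin u := Real.sin_pos_of_pos_of_lt_pi hu.1 (by nlinarith [Real.pi_gt_three, hu.2])
    exact ((psi_hasDeriv hu.1.ne' hs0.ne').differentiableAt.continuousAt).continuousWithinAt
  · rw [interior_Ioo]
    exact fun u hu => psi_deriv_neg hu.1 hu.2

lemma pi_half_lt : (π/2 : ℝ) < 1.58 := by nlinarith [Real.pi_lt_d2]

lemma sin_pos' {u : ℝ} (h0 : 0 < u) (hu : u < π/2) : 0 < Real.sin u :=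
  Real.sin_pos_of_pos_of_lt_pi h0 (by nlinarith [Real.pi_gt_three])

lemma cos_pos' {u : ℝ} (h0 : 0 < u) (hu : u < π/2) : 0 < Real.cos u :=
  Real.cos_pos_of_mem_Ioo ⟨by linarith, hu⟩

lemma cos_lt_one' {u : ℝ} (h0 : 0 < u) (hu : u < π/2) : Real.cos u < 1 := by
  have hu2 : u^2 < 2.5 := by nlinarith [pi_half_lt]
  nlinarith [cos_le_quart h0.le, mul_pos h0 h0, mul_lt_mul_of_pos_left hu2 (mul_pos h0 h0)]

lemma Gf_pos {u : ℝ} (h0 : 0 < u) (hu : u < π/2) : 0 < Gf u := by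
  have := Real.log_lt_log (sin_pos' h0 hu) (Real.sin_lt h0)
  unfold Gf; linarith

lemma Hf_pos {u : ℝ} (h0 : 0 < u) (hu : u < π/2) : 0 < Hf u := by
  have := Real.log_neg (cos_pos' h0 hu) (cos_lt_one' h0 hu)
  unfold Hf; linarith

lemma Gf_hasDeriv {u : ℝ} (h0 : 0 < u) (hu : u < π/2) :
    HasDerivAt Gf (1/u - Real.cos u / Real.sin u) u := by
  have h1 : HasDerivAt Real.log u⁻¹ u := Real.hasDerivAt_log h0.ne'
  have h2 : HasDerivAt (fun x => Real.log (Real.sin x)) (Real.cos u / Real.sin u) u :=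
    (Real.hasDerivAt_sin u).log (sin_pos' h0 hu).ne'
  have := h1.sub h2
  refine this.congr_deriv ?_
  rw [one_div]

lemma Hf_hasDeriv {u : ℝ} (hc : Real.cos u ≠ 0) :
    HasDerivAt Hf (Real.sin u / Real.cos u) u := by
  have h2 : HasDerivAt (fun x => Real.log (Real.cos x)) (-Real.sin u / Real.cos u) u :=
    (Real.hasDerivAt_cos u).log hc
  have := h2.neg
  refine this.congr_deriv ?_
  ring

lemma Gf_tendsto_zero : Tendsto Gf (nhdsWithin 0 (Ioi 0)) (nhds 0) := by
  have hslope : Tendsto (fun u : ℝ => Real.sin u / u) (nhdsWithin 0 (Ioi 0)) (nhds 1) := by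
    have h := (Real.hasDerivAt_sin 0)
    rw [hasDerivAt_iff_tendsto_slope] at h
    simp only [Real.cos_zero] at h
    have h2 := h.mono_left (nhdsWithin_mono 0 (by intro x hx; simp at hx ⊢; exact ne_of_gt hx))
    refine h2.congr' ?_
    filter_upwards [self_mem_nhdsWithin] with u hu
    simp [slope_def_field, Real.sin_zero, neg_div_neg_eq]
  have hinv : Tendsto (fun u : ℝ => u / Real.sin u) (nhdsWithin 0 (Ioi 0)) (nhds 1) := by
    have := hslope.inv₀ (by norm_num)
    simpa using this
  have hlog : Tendsto (fun u : ℝ => Real.log (u / Real.sin u)) (nhdsWithin 0 (Ioi 0)) (nhds 0) := by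
    have := (Real.continuousAt_log (x := 1) (by norm_num)).tendsto.comp hinv
    simpa [Function.comp_def] using this
  refine hlog.congr' ?_
  filter_upwards [Ioo_mem_nhdsGT_of_mem (by constructor <;> norm_num : (0:ℝ) ∈ Ico 0 1)] with u hu
  have h0 : 0 < u := hu.1
  have hs : 0 < Real.sin u := sin_pos' h0 (by nlinarith [Real.pi_gt_three, hu.2])
  rw [Real.log_div h0.ne' hs.ne']
  rfl

lemma Hf_tendsto_zero : Tendsto Hf (nhdsWithin 0 (Ioi 0)) (nhds 0) := by
  have : ContinuousAt Hf 0 := by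
    have : ContinuousAt (fun x => Real.log (Real.cos x)) 0 :=
      (Real.continuousAt_log (by simp)).comp (Real.continuous_cos.continuousAt)
    exact this.neg
  have h := this.continuousWithinAt (s := Ioi 0)
  unfold ContinuousWithinAt at h
  simpa [Hf] using h

lemma r_eq_psi {t : ℝ} (h0 : 0 < t) (ht : t < π/2) :
    ∃ c ∈ Ioo 0 t, Gf t / Hf t = psi c := by
  have hdf : DifferentiableOn ℝ Gf (Ioo 0 t) := fun u hu =>
    (Gf_hasDeriv hu.1 (lt_trans hu.2 ht)).differentiableAt.differentiableWithinAt
  have hdg : DifferentiableOn ℝ Hf (Ioo 0 t) := fun u hu =>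
    (Hf_hasDeriv (cos_pos' hu.1 (lt_trans hu.2 ht)).ne').differentiableAt.differentiableWithinAt
  have hfb : Tendsto Gf (nhdsWithin t (Iio t)) (nhds (Gf t)) :=
    ((Gf_hasDeriv h0 ht).differentiableAt.continuousAt.tendsto).mono_left nhdsWithin_le_nhds
  have hgb : Tendsto Hf (nhdsWithin t (Iio t)) (nhds (Hf t)) :=
    ((Hf_hasDeriv (cos_pos' h0 ht).ne').differentiableAt.continuousAt.tendsto).mono_left nhdsWithin_le_nhds
  obtain ⟨c, hc, heq⟩ := exists_ratio_deriv_eq_ratio_slope' Gf h0 Hf hdf hdg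
    Gf_tendsto_zero Hf_tendsto_zero hfb hgb
  have hc2 : c < π/2 := lt_trans hc.2 ht
  have hs : (0:ℝ) < Real.sin c := sin_pos' hc.1 hc2
  have hcc : (0:ℝ) < Real.cos c := cos_pos' hc.1 hc2
  rw [(Gf_hasDeriv hc.1 hc2).deriv, (Hf_hasDeriv hcc.ne').deriv] at heq
  refine ⟨c, hc, ?_⟩
  have hH := Hf_pos h0 ht
  rw [div_eq_iff hH.ne']
  unfold psi
  field_simp at heq ⊢
  nlinarith [heq]

lemma r_gt_psi {t : ℝ} (h0 : 0 < t) (ht : t < π/2) : psi t < Gf t / Hf t := by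
  obtain ⟨c, hc, heq⟩ := r_eq_psi h0 ht
  rw [heq]
  exact psi_anti ⟨hc.1, lt_trans hc.2 ht⟩ ⟨h0, ht⟩ hc.2

lemma r_anti : StrictAntiOn (fun t => Gf t / Hf t) (Ioo 0 (π/2)) := by
  apply strictAntiOn_of_deriv_neg (convex_Ioo _ _)
  · intro u hu
    exact (((Gf_hasDeriv hu.1 hu.2).differentiableAt.continuousAt).div
      ((Hf_hasDeriv (cos_pos' hu.1 hu.2).ne').differentiableAt.continuousAt)
      (Hf_pos hu.1 hu.2).ne').continuousWithinAt
  · rw [interior_Ioo]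
    intro t ht
    have h0 := ht.1; have h2 := ht.2
    have hs : (0:ℝ) < Real.sin t := sin_pos' h0 h2
    have hcc : (0:ℝ) < Real.cos t := cos_pos' h0 h2
    have hH := Hf_pos h0 h2
    have hd := (Gf_hasDeriv h0 h2).div (Hf_hasDeriv hcc.ne') hH.ne'
    rw [show (fun t => Gf t / Hf t) = Gf / Hf from rfl, hd.deriv]
    apply div_neg_of_neg_of_pos _ (by positivity)
    have hlt : psi t * Hf t < Gf t := by
      have := r_gt_psi h0 h2
      rwa [lt_div_iff₀ hH] at this
    have hid : (1/t - Real.cos t / Real.sin t) * Hf t - Gf t * (Real.sin t / Real.cos t)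
        = (Real.sin t / Real.cos t) * (psi t * Hf t - Gf t) := by
      unfold psi; field_simp
    rw [hid]
    exact mul_neg_of_pos_of_neg (by positivity) (by linarith)

lemma psi_lb {t : ℝ} (h0 : 0 < t) (ht : t ≤ 1/2) : 1/3 - (2/3)*t^2 ≤ psi t := by
  have h2 : t < π/2 := by nlinarith [Real.pi_gt_three]
  have hs : (0:ℝ) < Real.sin t := sin_pos' h0 h2
  have hcc : (0:ℝ) < Real.cos t := cos_pos' h0 h2
  have hA : 2*t - (4/3)*t^3 ≤ 2 * (Real.sin t * Real.cos t) := by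
    have h := sin_ge_cubic (x := 2*t) (by linarith)
    rw [Real.sin_two_mul] at h
    nlinarith [h]
  have hB : Real.cos t^2 ≤ 1 - t^2 + t^4/3 := by
    have h := cos_le_quart (x := 2*t) (by linarith)
    rw [Real.cos_two_mul] at h
    nlinarith [h]
  have hst : Real.sin t ≤ t := sin_le_id h0.le
  have hs2 : Real.sin t^2 ≤ t^2 := by nlinarith
  have hcoef : 0 ≤ t/3 - 2*t^3/3 := by nlinarith
  have hval : psi t = (Real.cos t * Real.sin t - t * Real.cos t^2)/(t * Real.sin t^2) := by
    unfold psi; field_simp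
  rw [hval, le_div_iff₀ (by positivity)]
  have k1 := mul_le_mul_of_nonneg_left hs2 hcoef
  have k2 := mul_le_mul_of_nonneg_left hB h0.le
  nlinarith [k1, k2, pow_nonneg h0.le 5]

lemma key_equiv (a : ℝ) (ha0 : 0 < a) {x : ℝ} (hx0 : 0 < x) (hxpi : x < π) :
    (a * Real.log (Real.sin x / x) - 2 * Real.log (Real.cos (x / 2)) = 0)
      ↔ Gf (x/2) / Hf (x/2) = (2 - a)/a := by
  have ht0 : 0 < x/2 := by linarith
  have ht : x/2 < π/2 := by linarith
  have hs : 0 < Real.sin (x/2) := sin_pos' ht0 ht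
  have hc : 0 < Real.cos (x/2) := cos_pos' ht0 ht
  have hH := Hf_pos ht0 ht
  have hsin2 : Real.sin x = 2 * Real.sin (x/2) * Real.cos (x/2) := by
    have h := Real.sin_two_mul (x/2)
    rw [show 2*(x/2) = x by ring] at h
    exact h
  have hsinx : Real.sin x / x = Real.sin (x/2) * Real.cos (x/2) / (x/2) := by
    rw [hsin2]
    field_simp
  have hlog : Real.log (Real.sin x / x)
      = Real.log (Real.sin (x/2)) + Real.log (Real.cos (x/2)) - Real.log (x/2) := by
    rw [hsinx, Real.log_div (by positivity) ht0.ne', Real.log_mul hs.ne' hc.ne']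
  rw [hlog, div_eq_div_iff hH.ne' ha0.ne']
  unfold Gf Hf
  constructor
  · intro h; linarith
  · intro h; linarith

set_option maxHeartbeats 1000000 in
theorem f_a_unique_zero (a : ℝ) (ha : a ∈ Set.Ioo (3 / 2 : ℝ) 2) :
    ∃! x : ℝ, x ∈ Set.Ioo (0 : ℝ) π ∧
      a * Real.log (Real.sin x / x) - 2 * Real.log (Real.cos (x / 2)) = 0 := by
  obtain ⟨ha1, ha2⟩ := ha
  have ha0 : (0:ℝ) < a := by linarith
  obtain ⟨b, hbdef⟩ : ∃ b : ℝ, b = (2 - a)/a := ⟨_, rfl⟩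
  have hb0 : 0 < b := hbdef ▸ div_pos (by linarith) ha0
  have hb13 : b < 1/3 := by rw [hbdef, div_lt_iff₀ ha0]; linarith
  obtain ⟨t1, ht1def⟩ : ∃ t1 : ℝ, t1 = min (1/2) (Real.sqrt (1/3 - b)) := ⟨_, rfl⟩
  have hε : 0 < 1/3 - b := by linarith
  have ht10 : 0 < t1 := ht1def ▸ lt_min (by norm_num) (Real.sqrt_pos.2 hε)
  have ht1h : t1 ≤ 1/2 := ht1def ▸ min_le_left _ _
  have ht1pi : t1 < π/2 := by nlinarith [Real.pi_gt_three]
  have ht1sq : t1^2 ≤ 1/3 - b := by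
    have h1 : t1 ≤ Real.sqrt (1/3 - b) := ht1def ▸ min_le_right _ _
    nlinarith [Real.sq_sqrt hε.le, Real.sqrt_nonneg (1/3 - b)]
  have hrt1 : b < Gf t1 / Hf t1 := by
    have h1 := psi_lb ht10 ht1h
    have h2 := r_gt_psi ht10 ht1pi
    linarith
  -- choose t2
  obtain ⟨y, hydef⟩ : ∃ y : ℝ, y = min (Real.exp (-(2/b))) (Real.cos 1) / 2 := ⟨_, rfl⟩
  have hcos1 : 0 < Real.cos 1 := cos_pos' one_pos (by nlinarith [Real.pi_gt_three])
  have hy0 : 0 < y := by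
    rw [hydef]
    have := Real.exp_pos (-(2/b))
    positivity
  have hy1 : y < Real.cos 1 := by
    have h := min_le_right (Real.exp (-(2/b))) (Real.cos 1)
    rw [hydef]; linarith
  have h1pi : (1:ℝ) ≤ π/2 := by nlinarith [Real.pi_gt_three]
  have hivt : y ∈ Real.cos '' (Icc 1 (π/2)) := by
    apply intermediate_value_Icc' h1pi Real.continuous_cos.continuousOn
    constructor
    · rw [Real.cos_pi_div_two]; exact hy0.le
    · exact hy1.le
  obtain ⟨t2, ht2mem, ht2cos⟩ := hivt
  have ht21 : 1 ≤ t2 := ht2mem.1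
  have ht2pi : t2 < π/2 := by
    rcases lt_or_eq_of_le ht2mem.2 with h | h
    · exact h
    · exfalso
      rw [h, Real.cos_pi_div_two] at ht2cos
      linarith
  have ht20 : 0 < t2 := by linarith
  have hHt2 : 2/b ≤ Hf t2 := by
    have hle : y ≤ Real.exp (-(2/b)) := by
      have h := min_le_left (Real.exp (-(2/b))) (Real.cos 1)
      rw [hydef]; linarith [Real.exp_pos (-(2/b))]
    have h2 := Real.log_le_log hy0 hle
    rw [Real.log_exp] at h2
    unfold Hf
    rw [ht2cos]
    linarith
  have hGt2 : Gf t2 ≤ 1 := by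
    have hst2 : 2/π ≤ Real.sin t2 := by
      have h := Real.mul_le_sin ht20.le ht2pi.le
      have h2 : 2/π * 1 ≤ 2/π * t2 :=
        mul_le_mul_of_nonneg_left ht21 (by positivity)
      rw [mul_one] at h2
      linarith
    have hs2 : 0 < Real.sin t2 := lt_of_lt_of_le (by positivity) hst2
    have harg : t2 / Real.sin t2 ≤ 2.5 := by
      rw [div_le_iff₀ hs2]
      have h1 : t2 ≤ 1.58 := by linarith [pi_half_lt]
      have h5 : (2.5:ℝ) * (2/π) = 5/π := by ring
      have h6 : (1.58:ℝ) < 5/π := by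
        rw [lt_div_iff₀ Real.pi_pos]
        nlinarith [Real.pi_lt_d2]
      nlinarith [mul_le_mul_of_nonneg_left hst2 (by norm_num : (0:ℝ) ≤ 2.5)]
    have hGeq : Gf t2 = Real.log (t2 / Real.sin t2) := by
      unfold Gf; rw [Real.log_div ht20.ne' hs2.ne']
    rw [hGeq]
    have h1 : Real.log (t2 / Real.sin t2) ≤ Real.log 2.5 :=
      Real.log_le_log (by positivity) harg
    have h2 : Real.log 2.5 < 1 := by
      have h3 := Real.log_lt_log (by norm_num : (0:ℝ) < 2.5)
        (by linarith [Real.exp_one_gt_d9] : (2.5:ℝ) < Real.exp 1)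
      rwa [Real.log_exp] at h3
    linarith
  have hrt2 : Gf t2 / Hf t2 < b := by
    have hH2 := Hf_pos ht20 ht2pi
    rw [div_lt_iff₀ hH2]
    have h4 : b * (2/b) ≤ b * Hf t2 := mul_le_mul_of_nonneg_left hHt2 hb0.le
    have h5 : b * (2/b) = 2 := by field_simp
    linarith
  have ht12 : t1 < t2 := by linarith
  -- IVT for r
  have hrcont : ContinuousOn (fun t => Gf t / Hf t) (Icc t1 t2) := by
    intro u hu
    have hu0 : 0 < u := lt_of_lt_of_le ht10 hu.1
    have hupi : u < π/2 := lt_of_le_of_lt hu.2 ht2pi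
    exact (((Gf_hasDeriv hu0 hupi).differentiableAt.continuousAt).div
      ((Hf_hasDeriv (cos_pos' hu0 hupi).ne').differentiableAt.continuousAt)
      (Hf_pos hu0 hupi).ne').continuousWithinAt
  have hivt2 : b ∈ (fun t => Gf t / Hf t) '' (Icc t1 t2) :=
    intermediate_value_Icc' ht12.le hrcont ⟨hrt2.le, hrt1.le⟩
  obtain ⟨t0, ht0mem, ht0eq⟩ := hivt2
  simp only at ht0eq
  have ht00 : 0 < t0 := lt_of_lt_of_le ht10 ht0mem.1
  have ht0pi : t0 < π/2 := lt_of_le_of_lt ht0mem.2 ht2pi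
  refine ⟨2*t0, ⟨⟨by linarith, by linarith⟩, ?_⟩, ?_⟩
  · rw [key_equiv a ha0 (by linarith) (by linarith)]
    rw [show 2*t0/2 = t0 by ring, ht0eq, hbdef]
  · rintro x' ⟨⟨hx'0, hx'pi⟩, hx'eq⟩
    rw [key_equiv a ha0 hx'0 hx'pi] at hx'eq
    have ht'mem : x'/2 ∈ Ioo 0 (π/2) := ⟨by linarith, by linarith⟩
    have hfin : x'/2 = t0 := by
      apply r_anti.injOn ht'mem ⟨ht00, ht0pi⟩
      simp only
      rw [hx'eq, ht0eq, hbdef]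
    linarith [hfin]
end

section
/- For every a ∈ (3/2, 2) there exists x_a ∈ (0, π) such that f_a(x_a) = 0, where f_a(x) = a·ln((sin x)/x) − 2·ln(cos(x/2)), and for every x ∈ (0, x_a] the inequality ((sin x)/x)^a ≤ cos²(x/2) holds. -/
open Real Set

/-!
Since `sin x = 2 sin (x/2) cos (x/2)`, `f_a(x) = (a - 2) log cos (x/2) + a log (sin (x/2) / (x/2))`.
Near `0` the Taylor expansions give `f_a(x) ≈ -(2a - 3) x² / 12 < 0`, while near `π` the term
`(a - 2) log cos (x/2)` tends to `+∞`. The first zero `x_a` of the continuous function `f_a`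
therefore exists, `f_a ≤ 0` on `(0, x_a]`, and exponentiating gives the inequality.
-/

theorem ContinuousOn.exists_first_zero {g : ℝ → ℝ} {p q : ℝ} (hpq : p ≤ q)
    (hg : ContinuousOn g (Icc p q)) (hp : g p < 0) (hq : 0 ≤ g q) :
    ∃ c ∈ Ioc p q, g c = 0 ∧ ∀ x ∈ Ico p c, g x < 0 := by
  have hclosed : IsClosed (Icc p q ∩ g ⁻¹' Ici 0) :=
    hg.preimage_isClosed_of_isClosed isClosed_Icc isClosed_Ici
  obtain ⟨c, ⟨⟨hpc, hcq⟩, hc⟩, hleast⟩ :=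
    (isCompact_Icc.of_isClosed_subset hclosed inter_subset_left).exists_isLeast
      ⟨q, ⟨hpq, le_rfl⟩, hq⟩
  have hneg : ∀ x ∈ Ico p c, g x < 0 := fun x ⟨hpx, hxc⟩ =>
    not_le.mp fun hx => (hleast ⟨⟨hpx, by linarith⟩, hx⟩).not_gt hxc
  have hpc' : p < c := hpc.lt_of_ne (by rintro rfl; exact (not_le.mpr hp) hc)
  obtain ⟨z, ⟨hpz, hzc⟩, hz⟩ :=
    intermediate_value_Icc hpc (hg.mono (Icc_subset_Icc_right hcq)) ⟨hp.le, hc⟩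
  obtain rfl : z = c := hzc.eq_of_not_lt fun hzc => (hneg z ⟨hpz, hzc⟩).ne hz
  exact ⟨z, ⟨hpc', hcq⟩, hz, hneg⟩

noncomputable def logSincPowDivCosSq (a x : ℝ) : ℝ :=
  a * log (sin x / x) - 2 * log (cos (x / 2))

lemma sin_div_self_eq_cos_half_mul (x : ℝ) :
    sin x / x = cos (x / 2) * (sin (x / 2) / (x / 2)) := by
  rcases eq_or_ne x 0 with rfl | hx
  · simp
  · conv_lhs => rw [← mul_div_cancel₀ x two_ne_zero, sin_two_mul]
    field_simp

lemma logSincPowDivCosSq_eq {a x : ℝ} (hx0 : 0 < x) (hxπ : x < π) :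
    logSincPowDivCosSq a x =
      (a - 2) * log (cos (x / 2)) + a * log (sin (x / 2) / (x / 2)) := by
  have hcos : cos (x / 2) ≠ 0 := (cos_pos_of_mem_Ioo ⟨by linarith, by linarith⟩).ne'
  have hsinc : sin (x / 2) / (x / 2) ≠ 0 :=
    (div_pos (sin_pos_of_pos_of_lt_pi (by linarith) (by linarith)) (by linarith)).ne'
  rw [logSincPowDivCosSq, sin_div_self_eq_cos_half_mul, log_mul hcos hsinc]
  ring

lemma log_sin_div_self_le {u : ℝ} (hu0 : 0 < u) (hu1 : u ≤ 1) :
    log (sin u / u) ≤ -u ^ 2 / 6 + u ^ 4 / 100 := by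
  have hsin : sin u ≤ u - u ^ 3 / 6 + u ^ 5 / 100 := by
    have := (abs_le.mp (sin_bound (abs_le.mpr ⟨by linarith, hu1⟩))).2
    rw [abs_of_pos hu0] at this
    linarith
  calc log (sin u / u) ≤ sin u / u - 1 :=
        log_le_sub_one_of_pos
          (div_pos (sin_pos_of_pos_of_lt_pi hu0 (by linarith [pi_gt_three])) hu0)
    _ ≤ -u ^ 2 / 6 + u ^ 4 / 100 := by
        rw [div_sub_one hu0.ne', div_le_iff₀ hu0]
        linarith

lemma neg_log_cos_le {u : ℝ} (hu : u ^ 2 ≤ 1) : -log (cos u) ≤ u ^ 2 / 2 * (1 + u ^ 2) := by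
  have hcos : 1 - u ^ 2 / 2 ≤ cos u := one_sub_sq_div_two_le_cos
  have hcos_pos : 0 < cos u := by linarith
  calc -log (cos u) = log (cos u)⁻¹ := (log_inv _).symm
    _ ≤ (cos u)⁻¹ - 1 := log_le_sub_one_of_pos (inv_pos.mpr hcos_pos)
    _ ≤ u ^ 2 / 2 * (1 + u ^ 2) := by
        rw [inv_eq_one_div, div_sub_one hcos_pos.ne', div_le_iff₀ hcos_pos]
        nlinarith [mul_le_mul_of_nonneg_left hcos
            (by positivity : (0 : ℝ) ≤ u ^ 2 / 2 * (1 + u ^ 2)),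
          mul_nonneg (sq_nonneg (u ^ 2)) (by linarith : (0 : ℝ) ≤ 1 - u ^ 2)]

lemma logSincPowDivCosSq_neg {a x : ℝ} (ha : 3 / 2 < a) (ha' : a ≤ 2) (hx0 : 0 < x)
    (hx : x ≤ 2 * a - 3) : logSincPowDivCosSq a x < 0 := by
  rw [logSincPowDivCosSq_eq hx0 (by linarith [pi_gt_three])]
  have hu0 : 0 < x / 2 := by positivity
  have hu2 : (x / 2) ^ 2 ≤ (2 * a - 3) / 4 := by nlinarith
  have hsinc := log_sin_div_self_le hu0 (by linarith)
  have hcos := neg_log_cos_le (u := x / 2) (by linarith)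
  have hcoef : (2 - a) / 2 + a / 100 ≤ 1 / 4 + 1 / 50 := by linarith
  have hbracket : (x / 2) ^ 2 * ((2 - a) / 2 + a / 100) < (2 * a - 3) / 3 := by
    nlinarith [mul_le_mul hu2 hcoef (by linarith) (by linarith)]
  nlinarith [mul_le_mul_of_nonneg_left hsinc (by linarith : (0 : ℝ) ≤ a),
    mul_le_mul_of_nonneg_left hcos (by linarith : (0 : ℝ) ≤ 2 - a),
    mul_lt_mul_of_pos_left hbracket (by positivity : (0 : ℝ) < (x / 2) ^ 2)]

lemma exists_logSincPowDivCosSq_nonneg {a : ℝ} (ha : a < 2) :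
    ∃ b ∈ Ioo 0 π, 0 ≤ logSincPowDivCosSq a b := by
  have hlogπ : 0 < log (π / 2) := log_pos (by linarith [pi_gt_three])
  -- `c` is chosen so that the first term cancels Jordan's bound `-log (π / 2) ≤ log (sin u / u)`
  set c := exp (-(2 * log (π / 2) / (2 - a))) with hc
  have hc1 : c < 1 := exp_lt_one_iff.mpr (neg_neg_of_pos (div_pos (by positivity) (by linarith)))
  set u := arccos c
  have hu0 : 0 < u := arccos_pos.mpr hc1
  have huπ : u < π / 2 := arccos_lt_pi_div_two.mpr (exp_pos _)
  have hcos : (a - 2) * log (cos u) = 2 * log (π / 2) := by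
    rw [cos_arccos (by linarith [exp_pos (-(2 * log (π / 2) / (2 - a)))]) hc1.le, hc, log_exp]
    field_simp [(by linarith : (2 : ℝ) - a ≠ 0)]
    ring
  have hsinc_pos : 0 < sin u / u := div_pos (sin_pos_of_pos_of_lt_pi hu0 (by linarith)) hu0
  have hsinc_lower : -log (π / 2) ≤ log (sin u / u) := by
    rw [← log_inv, inv_div]
    exact log_le_log (by positivity) ((le_div_iff₀ hu0).mpr (mul_le_sin hu0.le huπ.le))
  have hsinc_upper : log (sin u / u) ≤ 0 :=
    log_nonpos hsinc_pos.le ((div_le_one hu0).mpr (sin_le hu0.le))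
  refine ⟨2 * u, ⟨by positivity, by linarith⟩, ?_⟩
  rw [logSincPowDivCosSq_eq (by positivity) (by linarith), mul_div_cancel_left₀ u two_ne_zero,
    hcos]
  nlinarith [mul_nonneg (by linarith : (0 : ℝ) ≤ 2 - a) (neg_nonneg.mpr hsinc_upper)]

lemma continuousOn_logSincPowDivCosSq (a : ℝ) :
    ContinuousOn (logSincPowDivCosSq a) (Ioo 0 π) := by
  intro x ⟨hx0, hxπ⟩
  have hsin : sin x / x ≠ 0 := (div_pos (sin_pos_of_pos_of_lt_pi hx0 hxπ) hx0).ne'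
  have hcos : cos (x / 2) ≠ 0 := (cos_pos_of_mem_Ioo ⟨by linarith, by linarith⟩).ne'
  have hsinc : ContinuousAt (fun x => sin x / x) x := by fun_prop (disch := exact hx0.ne')
  have hcos_half : ContinuousAt (fun x => cos (x / 2)) x := by fun_prop
  exact ((continuousAt_const.mul (hsinc.log hsin)).sub
    (continuousAt_const.mul (hcos_half.log hcos))).continuousWithinAt

lemma sin_div_self_rpow_le_cos_sq {a x : ℝ} (hx0 : 0 < x) (hxπ : x < π)
    (hx : logSincPowDivCosSq a x ≤ 0) : (sin x / x) ^ a ≤ cos (x / 2) ^ 2 := by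
  have hsin : 0 < sin x / x := div_pos (sin_pos_of_pos_of_lt_pi hx0 hxπ) hx0
  have hcos : 0 < cos (x / 2) := cos_pos_of_mem_Ioo ⟨by linarith, by linarith⟩
  rw [← log_le_log_iff (by positivity) (by positivity), log_rpow hsin, log_pow]
  unfold logSincPowDivCosSq at hx
  push_cast
  linarith

theorem sinc_pow_le_cos_sq_up_to_zero (a : ℝ) (ha : a ∈ Set.Ioo (3 / 2 : ℝ) 2) :
    ∃ x_a ∈ Set.Ioo (0 : ℝ) π,
      a * Real.log (Real.sin x_a / x_a) - 2 * Real.log (Real.cos (x_a / 2)) = 0 ∧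
      ∀ x ∈ Set.Ioc (0 : ℝ) x_a, (Real.sin x / x) ^ a ≤ Real.cos (x / 2) ^ 2 := by
  obtain ⟨ha3, ha2⟩ := ha
  have hδ0 : 0 < 2 * a - 3 := by linarith
  have hneg_small {x : ℝ} (hx0 : 0 < x) (hx : x ≤ 2 * a - 3) : logSincPowDivCosSq a x < 0 :=
    logSincPowDivCosSq_neg ha3 ha2.le hx0 hx
  obtain ⟨b, ⟨hb0, hbπ⟩, hb⟩ := exists_logSincPowDivCosSq_nonneg ha2
  have hδb : 2 * a - 3 ≤ b := le_of_not_gt fun hbδ => (hneg_small hb0 hbδ.le).not_ge hb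
  obtain ⟨c, ⟨hδc, hcb⟩, hc, hneg⟩ :=
    ((continuousOn_logSincPowDivCosSq a).mono (Icc_subset_Ioo hδ0 hbπ)).exists_first_zero hδb
      (hneg_small hδ0 le_rfl) hb
  have hcπ : c < π := hcb.trans_lt hbπ
  have hnonpos : ∀ x ∈ Ioc 0 c, logSincPowDivCosSq a x ≤ 0 := by
    rintro x ⟨hx0, hxc⟩
    rcases le_or_gt x (2 * a - 3) with hxδ | hδx
    · exact (hneg_small hx0 hxδ).le
    rcases hxc.lt_or_eq with hxc | rfl
    · exact (hneg x ⟨hδx.le, hxc⟩).le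
    · exact hc.le
  exact ⟨c, ⟨hδ0.trans hδc, hcπ⟩, hc, fun x hx =>
    sin_div_self_rpow_le_cos_sq hx.1 (hx.2.trans_lt hcπ) (hnonpos x hx)⟩
end

section
/- For every a ∈ (3/2, 2), the function f_a(x) = a·ln((sin x)/x) − 2·ln(cos(x/2)) is negative near 0 and positive near π: there exists δ ∈ (0, π) such that f_a(x) < 0 for all x ∈ (0, δ), and there exists δ' ∈ (0, π) such that f_a(x) > 0 for all x ∈ (δ', π). -/
open Real

private lemma f_a_key_poly (a x : ℝ) (ha1 : 3/2 < a) (hx0 : 0 < x) (hx1 : x < 1/10)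
    (hxd : x < (2*a-3)/10) :
    2*(x^2/8 + x^4*(5/1536)) < a * ((x^2/6 - x^3*(5/96)) * (1 - x^2/8 - x^4*(5/1536))) := by
  have h5 : 3/2 + 5*x < a := by linarith
  have hPpos : 0 < x^2/6 - x^3*(5/96) := by nlinarith [mul_pos hx0 hx0]
  have hQpos : 0 < 1 - x^2/8 - x^4*(5/1536) := by nlinarith [mul_pos hx0 hx0, sq_nonneg (x*x)]
  have hA : (1/4 + x/2)*x^2 ≤ a * (x^2/6 - x^3*(5/96)) := by
    nlinarith [mul_le_mul_of_nonneg_right h5.le hPpos.le, mul_pos hx0 hx0,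
      mul_pos (mul_pos hx0 hx0) hx0, mul_pos (mul_pos (mul_pos hx0 hx0) hx0) hx0]
  have hB : 2*(x^2/8 + x^4*(5/1536)) < (1/4 + x/2)*x^2 * (1 - x^2/8 - x^4*(5/1536)) := by
    nlinarith [mul_pos hx0 hx0, mul_pos (mul_pos hx0 hx0) hx0,
      mul_pos (mul_pos (mul_pos hx0 hx0) hx0) hx0,
      mul_pos (mul_pos (mul_pos (mul_pos hx0 hx0) hx0) hx0) hx0,
      mul_pos (mul_pos (mul_pos (mul_pos (mul_pos hx0 hx0) hx0) hx0) hx0) hx0]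
  calc 2*(x^2/8 + x^4*(5/1536)) < (1/4 + x/2)*x^2 * (1 - x^2/8 - x^4*(5/1536)) := hB
    _ ≤ a * (x^2/6 - x^3*(5/96)) * (1 - x^2/8 - x^4*(5/1536)) :=
        mul_le_mul_of_nonneg_right hA hQpos.le
    _ = a * ((x^2/6 - x^3*(5/96)) * (1 - x^2/8 - x^4*(5/1536))) := by ring

private lemma f_a_poly_parts (a x : ℝ) (ha1 : 3/2 < a) (hx0 : 0 < x) (hx1 : x < 1/10) :
    0 < x^2/6 - x^3*(5/96) ∧ 0 < 1 - x^2/8 - x^4*(5/1536) := by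
  constructor
  · nlinarith [mul_pos hx0 hx0]
  · nlinarith [mul_pos hx0 hx0, sq_nonneg (x*x), mul_lt_mul_of_pos_left hx1 hx0,
      mul_pos (mul_pos hx0 hx0) (mul_pos hx0 hx0)]

set_option maxHeartbeats 1600000 in
theorem f_a_signs_near_endpoints (a : ℝ) (ha : a ∈ Set.Ioo (3 / 2 : ℝ) 2) :
    (∃ δ ∈ Set.Ioo (0 : ℝ) π, ∀ x ∈ Set.Ioo (0 : ℝ) δ,
      a * Real.log (Real.sin x / x) - 2 * Real.log (Real.cos (x / 2)) < 0) ∧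
    (∃ δ' ∈ Set.Ioo (0 : ℝ) π, ∀ x ∈ Set.Ioo δ' π,
      0 < a * Real.log (Real.sin x / x) - 2 * Real.log (Real.cos (x / 2))) := by
  obtain ⟨ha1, ha2⟩ := ha
  have hpi : (3.14 : ℝ) < π := by
    have := Real.pi_gt_d6
    linarith
  constructor
  · -- near 0
    refine ⟨(2*a - 3)/10, ⟨by linarith, by linarith⟩, ?_⟩
    intro x ⟨hx0, hxd⟩
    have hx1 : x < 1/10 := by linarith
    have hxle1 : |x| ≤ 1 := by rw [abs_of_pos hx0]; linarith
    have hx2le : |x/2| ≤ 1 := by rw [abs_of_pos (by linarith)]; linarith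
    have hsb := abs_sub_le_iff.1 (Real.sin_bound hxle1)
    rw [abs_of_pos hx0] at hsb
    have hsinlt : Real.sin x ≤ x - x^3/6 + x^4 * (5/96) := by
      nlinarith [hsb.1, pow_pos hx0 4, mul_le_mul_of_nonneg_left hx1.le (pow_pos hx0 4).le]
    have hsinpos : 0 < Real.sin x := Real.sin_pos_of_pos_of_lt_pi hx0 (by linarith)
    have hcb := abs_sub_le_iff.1 (Real.cos_bound hx2le)
    rw [abs_of_pos (by linarith : (0:ℝ) < x/2)] at hcb
    have e1 : ((x/2)^2/2 : ℝ) = x^2/8 := by ring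
    have e2 : ((x/2)^4 * (5/96) : ℝ) = x^4 * (5/1536) := by ring
    have hcge : 1 - x^2/8 - x^4*(5/1536) ≤ Real.cos (x/2) := by
      have := hcb.2; rw [e1, e2] at this; linarith
    have h2c : 1 - Real.cos (x/2) ≤ x^2/8 + x^4*(5/1536) := by linarith
    have hcle : Real.cos (x/2) ≤ 1 := Real.cos_le_one _
    have hcpos : 0 < Real.cos (x/2) := by
      apply Real.cos_pos_of_mem_Ioo
      constructor <;> nlinarith
    set s := Real.sin x / x with hs
    set c := Real.cos (x/2) with hc
    have hspos : 0 < s := div_pos hsinpos hx0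
    have h1s : x^2/6 - x^3*(5/96) ≤ 1 - s := by
      have : s ≤ 1 - x^2/6 + x^3 * (5/96) := by
        rw [hs, div_le_iff₀ hx0]; nlinarith
      linarith
    have hlog1 : Real.log s ≤ s - 1 := Real.log_le_sub_one_of_pos hspos
    have hlog2 : -Real.log c ≤ 1/c - 1 := by
      have := Real.log_le_sub_one_of_pos (inv_pos.2 hcpos)
      rw [Real.log_inv] at this
      simpa [one_div] using this
    -- key polynomial inequality
    obtain ⟨hPpos, hQpos⟩ := f_a_poly_parts a x ha1 hx0 hx1
    have hpoly : 2*(x^2/8 + x^4*(5/1536)) <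
        a * ((x^2/6 - x^3*(5/96)) * (1 - x^2/8 - x^4*(5/1536))) :=
      f_a_key_poly a x ha1 hx0 hx1 (by linarith)
    have key : 2 * (1 - c) < a * (1 - s) * c := by
      have hprod : (x^2/6 - x^3*(5/96)) * (1 - x^2/8 - x^4*(5/1536)) ≤ (1 - s) * c :=
        mul_le_mul h1s hcge hQpos.le (by linarith)
      have := mul_le_mul_of_nonneg_left hprod (by linarith : (0:ℝ) ≤ a)
      linarith
    have hub : a * Real.log s - 2 * Real.log c ≤ a * (s - 1) + 2 * (1/c - 1) := by
      have := mul_le_mul_of_nonneg_left hlog1 (by linarith : (0:ℝ) ≤ a)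
      linarith
    have hval : (a*(s-1) + 2*(1/c-1)) * c = -(a*(1-s)*c) + 2*(1-c) := by
      field_simp; ring
    have hneg : (a*(s-1) + 2*(1/c-1)) * c < 0 := by rw [hval]; linarith
    have hfin : a * (s - 1) + 2 * (1/c - 1) < 0 := by
      by_contra h
      push_neg at h
      exact absurd hneg (not_lt.2 (mul_nonneg h hcpos.le))
    linarith
  · -- near π
    set C := Real.log (3/(4*π)) with hC
    set M := (a*C + 2*Real.log 2)/(2-a) with hM
    set ε := min 1 (Real.exp M) / 2 with hε
    have hεpos : 0 < ε := by
      have := Real.exp_pos M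
      simp only [hε]
      positivity
    have hεle : ε ≤ 1/2 := by
      have : min 1 (Real.exp M) ≤ 1 := min_le_left _ _
      simp only [hε]; linarith
    have hεexp : ε < Real.exp M := by
      have h1 : min 1 (Real.exp M) ≤ Real.exp M := min_le_right _ _
      have h2 : 0 < min 1 (Real.exp M) := lt_min one_pos (Real.exp_pos M)
      simp only [hε]; linarith
    refine ⟨π - ε, ⟨by linarith, by linarith⟩, ?_⟩
    intro x ⟨hx1, hx2⟩
    set t := π - x with ht
    clear_value t
    have ht0 : 0 < t := by simp only [ht]; linarith
    have htε : t < ε := by simp only [ht]; linarith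
    have ht1 : t ≤ 1 := by linarith
    have hx0 : 0 < x := by linarith
    -- sin x = sin t > 3t/4
    have hsin : Real.sin x = Real.sin t := by
      rw [ht, Real.sin_pi_sub]
    have hsint : (3/4) * t < Real.sin t := by
      have hcube := Real.sin_gt_sub_cube ht0
      have ht2 : t^2 ≤ 1 := by nlinarith
      have h3 : t^3 ≤ t := by nlinarith [mul_le_mul_of_nonneg_left ht2 ht0.le]
      linarith
    have hsinpos : 0 < Real.sin x := by rw [hsin]; linarith
    -- sin x / x > 3t/(4π)
    have hsx : 3*t/(4*π) < Real.sin x / x := by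
      have h1 : Real.sin x / π < Real.sin x / x :=
        div_lt_div_of_pos_left hsinpos hx0 hx2
      have h2 : 3*t/(4*π) < Real.sin x / π := by
        rw [div_lt_div_iff₀ (by linarith) (by linarith)]
        nlinarith
      linarith
    have hsxpos : (0:ℝ) < 3*t/(4*π) := by positivity
    have hlogs : Real.log t + C < Real.log (Real.sin x / x) := by
      have hll := Real.log_lt_log hsxpos hsx
      have heq : Real.log (3*t/(4*π)) = Real.log t + C := by
        rw [hC, show 3*t/(4*π) = t * (3/(4*π)) by ring,
          Real.log_mul (ne_of_gt ht0) (by positivity)]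
      linarith
    -- cos(x/2) = sin(t/2) < t/2
    have hcos : Real.cos (x/2) = Real.sin (t/2) := by
      rw [ht, show (π - x)/2 = π/2 - x/2 by ring, Real.sin_pi_div_two_sub]
    have hcpos : 0 < Real.cos (x/2) := by
      rw [hcos]
      exact Real.sin_pos_of_pos_of_lt_pi (by linarith) (by linarith)
    have hcl : Real.cos (x/2) < t/2 := by
      rw [hcos]
      exact Real.sin_lt (by linarith)
    have hlogc : Real.log (Real.cos (x/2)) < Real.log t - Real.log 2 := by
      have hll := Real.log_lt_log hcpos hcl
      rw [Real.log_div (ne_of_gt ht0) two_ne_zero] at hll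
      exact hll
    have hlogt : Real.log t < M := by
      have hll := Real.log_lt_log ht0 (lt_of_lt_of_le htε hεexp.le)
      rwa [Real.log_exp] at hll
    have hMid : (2-a)*M = a*C + 2*Real.log 2 := by
      rw [hM, mul_comm]
      exact div_mul_cancel₀ _ (by linarith : (2:ℝ) - a ≠ 0)
    have hmul : 0 < a*(Real.log t + C) - 2*Real.log t + 2*Real.log 2 := by
      nlinarith [mul_lt_mul_of_neg_left hlogt (by linarith : a - 2 < 0)]
    have hA2 : a*(Real.log t + C) ≤ a * Real.log (Real.sin x / x) :=
      mul_le_mul_of_nonneg_left hlogs.le (by linarith)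
    linarith
end

section
/- For every x ∈ (0, 3.1), the double inequality ((sin x)/x)^{p₁(x)} < cos²(x/2) < ((sin x)/x)^{p₂(x)} holds, where p₁(x) = 3/2 + x²/(2π²) and p₂(x) = 3/2 + x²/80. -/
open Real

lemma nonneg_of_deriv (f f' : ℝ → ℝ) (hd : ∀ t, HasDerivAt f (f' t) t)
    (h' : ∀ t, 0 ≤ t → 0 ≤ f' t) (h0 : f 0 = 0) {t : ℝ} (ht : 0 ≤ t) : 0 ≤ f t := by
  have hm : MonotoneOn f (Set.Ici 0) := by
    apply monotoneOn_of_deriv_nonneg (convex_Ici 0)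
    · exact fun y _ => ((hd y).differentiableAt.continuousAt).continuousWithinAt
    · exact fun y _ => ((hd y).differentiableAt).differentiableWithinAt
    · intro y hy
      rw [interior_Ici] at hy
      rw [(hd y).deriv]
      exact h' y hy.le
  calc (0:ℝ) = f 0 := h0.symm
  _ ≤ f t := hm Set.self_mem_Ici ht ht

lemma sin_cubic_lb {t : ℝ} (ht : 0 ≤ t) : t - t^3/6 ≤ Real.sin t := by
  have := nonneg_of_deriv (fun t => Real.sin t - t + t^3/6)
    (fun t => Real.cos t - 1 + t^2/2) (fun t => by
      have h1 := (Real.hasDerivAt_sin t).sub (hasDerivAt_id t)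
      have h2 := ((hasDerivAt_pow 3 t).div_const 6)
      refine (h1.add h2).congr_deriv ?_
      push_cast; ring)
    (fun t _ => by nlinarith [Real.one_sub_sq_div_two_le_cos (x := t)])
    (by norm_num) ht
  linarith

lemma cos_quartic_ub (t : ℝ) : Real.cos t ≤ 1 - t^2/2 + t^4/24 := by
  rcases le_total 0 t with ht | ht
  · have := nonneg_of_deriv (fun t => 1 - t^2/2 + t^4/24 - Real.cos t)
      (fun t => -t + t^3/6 + Real.sin t) (fun t => by
        have h1 := ((hasDerivAt_pow 2 t).div_const 2).const_sub 1
        have h2 := ((hasDerivAt_pow 4 t).div_const 24)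
        have h3 := (h1.add h2).sub (Real.hasDerivAt_cos t)
        refine (h3).congr_deriv ?_
        push_cast; ring)
      (fun t ht => by nlinarith [sin_cubic_lb ht])
      (by norm_num) ht
    linarith
  · have h := nonneg_of_deriv (fun t => 1 - t^2/2 + t^4/24 - Real.cos t)
      (fun t => -t + t^3/6 + Real.sin t) (fun t => by
        have h1 := ((hasDerivAt_pow 2 t).div_const 2).const_sub 1
        have h2 := ((hasDerivAt_pow 4 t).div_const 24)
        have h3 := (h1.add h2).sub (Real.hasDerivAt_cos t)
        refine (h3).congr_deriv ?_
        push_cast; ring)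
      (fun t ht => by nlinarith [sin_cubic_lb ht])
      (by norm_num) (neg_nonneg.2 ht)
    rw [show (-t)^2 = t^2 by ring, show (-t)^4 = t^4 by ring, Real.cos_neg] at h
    linarith

lemma sin_quintic_ub {t : ℝ} (ht : 0 ≤ t) : Real.sin t ≤ t - t^3/6 + t^5/120 := by
  have := nonneg_of_deriv (fun t => t - t^3/6 + t^5/120 - Real.sin t)
    (fun t => 1 - t^2/2 + t^4/24 - Real.cos t) (fun t => by
      have h1 := (hasDerivAt_id t).sub ((hasDerivAt_pow 3 t).div_const 6)
      have h2 := (h1.add ((hasDerivAt_pow 5 t).div_const 120)).sub (Real.hasDerivAt_sin t)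
      refine (h2).congr_deriv ?_
      push_cast; ring)
    (fun t _ => by nlinarith [cos_quartic_ub t])
    (by norm_num) ht
  linarith

lemma cos_sextic_lb {t : ℝ} (ht : 0 ≤ t) : 1 - t^2/2 + t^4/24 - t^6/720 ≤ Real.cos t := by
  have := nonneg_of_deriv (fun t => Real.cos t - 1 + t^2/2 - t^4/24 + t^6/720)
    (fun t => -Real.sin t + t - t^3/6 + t^5/120) (fun t => by
      have h1 := (((Real.hasDerivAt_cos t).sub_const 1).add ((hasDerivAt_pow 2 t).div_const 2)).sub
        ((hasDerivAt_pow 4 t).div_const 24)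
      have h2 := h1.add ((hasDerivAt_pow 6 t).div_const 720)
      refine (h2).congr_deriv ?_
      push_cast; ring)
    (fun t ht => by nlinarith [sin_quintic_ub ht])
    (by norm_num) ht
  linarith

lemma sin_septic_lb {t : ℝ} (ht : 0 ≤ t) : t - t^3/6 + t^5/120 - t^7/5040 ≤ Real.sin t := by
  have := nonneg_of_deriv (fun t => Real.sin t - t + t^3/6 - t^5/120 + t^7/5040)
    (fun t => Real.cos t - 1 + t^2/2 - t^4/24 + t^6/720) (fun t => by
      have h1 := ((Real.hasDerivAt_sin t).sub (hasDerivAt_id t)).add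
        ((hasDerivAt_pow 3 t).div_const 6)
      have h2 := (h1.sub ((hasDerivAt_pow 5 t).div_const 120)).add
        ((hasDerivAt_pow 7 t).div_const 5040)
      refine (h2).congr_deriv ?_
      push_cast; ring)
    (fun t ht => by nlinarith [cos_sextic_lb ht])
    (by norm_num) ht
  linarith

lemma log_series_lb {u : ℝ} (h0 : 0 ≤ u) (h1 : u < 1) :
    u + u^2/2 + u^3/3 + u^4/4 + u^5/5 ≤ -Real.log (1 - u) := by
  set f : ℝ → ℝ := fun z => -Real.log (1 - z) - (z + z^2/2 + z^3/3 + z^4/4 + z^5/5) with hf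
  have hd : ∀ z ∈ Set.Ico (0:ℝ) 1, HasDerivAt f (1/(1-z) - (1 + z + z^2 + z^3 + z^4)) z := by
    intro z hz
    have hz1 : (1:ℝ) - z ≠ 0 := by
      have := hz.2; intro h; nlinarith
    have hlog : HasDerivAt (fun z : ℝ => Real.log (1 - z)) ((-1)/(1-z)) z :=
      (((hasDerivAt_id z).const_sub 1)).log hz1
    have hpoly : HasDerivAt (fun z : ℝ => z + z^2/2 + z^3/3 + z^4/4 + z^5/5)
        (1 + z + z^2 + z^3 + z^4) z := by
      have h2 := (((((hasDerivAt_id z).add ((hasDerivAt_pow 2 z).div_const 2)).add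
        ((hasDerivAt_pow 3 z).div_const 3)).add ((hasDerivAt_pow 4 z).div_const 4)).add
        ((hasDerivAt_pow 5 z).div_const 5))
      refine (h2).congr_deriv ?_
      push_cast; ring
    have := (hlog.neg).sub hpoly
    refine (this).congr_deriv ?_
    field_simp
  have hm : MonotoneOn f (Set.Ico (0:ℝ) 1) := by
    apply monotoneOn_of_deriv_nonneg (convex_Ico 0 1)
    · exact fun z hz => ((hd z hz).differentiableAt.continuousAt).continuousWithinAt
    · intro z hz
      rw [interior_Ico] at hz
      exact ((hd z ⟨hz.1.le, hz.2⟩).differentiableAt).differentiableWithinAt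
    · intro z hz
      rw [interior_Ico] at hz
      rw [(hd z ⟨hz.1.le, hz.2⟩).deriv]
      have hz1 : (0:ℝ) < 1 - z := by linarith [hz.2]
      have key : 1/(1-z) - (1 + z + z^2 + z^3 + z^4) = z^5 / (1-z) := by
        field_simp; ring
      rw [key]
      exact div_nonneg (pow_nonneg hz.1.le 5) hz1.le
  have h := hm (Set.mem_Ico.2 ⟨le_refl 0, one_pos⟩) (Set.mem_Ico.2 ⟨h0, h1⟩) h0
  simp only [hf, Real.log_one, sub_zero] at h
  norm_num at h
  linarith

lemma log_ub2 {u : ℝ} (h0 : 0 ≤ u) (h1 : u < 1) :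
    -Real.log (1 - u) ≤ u + u^2/2 + u^3/(1-u) := by
  have habs : |u| < 1 := by rwa [abs_of_nonneg h0]
  have h := Real.abs_log_sub_add_sum_range_le habs 2
  rw [abs_of_nonneg h0] at h
  simp [Finset.sum_range_succ] at h
  rw [abs_le] at h
  have := h.1
  push_cast at this
  linarith

lemma log_ub3 {u : ℝ} (h0 : 0 ≤ u) (h1 : u < 1) :
    -Real.log (1 - u) ≤ u + u^2/2 + u^3/3 + u^4/(1-u) := by
  have habs : |u| < 1 := by rwa [abs_of_nonneg h0]
  have h := Real.abs_log_sub_add_sum_range_le habs 3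
  rw [abs_of_nonneg h0] at h
  simp [Finset.sum_range_succ] at h
  rw [abs_le] at h
  have := h.1
  push_cast at this
  linarith

set_option maxHeartbeats 1000000 in
lemma QA_pos (s : ℝ) (h0 : 0 ≤ s) (h1 : s ≤ (961/400:ℝ)) :
    0 < (301303/2960910:ℝ) + (-2493667/28424736:ℝ) * s + (8659607/315830400:ℝ) * s^2 + (-3126677/710618400:ℝ) * s^3 + (88278883/204658099200:ℝ) * s^4 + (-27664819/1023290496000:ℝ) * s^5 + (1762697/1637264793600:ℝ) * s^6 + (-1232899/49117943808000:ℝ) * s^7 + (5/18419228928:ℝ) * s^8 := by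
  rcases le_total s (1:ℝ) with hc0 | hc0
  · -- interval [0,1]
    have hy0 : (0:ℝ) ≤ s - (0:ℝ) := by linarith
    have hyh : s - (0:ℝ) ≤ (1:ℝ) := by linarith
    have pw2 : (s - (0:ℝ))^2 ≤ (1:ℝ)^1 * (s - (0:ℝ)) := by
      calc (s - (0:ℝ))^2 = (s - (0:ℝ))^1 * (s - (0:ℝ)) := by ring
        _ ≤ (1:ℝ)^1 * (s - (0:ℝ)) := by
          apply mul_le_mul_of_nonneg_right _ hy0
          exact pow_le_pow_left₀ hy0 hyh _
    have nn2 : (0:ℝ) ≤ (s - (0:ℝ))^2 := by positivity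
    have pw3 : (s - (0:ℝ))^3 ≤ (1:ℝ)^2 * (s - (0:ℝ)) := by
      calc (s - (0:ℝ))^3 = (s - (0:ℝ))^2 * (s - (0:ℝ)) := by ring
        _ ≤ (1:ℝ)^2 * (s - (0:ℝ)) := by
          apply mul_le_mul_of_nonneg_right _ hy0
          exact pow_le_pow_left₀ hy0 hyh _
    have nn3 : (0:ℝ) ≤ (s - (0:ℝ))^3 := by positivity
    have pw4 : (s - (0:ℝ))^4 ≤ (1:ℝ)^3 * (s - (0:ℝ)) := by
      calc (s - (0:ℝ))^4 = (s - (0:ℝ))^3 * (s - (0:ℝ)) := by ring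
        _ ≤ (1:ℝ)^3 * (s - (0:ℝ)) := by
          apply mul_le_mul_of_nonneg_right _ hy0
          exact pow_le_pow_left₀ hy0 hyh _
    have nn4 : (0:ℝ) ≤ (s - (0:ℝ))^4 := by positivity
    have pw5 : (s - (0:ℝ))^5 ≤ (1:ℝ)^4 * (s - (0:ℝ)) := by
      calc (s - (0:ℝ))^5 = (s - (0:ℝ))^4 * (s - (0:ℝ)) := by ring
        _ ≤ (1:ℝ)^4 * (s - (0:ℝ)) := by
          apply mul_le_mul_of_nonneg_right _ hy0
          exact pow_le_pow_left₀ hy0 hyh _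
    have nn5 : (0:ℝ) ≤ (s - (0:ℝ))^5 := by positivity
    have pw6 : (s - (0:ℝ))^6 ≤ (1:ℝ)^5 * (s - (0:ℝ)) := by
      calc (s - (0:ℝ))^6 = (s - (0:ℝ))^5 * (s - (0:ℝ)) := by ring
        _ ≤ (1:ℝ)^5 * (s - (0:ℝ)) := by
          apply mul_le_mul_of_nonneg_right _ hy0
          exact pow_le_pow_left₀ hy0 hyh _
    have nn6 : (0:ℝ) ≤ (s - (0:ℝ))^6 := by positivity
    have pw7 : (s - (0:ℝ))^7 ≤ (1:ℝ)^6 * (s - (0:ℝ)) := by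
      calc (s - (0:ℝ))^7 = (s - (0:ℝ))^6 * (s - (0:ℝ)) := by ring
        _ ≤ (1:ℝ)^6 * (s - (0:ℝ)) := by
          apply mul_le_mul_of_nonneg_right _ hy0
          exact pow_le_pow_left₀ hy0 hyh _
    have nn7 : (0:ℝ) ≤ (s - (0:ℝ))^7 := by positivity
    have pw8 : (s - (0:ℝ))^8 ≤ (1:ℝ)^7 * (s - (0:ℝ)) := by
      calc (s - (0:ℝ))^8 = (s - (0:ℝ))^7 * (s - (0:ℝ)) := by ring
        _ ≤ (1:ℝ)^7 * (s - (0:ℝ)) := by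
          apply mul_le_mul_of_nonneg_right _ hy0
          exact pow_le_pow_left₀ hy0 hyh _
    have nn8 : (0:ℝ) ≤ (s - (0:ℝ))^8 := by positivity
    linarith [hy0, hyh, pw2, nn2, pw3, nn3, pw4, nn4, pw5, nn5, pw6, nn6, pw7, nn7, pw8, nn8]
  rcases le_total s (7/4:ℝ) with hc1 | hc1
  · -- interval [1,7/4]
    have hy0 : (0:ℝ) ≤ s - (1:ℝ) := by linarith
    have hyh : s - (1:ℝ) ≤ (3/4:ℝ) := by linarith
    have pw2 : (s - (1:ℝ))^2 ≤ (3/4:ℝ)^1 * (s - (1:ℝ)) := by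
      calc (s - (1:ℝ))^2 = (s - (1:ℝ))^1 * (s - (1:ℝ)) := by ring
        _ ≤ (3/4:ℝ)^1 * (s - (1:ℝ)) := by
          apply mul_le_mul_of_nonneg_right _ hy0
          exact pow_le_pow_left₀ hy0 hyh _
    have nn2 : (0:ℝ) ≤ (s - (1:ℝ))^2 := by positivity
    have pw3 : (s - (1:ℝ))^3 ≤ (3/4:ℝ)^2 * (s - (1:ℝ)) := by
      calc (s - (1:ℝ))^3 = (s - (1:ℝ))^2 * (s - (1:ℝ)) := by ring
        _ ≤ (3/4:ℝ)^2 * (s - (1:ℝ)) := by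
          apply mul_le_mul_of_nonneg_right _ hy0
          exact pow_le_pow_left₀ hy0 hyh _
    have nn3 : (0:ℝ) ≤ (s - (1:ℝ))^3 := by positivity
    have pw4 : (s - (1:ℝ))^4 ≤ (3/4:ℝ)^3 * (s - (1:ℝ)) := by
      calc (s - (1:ℝ))^4 = (s - (1:ℝ))^3 * (s - (1:ℝ)) := by ring
        _ ≤ (3/4:ℝ)^3 * (s - (1:ℝ)) := by
          apply mul_le_mul_of_nonneg_right _ hy0
          exact pow_le_pow_left₀ hy0 hyh _
    have nn4 : (0:ℝ) ≤ (s - (1:ℝ))^4 := by positivity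
    have pw5 : (s - (1:ℝ))^5 ≤ (3/4:ℝ)^4 * (s - (1:ℝ)) := by
      calc (s - (1:ℝ))^5 = (s - (1:ℝ))^4 * (s - (1:ℝ)) := by ring
        _ ≤ (3/4:ℝ)^4 * (s - (1:ℝ)) := by
          apply mul_le_mul_of_nonneg_right _ hy0
          exact pow_le_pow_left₀ hy0 hyh _
    have nn5 : (0:ℝ) ≤ (s - (1:ℝ))^5 := by positivity
    have pw6 : (s - (1:ℝ))^6 ≤ (3/4:ℝ)^5 * (s - (1:ℝ)) := by
      calc (s - (1:ℝ))^6 = (s - (1:ℝ))^5 * (s - (1:ℝ)) := by ring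
        _ ≤ (3/4:ℝ)^5 * (s - (1:ℝ)) := by
          apply mul_le_mul_of_nonneg_right _ hy0
          exact pow_le_pow_left₀ hy0 hyh _
    have nn6 : (0:ℝ) ≤ (s - (1:ℝ))^6 := by positivity
    have pw7 : (s - (1:ℝ))^7 ≤ (3/4:ℝ)^6 * (s - (1:ℝ)) := by
      calc (s - (1:ℝ))^7 = (s - (1:ℝ))^6 * (s - (1:ℝ)) := by ring
        _ ≤ (3/4:ℝ)^6 * (s - (1:ℝ)) := by
          apply mul_le_mul_of_nonneg_right _ hy0
          exact pow_le_pow_left₀ hy0 hyh _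
    have nn7 : (0:ℝ) ≤ (s - (1:ℝ))^7 := by positivity
    have pw8 : (s - (1:ℝ))^8 ≤ (3/4:ℝ)^7 * (s - (1:ℝ)) := by
      calc (s - (1:ℝ))^8 = (s - (1:ℝ))^7 * (s - (1:ℝ)) := by ring
        _ ≤ (3/4:ℝ)^7 * (s - (1:ℝ)) := by
          apply mul_le_mul_of_nonneg_right _ hy0
          exact pow_le_pow_left₀ hy0 hyh _
    have nn8 : (0:ℝ) ≤ (s - (1:ℝ))^8 := by positivity
    linarith [hy0, hyh, pw2, nn2, pw3, nn3, pw4, nn4, pw5, nn5, pw6, nn6, pw7, nn7, pw8, nn8]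
  rcases le_total s (2:ℝ) with hc2 | hc2
  · -- interval [7/4,2]
    have hy0 : (0:ℝ) ≤ s - (7/4:ℝ) := by linarith
    have hyh : s - (7/4:ℝ) ≤ (1/4:ℝ) := by linarith
    have pw2 : (s - (7/4:ℝ))^2 ≤ (1/4:ℝ)^1 * (s - (7/4:ℝ)) := by
      calc (s - (7/4:ℝ))^2 = (s - (7/4:ℝ))^1 * (s - (7/4:ℝ)) := by ring
        _ ≤ (1/4:ℝ)^1 * (s - (7/4:ℝ)) := by
          apply mul_le_mul_of_nonneg_right _ hy0
          exact pow_le_pow_left₀ hy0 hyh _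
    have nn2 : (0:ℝ) ≤ (s - (7/4:ℝ))^2 := by positivity
    have pw3 : (s - (7/4:ℝ))^3 ≤ (1/4:ℝ)^2 * (s - (7/4:ℝ)) := by
      calc (s - (7/4:ℝ))^3 = (s - (7/4:ℝ))^2 * (s - (7/4:ℝ)) := by ring
        _ ≤ (1/4:ℝ)^2 * (s - (7/4:ℝ)) := by
          apply mul_le_mul_of_nonneg_right _ hy0
          exact pow_le_pow_left₀ hy0 hyh _
    have nn3 : (0:ℝ) ≤ (s - (7/4:ℝ))^3 := by positivity
    have pw4 : (s - (7/4:ℝ))^4 ≤ (1/4:ℝ)^3 * (s - (7/4:ℝ)) := by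
      calc (s - (7/4:ℝ))^4 = (s - (7/4:ℝ))^3 * (s - (7/4:ℝ)) := by ring
        _ ≤ (1/4:ℝ)^3 * (s - (7/4:ℝ)) := by
          apply mul_le_mul_of_nonneg_right _ hy0
          exact pow_le_pow_left₀ hy0 hyh _
    have nn4 : (0:ℝ) ≤ (s - (7/4:ℝ))^4 := by positivity
    have pw5 : (s - (7/4:ℝ))^5 ≤ (1/4:ℝ)^4 * (s - (7/4:ℝ)) := by
      calc (s - (7/4:ℝ))^5 = (s - (7/4:ℝ))^4 * (s - (7/4:ℝ)) := by ring
        _ ≤ (1/4:ℝ)^4 * (s - (7/4:ℝ)) := by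
          apply mul_le_mul_of_nonneg_right _ hy0
          exact pow_le_pow_left₀ hy0 hyh _
    have nn5 : (0:ℝ) ≤ (s - (7/4:ℝ))^5 := by positivity
    have pw6 : (s - (7/4:ℝ))^6 ≤ (1/4:ℝ)^5 * (s - (7/4:ℝ)) := by
      calc (s - (7/4:ℝ))^6 = (s - (7/4:ℝ))^5 * (s - (7/4:ℝ)) := by ring
        _ ≤ (1/4:ℝ)^5 * (s - (7/4:ℝ)) := by
          apply mul_le_mul_of_nonneg_right _ hy0
          exact pow_le_pow_left₀ hy0 hyh _
    have nn6 : (0:ℝ) ≤ (s - (7/4:ℝ))^6 := by positivity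
    have pw7 : (s - (7/4:ℝ))^7 ≤ (1/4:ℝ)^6 * (s - (7/4:ℝ)) := by
      calc (s - (7/4:ℝ))^7 = (s - (7/4:ℝ))^6 * (s - (7/4:ℝ)) := by ring
        _ ≤ (1/4:ℝ)^6 * (s - (7/4:ℝ)) := by
          apply mul_le_mul_of_nonneg_right _ hy0
          exact pow_le_pow_left₀ hy0 hyh _
    have nn7 : (0:ℝ) ≤ (s - (7/4:ℝ))^7 := by positivity
    have pw8 : (s - (7/4:ℝ))^8 ≤ (1/4:ℝ)^7 * (s - (7/4:ℝ)) := by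
      calc (s - (7/4:ℝ))^8 = (s - (7/4:ℝ))^7 * (s - (7/4:ℝ)) := by ring
        _ ≤ (1/4:ℝ)^7 * (s - (7/4:ℝ)) := by
          apply mul_le_mul_of_nonneg_right _ hy0
          exact pow_le_pow_left₀ hy0 hyh _
    have nn8 : (0:ℝ) ≤ (s - (7/4:ℝ))^8 := by positivity
    linarith [hy0, hyh, pw2, nn2, pw3, nn3, pw4, nn4, pw5, nn5, pw6, nn6, pw7, nn7, pw8, nn8]
  rcases le_total s (9/4:ℝ) with hc3 | hc3
  · -- interval [2,9/4]
    have hy0 : (0:ℝ) ≤ s - (2:ℝ) := by linarith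
    have hyh : s - (2:ℝ) ≤ (1/4:ℝ) := by linarith
    have pw2 : (s - (2:ℝ))^2 ≤ (1/4:ℝ)^1 * (s - (2:ℝ)) := by
      calc (s - (2:ℝ))^2 = (s - (2:ℝ))^1 * (s - (2:ℝ)) := by ring
        _ ≤ (1/4:ℝ)^1 * (s - (2:ℝ)) := by
          apply mul_le_mul_of_nonneg_right _ hy0
          exact pow_le_pow_left₀ hy0 hyh _
    have nn2 : (0:ℝ) ≤ (s - (2:ℝ))^2 := by positivity
    have pw3 : (s - (2:ℝ))^3 ≤ (1/4:ℝ)^2 * (s - (2:ℝ)) := by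
      calc (s - (2:ℝ))^3 = (s - (2:ℝ))^2 * (s - (2:ℝ)) := by ring
        _ ≤ (1/4:ℝ)^2 * (s - (2:ℝ)) := by
          apply mul_le_mul_of_nonneg_right _ hy0
          exact pow_le_pow_left₀ hy0 hyh _
    have nn3 : (0:ℝ) ≤ (s - (2:ℝ))^3 := by positivity
    have pw4 : (s - (2:ℝ))^4 ≤ (1/4:ℝ)^3 * (s - (2:ℝ)) := by
      calc (s - (2:ℝ))^4 = (s - (2:ℝ))^3 * (s - (2:ℝ)) := by ring
        _ ≤ (1/4:ℝ)^3 * (s - (2:ℝ)) := by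
          apply mul_le_mul_of_nonneg_right _ hy0
          exact pow_le_pow_left₀ hy0 hyh _
    have nn4 : (0:ℝ) ≤ (s - (2:ℝ))^4 := by positivity
    have pw5 : (s - (2:ℝ))^5 ≤ (1/4:ℝ)^4 * (s - (2:ℝ)) := by
      calc (s - (2:ℝ))^5 = (s - (2:ℝ))^4 * (s - (2:ℝ)) := by ring
        _ ≤ (1/4:ℝ)^4 * (s - (2:ℝ)) := by
          apply mul_le_mul_of_nonneg_right _ hy0
          exact pow_le_pow_left₀ hy0 hyh _
    have nn5 : (0:ℝ) ≤ (s - (2:ℝ))^5 := by positivity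
    have pw6 : (s - (2:ℝ))^6 ≤ (1/4:ℝ)^5 * (s - (2:ℝ)) := by
      calc (s - (2:ℝ))^6 = (s - (2:ℝ))^5 * (s - (2:ℝ)) := by ring
        _ ≤ (1/4:ℝ)^5 * (s - (2:ℝ)) := by
          apply mul_le_mul_of_nonneg_right _ hy0
          exact pow_le_pow_left₀ hy0 hyh _
    have nn6 : (0:ℝ) ≤ (s - (2:ℝ))^6 := by positivity
    have pw7 : (s - (2:ℝ))^7 ≤ (1/4:ℝ)^6 * (s - (2:ℝ)) := by
      calc (s - (2:ℝ))^7 = (s - (2:ℝ))^6 * (s - (2:ℝ)) := by ring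
        _ ≤ (1/4:ℝ)^6 * (s - (2:ℝ)) := by
          apply mul_le_mul_of_nonneg_right _ hy0
          exact pow_le_pow_left₀ hy0 hyh _
    have nn7 : (0:ℝ) ≤ (s - (2:ℝ))^7 := by positivity
    have pw8 : (s - (2:ℝ))^8 ≤ (1/4:ℝ)^7 * (s - (2:ℝ)) := by
      calc (s - (2:ℝ))^8 = (s - (2:ℝ))^7 * (s - (2:ℝ)) := by ring
        _ ≤ (1/4:ℝ)^7 * (s - (2:ℝ)) := by
          apply mul_le_mul_of_nonneg_right _ hy0
          exact pow_le_pow_left₀ hy0 hyh _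
    have nn8 : (0:ℝ) ≤ (s - (2:ℝ))^8 := by positivity
    linarith [hy0, hyh, pw2, nn2, pw3, nn3, pw4, nn4, pw5, nn5, pw6, nn6, pw7, nn7, pw8, nn8]
  have hy0 : (0:ℝ) ≤ s - (9/4:ℝ) := by linarith
  have hyh : s - (9/4:ℝ) ≤ (61/400:ℝ) := by linarith
  have pw2 : (s - (9/4:ℝ))^2 ≤ (61/400:ℝ)^1 * (s - (9/4:ℝ)) := by
    calc (s - (9/4:ℝ))^2 = (s - (9/4:ℝ))^1 * (s - (9/4:ℝ)) := by ring
      _ ≤ (61/400:ℝ)^1 * (s - (9/4:ℝ)) := by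
        apply mul_le_mul_of_nonneg_right _ hy0
        exact pow_le_pow_left₀ hy0 hyh _
  have nn2 : (0:ℝ) ≤ (s - (9/4:ℝ))^2 := by positivity
  have pw3 : (s - (9/4:ℝ))^3 ≤ (61/400:ℝ)^2 * (s - (9/4:ℝ)) := by
    calc (s - (9/4:ℝ))^3 = (s - (9/4:ℝ))^2 * (s - (9/4:ℝ)) := by ring
      _ ≤ (61/400:ℝ)^2 * (s - (9/4:ℝ)) := by
        apply mul_le_mul_of_nonneg_right _ hy0
        exact pow_le_pow_left₀ hy0 hyh _
  have nn3 : (0:ℝ) ≤ (s - (9/4:ℝ))^3 := by positivity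
  have pw4 : (s - (9/4:ℝ))^4 ≤ (61/400:ℝ)^3 * (s - (9/4:ℝ)) := by
    calc (s - (9/4:ℝ))^4 = (s - (9/4:ℝ))^3 * (s - (9/4:ℝ)) := by ring
      _ ≤ (61/400:ℝ)^3 * (s - (9/4:ℝ)) := by
        apply mul_le_mul_of_nonneg_right _ hy0
        exact pow_le_pow_left₀ hy0 hyh _
  have nn4 : (0:ℝ) ≤ (s - (9/4:ℝ))^4 := by positivity
  have pw5 : (s - (9/4:ℝ))^5 ≤ (61/400:ℝ)^4 * (s - (9/4:ℝ)) := by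
    calc (s - (9/4:ℝ))^5 = (s - (9/4:ℝ))^4 * (s - (9/4:ℝ)) := by ring
      _ ≤ (61/400:ℝ)^4 * (s - (9/4:ℝ)) := by
        apply mul_le_mul_of_nonneg_right _ hy0
        exact pow_le_pow_left₀ hy0 hyh _
  have nn5 : (0:ℝ) ≤ (s - (9/4:ℝ))^5 := by positivity
  have pw6 : (s - (9/4:ℝ))^6 ≤ (61/400:ℝ)^5 * (s - (9/4:ℝ)) := by
    calc (s - (9/4:ℝ))^6 = (s - (9/4:ℝ))^5 * (s - (9/4:ℝ)) := by ring
      _ ≤ (61/400:ℝ)^5 * (s - (9/4:ℝ)) := by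
        apply mul_le_mul_of_nonneg_right _ hy0
        exact pow_le_pow_left₀ hy0 hyh _
  have nn6 : (0:ℝ) ≤ (s - (9/4:ℝ))^6 := by positivity
  have pw7 : (s - (9/4:ℝ))^7 ≤ (61/400:ℝ)^6 * (s - (9/4:ℝ)) := by
    calc (s - (9/4:ℝ))^7 = (s - (9/4:ℝ))^6 * (s - (9/4:ℝ)) := by ring
      _ ≤ (61/400:ℝ)^6 * (s - (9/4:ℝ)) := by
        apply mul_le_mul_of_nonneg_right _ hy0
        exact pow_le_pow_left₀ hy0 hyh _
  have nn7 : (0:ℝ) ≤ (s - (9/4:ℝ))^7 := by positivity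
  have pw8 : (s - (9/4:ℝ))^8 ≤ (61/400:ℝ)^7 * (s - (9/4:ℝ)) := by
    calc (s - (9/4:ℝ))^8 = (s - (9/4:ℝ))^7 * (s - (9/4:ℝ)) := by ring
      _ ≤ (61/400:ℝ)^7 * (s - (9/4:ℝ)) := by
        apply mul_le_mul_of_nonneg_right _ hy0
        exact pow_le_pow_left₀ hy0 hyh _
  have nn8 : (0:ℝ) ≤ (s - (9/4:ℝ))^8 := by positivity
  linarith [hy0, hyh, pw2, nn2, pw3, nn3, pw4, nn4, pw5, nn5, pw6, nn6, pw7, nn7, pw8, nn8]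

set_option maxHeartbeats 1000000 in
lemma QB_pos (s : ℝ) (h0 : 0 ≤ s) (h1 : s ≤ (961/400:ℝ)) :
    0 < (823/151200:ℝ) + (29/181440:ℝ) * s + (979/1944000:ℝ) * s^2 + (-452467/381024000:ℝ) * s^3 + (22126717/45722880000:ℝ) * s^4 + (-23508481/243855360000:ℝ) * s^5 + (18383579/1600300800000:ℝ) * s^6 + (-541409767/614515507200000:ℝ) * s^7 + (81859777/1843546521600000:ℝ) * s^8 + (-74473507/51619302604800000:ℝ) * s^9 + (8441/302456851200000:ℝ) * s^10 + (-1/4013162496000:ℝ) * s^11 := by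
  rcases le_total s (3/2:ℝ) with hc0 | hc0
  · -- interval [0,3/2]
    have hy0 : (0:ℝ) ≤ s - (0:ℝ) := by linarith
    have hyh : s - (0:ℝ) ≤ (3/2:ℝ) := by linarith
    have pw2 : (s - (0:ℝ))^2 ≤ (3/2:ℝ)^1 * (s - (0:ℝ)) := by
      calc (s - (0:ℝ))^2 = (s - (0:ℝ))^1 * (s - (0:ℝ)) := by ring
        _ ≤ (3/2:ℝ)^1 * (s - (0:ℝ)) := by
          apply mul_le_mul_of_nonneg_right _ hy0
          exact pow_le_pow_left₀ hy0 hyh _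
    have nn2 : (0:ℝ) ≤ (s - (0:ℝ))^2 := by positivity
    have pw3 : (s - (0:ℝ))^3 ≤ (3/2:ℝ)^2 * (s - (0:ℝ)) := by
      calc (s - (0:ℝ))^3 = (s - (0:ℝ))^2 * (s - (0:ℝ)) := by ring
        _ ≤ (3/2:ℝ)^2 * (s - (0:ℝ)) := by
          apply mul_le_mul_of_nonneg_right _ hy0
          exact pow_le_pow_left₀ hy0 hyh _
    have nn3 : (0:ℝ) ≤ (s - (0:ℝ))^3 := by positivity
    have pw4 : (s - (0:ℝ))^4 ≤ (3/2:ℝ)^3 * (s - (0:ℝ)) := by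
      calc (s - (0:ℝ))^4 = (s - (0:ℝ))^3 * (s - (0:ℝ)) := by ring
        _ ≤ (3/2:ℝ)^3 * (s - (0:ℝ)) := by
          apply mul_le_mul_of_nonneg_right _ hy0
          exact pow_le_pow_left₀ hy0 hyh _
    have nn4 : (0:ℝ) ≤ (s - (0:ℝ))^4 := by positivity
    have pw5 : (s - (0:ℝ))^5 ≤ (3/2:ℝ)^4 * (s - (0:ℝ)) := by
      calc (s - (0:ℝ))^5 = (s - (0:ℝ))^4 * (s - (0:ℝ)) := by ring
        _ ≤ (3/2:ℝ)^4 * (s - (0:ℝ)) := by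
          apply mul_le_mul_of_nonneg_right _ hy0
          exact pow_le_pow_left₀ hy0 hyh _
    have nn5 : (0:ℝ) ≤ (s - (0:ℝ))^5 := by positivity
    have pw6 : (s - (0:ℝ))^6 ≤ (3/2:ℝ)^5 * (s - (0:ℝ)) := by
      calc (s - (0:ℝ))^6 = (s - (0:ℝ))^5 * (s - (0:ℝ)) := by ring
        _ ≤ (3/2:ℝ)^5 * (s - (0:ℝ)) := by
          apply mul_le_mul_of_nonneg_right _ hy0
          exact pow_le_pow_left₀ hy0 hyh _
    have nn6 : (0:ℝ) ≤ (s - (0:ℝ))^6 := by positivity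
    have pw7 : (s - (0:ℝ))^7 ≤ (3/2:ℝ)^6 * (s - (0:ℝ)) := by
      calc (s - (0:ℝ))^7 = (s - (0:ℝ))^6 * (s - (0:ℝ)) := by ring
        _ ≤ (3/2:ℝ)^6 * (s - (0:ℝ)) := by
          apply mul_le_mul_of_nonneg_right _ hy0
          exact pow_le_pow_left₀ hy0 hyh _
    have nn7 : (0:ℝ) ≤ (s - (0:ℝ))^7 := by positivity
    have pw8 : (s - (0:ℝ))^8 ≤ (3/2:ℝ)^7 * (s - (0:ℝ)) := by
      calc (s - (0:ℝ))^8 = (s - (0:ℝ))^7 * (s - (0:ℝ)) := by ring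
        _ ≤ (3/2:ℝ)^7 * (s - (0:ℝ)) := by
          apply mul_le_mul_of_nonneg_right _ hy0
          exact pow_le_pow_left₀ hy0 hyh _
    have nn8 : (0:ℝ) ≤ (s - (0:ℝ))^8 := by positivity
    have pw9 : (s - (0:ℝ))^9 ≤ (3/2:ℝ)^8 * (s - (0:ℝ)) := by
      calc (s - (0:ℝ))^9 = (s - (0:ℝ))^8 * (s - (0:ℝ)) := by ring
        _ ≤ (3/2:ℝ)^8 * (s - (0:ℝ)) := by
          apply mul_le_mul_of_nonneg_right _ hy0
          exact pow_le_pow_left₀ hy0 hyh _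
    have nn9 : (0:ℝ) ≤ (s - (0:ℝ))^9 := by positivity
    have pw10 : (s - (0:ℝ))^10 ≤ (3/2:ℝ)^9 * (s - (0:ℝ)) := by
      calc (s - (0:ℝ))^10 = (s - (0:ℝ))^9 * (s - (0:ℝ)) := by ring
        _ ≤ (3/2:ℝ)^9 * (s - (0:ℝ)) := by
          apply mul_le_mul_of_nonneg_right _ hy0
          exact pow_le_pow_left₀ hy0 hyh _
    have nn10 : (0:ℝ) ≤ (s - (0:ℝ))^10 := by positivity
    have pw11 : (s - (0:ℝ))^11 ≤ (3/2:ℝ)^10 * (s - (0:ℝ)) := by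
      calc (s - (0:ℝ))^11 = (s - (0:ℝ))^10 * (s - (0:ℝ)) := by ring
        _ ≤ (3/2:ℝ)^10 * (s - (0:ℝ)) := by
          apply mul_le_mul_of_nonneg_right _ hy0
          exact pow_le_pow_left₀ hy0 hyh _
    have nn11 : (0:ℝ) ≤ (s - (0:ℝ))^11 := by positivity
    linarith [hy0, hyh, pw2, nn2, pw3, nn3, pw4, nn4, pw5, nn5, pw6, nn6, pw7, nn7, pw8, nn8, pw9, nn9, pw10, nn10, pw11, nn11]
  have hy0 : (0:ℝ) ≤ s - (3/2:ℝ) := by linarith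
  have hyh : s - (3/2:ℝ) ≤ (361/400:ℝ) := by linarith
  have pw2 : (s - (3/2:ℝ))^2 ≤ (361/400:ℝ)^1 * (s - (3/2:ℝ)) := by
    calc (s - (3/2:ℝ))^2 = (s - (3/2:ℝ))^1 * (s - (3/2:ℝ)) := by ring
      _ ≤ (361/400:ℝ)^1 * (s - (3/2:ℝ)) := by
        apply mul_le_mul_of_nonneg_right _ hy0
        exact pow_le_pow_left₀ hy0 hyh _
  have nn2 : (0:ℝ) ≤ (s - (3/2:ℝ))^2 := by positivity
  have pw3 : (s - (3/2:ℝ))^3 ≤ (361/400:ℝ)^2 * (s - (3/2:ℝ)) := by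
    calc (s - (3/2:ℝ))^3 = (s - (3/2:ℝ))^2 * (s - (3/2:ℝ)) := by ring
      _ ≤ (361/400:ℝ)^2 * (s - (3/2:ℝ)) := by
        apply mul_le_mul_of_nonneg_right _ hy0
        exact pow_le_pow_left₀ hy0 hyh _
  have nn3 : (0:ℝ) ≤ (s - (3/2:ℝ))^3 := by positivity
  have pw4 : (s - (3/2:ℝ))^4 ≤ (361/400:ℝ)^3 * (s - (3/2:ℝ)) := by
    calc (s - (3/2:ℝ))^4 = (s - (3/2:ℝ))^3 * (s - (3/2:ℝ)) := by ring
      _ ≤ (361/400:ℝ)^3 * (s - (3/2:ℝ)) := by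
        apply mul_le_mul_of_nonneg_right _ hy0
        exact pow_le_pow_left₀ hy0 hyh _
  have nn4 : (0:ℝ) ≤ (s - (3/2:ℝ))^4 := by positivity
  have pw5 : (s - (3/2:ℝ))^5 ≤ (361/400:ℝ)^4 * (s - (3/2:ℝ)) := by
    calc (s - (3/2:ℝ))^5 = (s - (3/2:ℝ))^4 * (s - (3/2:ℝ)) := by ring
      _ ≤ (361/400:ℝ)^4 * (s - (3/2:ℝ)) := by
        apply mul_le_mul_of_nonneg_right _ hy0
        exact pow_le_pow_left₀ hy0 hyh _
  have nn5 : (0:ℝ) ≤ (s - (3/2:ℝ))^5 := by positivity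
  have pw6 : (s - (3/2:ℝ))^6 ≤ (361/400:ℝ)^5 * (s - (3/2:ℝ)) := by
    calc (s - (3/2:ℝ))^6 = (s - (3/2:ℝ))^5 * (s - (3/2:ℝ)) := by ring
      _ ≤ (361/400:ℝ)^5 * (s - (3/2:ℝ)) := by
        apply mul_le_mul_of_nonneg_right _ hy0
        exact pow_le_pow_left₀ hy0 hyh _
  have nn6 : (0:ℝ) ≤ (s - (3/2:ℝ))^6 := by positivity
  have pw7 : (s - (3/2:ℝ))^7 ≤ (361/400:ℝ)^6 * (s - (3/2:ℝ)) := by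
    calc (s - (3/2:ℝ))^7 = (s - (3/2:ℝ))^6 * (s - (3/2:ℝ)) := by ring
      _ ≤ (361/400:ℝ)^6 * (s - (3/2:ℝ)) := by
        apply mul_le_mul_of_nonneg_right _ hy0
        exact pow_le_pow_left₀ hy0 hyh _
  have nn7 : (0:ℝ) ≤ (s - (3/2:ℝ))^7 := by positivity
  have pw8 : (s - (3/2:ℝ))^8 ≤ (361/400:ℝ)^7 * (s - (3/2:ℝ)) := by
    calc (s - (3/2:ℝ))^8 = (s - (3/2:ℝ))^7 * (s - (3/2:ℝ)) := by ring
      _ ≤ (361/400:ℝ)^7 * (s - (3/2:ℝ)) := by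
        apply mul_le_mul_of_nonneg_right _ hy0
        exact pow_le_pow_left₀ hy0 hyh _
  have nn8 : (0:ℝ) ≤ (s - (3/2:ℝ))^8 := by positivity
  have pw9 : (s - (3/2:ℝ))^9 ≤ (361/400:ℝ)^8 * (s - (3/2:ℝ)) := by
    calc (s - (3/2:ℝ))^9 = (s - (3/2:ℝ))^8 * (s - (3/2:ℝ)) := by ring
      _ ≤ (361/400:ℝ)^8 * (s - (3/2:ℝ)) := by
        apply mul_le_mul_of_nonneg_right _ hy0
        exact pow_le_pow_left₀ hy0 hyh _
  have nn9 : (0:ℝ) ≤ (s - (3/2:ℝ))^9 := by positivity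
  have pw10 : (s - (3/2:ℝ))^10 ≤ (361/400:ℝ)^9 * (s - (3/2:ℝ)) := by
    calc (s - (3/2:ℝ))^10 = (s - (3/2:ℝ))^9 * (s - (3/2:ℝ)) := by ring
      _ ≤ (361/400:ℝ)^9 * (s - (3/2:ℝ)) := by
        apply mul_le_mul_of_nonneg_right _ hy0
        exact pow_le_pow_left₀ hy0 hyh _
  have nn10 : (0:ℝ) ≤ (s - (3/2:ℝ))^10 := by positivity
  have pw11 : (s - (3/2:ℝ))^11 ≤ (361/400:ℝ)^10 * (s - (3/2:ℝ)) := by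
    calc (s - (3/2:ℝ))^11 = (s - (3/2:ℝ))^10 * (s - (3/2:ℝ)) := by ring
      _ ≤ (361/400:ℝ)^10 * (s - (3/2:ℝ)) := by
        apply mul_le_mul_of_nonneg_right _ hy0
        exact pow_le_pow_left₀ hy0 hyh _
  have nn11 : (0:ℝ) ≤ (s - (3/2:ℝ))^11 := by positivity
  linarith [hy0, hyh, pw2, nn2, pw3, nn3, pw4, nn4, pw5, nn5, pw6, nn6, pw7, nn7, pw8, nn8, pw9, nn9, pw10, nn10, pw11, nn11]

section polyaux

variable (s : ℝ)

lemma aux_A0 (h0 : 0 ≤ s) (h1 : s ≤ 961/400) : 0 ≤ s/6 - s^2/120 := by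
  have h := mul_nonneg h0 (show (0:ℝ) ≤ 961/400 - s by linarith)
  nlinarith [h]

lemma aux_W0 (h0 : 0 ≤ s) (h1 : s ≤ 961/400) : 0 ≤ s/6 - s^2/120 + s^3/5040 := by
  have h := mul_nonneg h0 (show (0:ℝ) ≤ 961/400 - s by linarith)
  have h3 : 0 ≤ s^3 := by positivity
  nlinarith [h, h3]

lemma aux_V0 (h0 : 0 ≤ s) (h1 : s ≤ 961/400) : 0 ≤ s/2 - s^2/24 := by
  have h := mul_nonneg h0 (show (0:ℝ) ≤ 961/400 - s by linarith)
  nlinarith [h]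

lemma aux_B0 (h0 : 0 ≤ s) (h1 : s ≤ 961/400) : 0 ≤ s/2 - s^2/24 + s^3/720 := by
  have h := mul_nonneg h0 (show (0:ℝ) ≤ 961/400 - s by linarith)
  have h3 : 0 ≤ s^3 := by positivity
  nlinarith [h, h3]

lemma aux_W1 (h0 : 0 ≤ s) (h1 : s ≤ 961/400) : s/6 - s^2/120 + s^3/5040 < 1 := by
  have h := mul_nonneg h0 (show (0:ℝ) ≤ 961/400 - s by linarith)
  have h2 := mul_nonneg (mul_nonneg h0 h0) (show (0:ℝ) ≤ 961/400 - s by linarith)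
  nlinarith [h, h2]

lemma aux_B1 (h0 : 0 ≤ s) (h1 : s ≤ 961/400) : s/2 - s^2/24 + s^3/720 < 1 := by
  have hy : (0:ℝ) ≤ 961/400 - s := by linarith
  have hy2 : (0:ℝ) ≤ (961/400 - s)^2 := sq_nonneg _
  have hy3 : (0:ℝ) ≤ (961/400 - s)^3 := by positivity
  nlinarith [hy, hy2, hy3]

end polyaux

set_option maxHeartbeats 1000000 in
lemma poly_aux1 (s : ℝ) (h0 : 0 < s) (h1 : s ≤ 961/400) :
    (1/2 - 20000/98697*s) * (((s/2 - s^2/24 + s^3/720) + (s/2 - s^2/24 + s^3/720)^2/2)*(1-(s/2 - s^2/24 + s^3/720)) + (s/2 - s^2/24 + s^3/720)^3) < (3/2 + 20000/98697*s) * ((s/6 - s^2/120) + (s/6 - s^2/120)^2/2) * (1-(s/2 - s^2/24 + s^3/720)) := by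
  have hq := QA_pos s h0.le h1
  have h2 := mul_pos (mul_pos h0 h0) hq
  linarith [h2]

set_option maxHeartbeats 1000000 in
lemma poly_aux2 (s : ℝ) (h0 : 0 < s) (h1 : s ≤ 961/400) :
    (3/2 + s/20) * (((s/6 - s^2/120 + s^3/5040) + (s/6 - s^2/120 + s^3/5040)^2/2 + (s/6 - s^2/120 + s^3/5040)^3/3)*(1-(s/6 - s^2/120 + s^3/5040)) + (s/6 - s^2/120 + s^3/5040)^4) < (1/2 - s/20) * ((s/2 - s^2/24) + (s/2 - s^2/24)^2/2 + (s/2 - s^2/24)^3/3 + (s/2 - s^2/24)^4/4 + (s/2 - s^2/24)^5/5) * (1-(s/6 - s^2/120 + s^3/5040)) := by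
  have hq := QB_pos s h0.le h1
  have h2 := mul_pos (mul_pos (mul_pos h0 h0) h0) hq
  linarith [h2]

set_option maxHeartbeats 1000000 in
theorem poly_exp_inequality_on_31 (x : ℝ) (hx : x ∈ Set.Ioo (0 : ℝ) 3.1) :
    (Real.sin x / x) ^ (3 / 2 + x ^ 2 / (2 * π ^ 2)) < Real.cos (x / 2) ^ 2 ∧
      Real.cos (x / 2) ^ 2 < (Real.sin x / x) ^ (3 / 2 + x ^ 2 / 80) := by
  obtain ⟨hx0, hx31⟩ := hx
  have hx31' : x < 31/10 := by norm_num at hx31; linarith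
  set t : ℝ := x / 2 with htdef
  have ht0 : 0 < t := by positivity
  have ht155 : t < 31/20 := by rw [htdef]; linarith
  have hs0 : (0:ℝ) < t^2 := by positivity
  have hsU : t^2 ≤ (961/400 : ℝ) := by nlinarith [ht0, ht155]
  have hpiL := Real.pi_gt_d6
  have hpiU := Real.pi_lt_d6
  have hpi2L : (98696/10000 : ℝ) < π^2 := by nlinarith [hpiL]
  have hpi2U : π^2 < (98697/10000 : ℝ) := by nlinarith [hpiL, hpiU]
  -- basic trig facts
  have htpi2 : t < π/2 := by linarith
  have hcos : 0 < Real.cos t := Real.cos_pos_of_mem_Ioo ⟨by linarith, htpi2⟩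
  have hsin : 0 < Real.sin t := Real.sin_pos_of_pos_of_lt_pi ht0 (by linarith)
  have hsinlt : Real.sin t < t := Real.sin_lt ht0
  have hr0 : 0 < Real.sin t / t := div_pos hsin ht0
  have hr1 : Real.sin t / t < 1 := (div_lt_one ht0).2 hsinlt
  have hcos1 : Real.cos t ≤ 1 := Real.cos_le_one t
  have ht0' : t ≠ 0 := ne_of_gt ht0
  have hxeq : x = 2 * t := by rw [htdef]; ring
  have hb : Real.sin x / x = (Real.sin t / t) * Real.cos t := by
    rw [hxeq, Real.sin_two_mul]
    field_simp
  have hbpos : 0 < Real.sin x / x := by rw [hb]; positivity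
  -- u, uc
  set u : ℝ := 1 - Real.sin t / t with hu
  set uc : ℝ := 1 - Real.cos t with huc
  have hu0 : 0 ≤ u := by simp only [hu]; linarith
  have hu1 : u < 1 := by simp only [hu]; linarith
  have huc0 : 0 ≤ uc := by simp only [huc]; linarith
  have huc1 : uc < 1 := by simp only [huc]; linarith
  set S : ℝ := -Real.log (Real.sin t / t) with hS
  set C : ℝ := -Real.log (Real.cos t) with hC
  have hSdef : S = -Real.log (1 - u) := by rw [hS, hu, sub_sub_cancel]
  have hCdef : C = -Real.log (1 - uc) := by rw [hC, huc, sub_sub_cancel]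
  have hlogb : Real.log (Real.sin x / x) = -S - C := by
    rw [hb, Real.log_mul (ne_of_gt hr0) (ne_of_gt hcos), hS, hC]; ring
  have hlogcos : Real.log (Real.cos t) = -C := by rw [hC]; ring
  -- abbreviations for polynomial bounds
  set A : ℝ := t^2/6 - t^4/120 with hA
  set W : ℝ := t^2/6 - t^4/120 + t^6/5040 with hW
  set V : ℝ := t^2/2 - t^4/24 with hV
  set B : ℝ := t^2/2 - t^4/24 + t^6/720 with hB2
  -- polynomial bounds on u and uc
  have hua : A ≤ u := by
    have h1 : Real.sin t / t ≤ 1 - t^2/6 + t^4/120 := by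
      rw [div_le_iff₀ ht0]
      linarith [sin_quintic_ub ht0.le]
    simp only [hu, hA]; linarith
  have huw : u ≤ W := by
    have h1 : 1 - t^2/6 + t^4/120 - t^6/5040 ≤ Real.sin t / t := by
      rw [le_div_iff₀ ht0]
      linarith [sin_septic_lb ht0.le]
    simp only [hu, hW]; linarith
  have hucv : V ≤ uc := by
    have := cos_quartic_ub t
    simp only [huc, hV]; linarith
  have hucb : uc ≤ B := by
    have := cos_sextic_lb ht0.le
    simp only [huc, hB2]; linarith
  have hA0 : 0 ≤ A := by rw [hA]; linarith [aux_A0 (t^2) hs0.le hsU]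
  have hW0 : 0 ≤ W := by rw [hW]; linarith [aux_W0 (t^2) hs0.le hsU]
  have hV0 : 0 ≤ V := by rw [hV]; linarith [aux_V0 (t^2) hs0.le hsU]
  have hB0 : 0 ≤ B := by rw [hB2]; linarith [aux_B0 (t^2) hs0.le hsU]
  have hW1 : W < 1 := by rw [hW]; linarith [aux_W1 (t^2) hs0.le hsU]
  have hB1 : B < 1 := by rw [hB2]; linarith [aux_B1 (t^2) hs0.le hsU]
  have h1B : 0 < 1 - B := by linarith
  have h1W : 0 < 1 - W := by linarith
  have h1B' : (1:ℝ) - B ≠ 0 := ne_of_gt h1B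
  have h1W' : (1:ℝ) - W ≠ 0 := ne_of_gt h1W
  clear_value t u uc S C A W V B
  -- S lower bound
  have hS_ge : A + A^2/2 ≤ S := by
    have h5 := log_series_lb hu0 hu1
    have hmono := mul_nonneg (sub_nonneg.2 hua) (show (0:ℝ) ≤ 2 + u + A by linarith)
    rw [hSdef]
    linarith [h5, hmono, pow_nonneg hu0 3, pow_nonneg hu0 4, pow_nonneg hu0 5]
  -- S upper bound
  have hS_le : S ≤ W + W^2/2 + W^3/3 + W^4/(1-W) := by
    have h3 := log_ub3 hu0 hu1
    have hd : u^4/(1-u) ≤ W^4/(1-W) := by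
      apply div_le_div₀ (by positivity) (pow_le_pow_left₀ hu0 huw 4) h1W (by linarith)
    have m1 := mul_nonneg (sub_nonneg.2 huw) (show (0:ℝ) ≤ u + W by linarith)
    have m2 := mul_nonneg (sub_nonneg.2 huw)
      (add_nonneg (add_nonneg (sq_nonneg W) (mul_nonneg hu0 hW0)) (sq_nonneg u))
    rw [hSdef]
    linarith [h3, hd, m1, m2]
  -- C lower bound
  have hC_ge : V + V^2/2 + V^3/3 + V^4/4 + V^5/5 ≤ C := by
    have h5 := log_series_lb huc0 huc1
    have p2 : V^2 ≤ uc^2 := pow_le_pow_left₀ hV0 hucv 2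
    have p3 : V^3 ≤ uc^3 := pow_le_pow_left₀ hV0 hucv 3
    have p4 : V^4 ≤ uc^4 := pow_le_pow_left₀ hV0 hucv 4
    have p5 : V^5 ≤ uc^5 := pow_le_pow_left₀ hV0 hucv 5
    rw [hCdef]
    linarith [h5, hucv, p2, p3, p4, p5]
  -- C upper bound
  have hC_le : C ≤ B + B^2/2 + B^3/(1-B) := by
    have h2 := log_ub2 huc0 huc1
    have hd : uc^3/(1-uc) ≤ B^3/(1-B) := by
      apply div_le_div₀ (by positivity) (pow_le_pow_left₀ huc0 hucb 3) h1B (by linarith)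
    have m1 := mul_nonneg (sub_nonneg.2 hucb) (show (0:ℝ) ≤ uc + B by linarith)
    rw [hCdef]
    linarith [h2, hd, m1]
  -- key inequality A (left)
  have hIA : (1/2 - 20000/98697*t^2) * (B + B^2/2 + B^3/(1-B)) <
      (3/2 + 20000/98697*t^2) * (A + A^2/2) := by
    have key : B + B^2/2 + B^3/(1-B) = ((B + B^2/2)*(1-B) + B^3)/(1-B) := by
      field_simp
    rw [key, ← mul_div_assoc, div_lt_iff₀ h1B, hA, hB2]
    linarith [poly_aux1 (t^2) hs0 hsU]
  -- key inequality B (right)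
  have hIB : (3/2 + t^2/20) * (W + W^2/2 + W^3/3 + W^4/(1-W)) <
      (1/2 - t^2/20) * (V + V^2/2 + V^3/3 + V^4/4 + V^5/5) := by
    have key : W + W^2/2 + W^3/3 + W^4/(1-W) = ((W + W^2/2 + W^3/3)*(1-W) + W^4)/(1-W) := by
      field_simp
    rw [key, ← mul_div_assoc, div_lt_iff₀ h1W, hW, hV]
    linarith [poly_aux2 (t^2) hs0 hsU]
  -- coefficients with π
  have hexp1 : 3/2 + x^2/(2*π^2) = 3/2 + 2*t^2/π^2 := by
    rw [hxeq]
    field_simp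
  have hexp2 : 3/2 + x^2/80 = 3/2 + t^2/20 := by rw [hxeq]; ring
  have hppos : 0 < π^2 := by positivity
  have hpik : (20000/98697:ℝ)*t^2 ≤ 2*t^2/π^2 := by
    rw [le_div_iff₀ hppos]
    have h := mul_nonneg hs0.le (sub_nonneg.2 hpi2U.le)
    linarith [h]
  have hp1_ge : 3/2 + 20000/98697*t^2 ≤ 3/2 + 2*t^2/π^2 := by linarith [hpik]
  have hq1_le : 1/2 - 2*t^2/π^2 ≤ 1/2 - 20000/98697*t^2 := by linarith [hpik]
  have hq1_pos : 0 ≤ 1/2 - 2*t^2/π^2 := by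
    rw [sub_nonneg, div_le_iff₀ hppos]
    linarith [hpi2L, hsU]
  have hq2_pos : (0:ℝ) ≤ 1/2 - t^2/20 := by linarith [hsU]
  have hp2_pos : (0:ℝ) < 3/2 + t^2/20 := by linarith [hs0.le]
  have hp1_pos : (0:ℝ) < 3/2 + 2*t^2/π^2 := by positivity
  have hBexpr0 : 0 ≤ B + B^2/2 + B^3/(1-B) := by
    linarith [hB0, sq_nonneg B, div_nonneg (pow_nonneg hB0 3) h1B.le]
  have hSL0 : 0 ≤ A + A^2/2 := by linarith [hA0, sq_nonneg A]
  -- main log inequality, left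
  have h2C : 2*C < (3/2 + 2*t^2/π^2) * (S + C) := by
    have c1 : (1/2 - 2*t^2/π^2) * C ≤ (1/2 - 2*t^2/π^2) * (B + B^2/2 + B^3/(1-B)) :=
      mul_le_mul_of_nonneg_left hC_le hq1_pos
    have c2 : (1/2 - 2*t^2/π^2) * (B + B^2/2 + B^3/(1-B)) ≤
        (1/2 - 20000/98697*t^2) * (B + B^2/2 + B^3/(1-B)) :=
      mul_le_mul_of_nonneg_right hq1_le hBexpr0
    have c4 : (3/2 + 20000/98697*t^2) * (A + A^2/2) ≤ (3/2 + 2*t^2/π^2) * (A + A^2/2) :=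
      mul_le_mul_of_nonneg_right hp1_ge hSL0
    have c5 : (3/2 + 2*t^2/π^2) * (A + A^2/2) ≤ (3/2 + 2*t^2/π^2) * S :=
      mul_le_mul_of_nonneg_left hS_ge hp1_pos.le
    linarith [c1, c2, hIA, c4, c5]
  -- main log inequality, right
  have h2C' : (3/2 + t^2/20) * (S + C) < 2*C := by
    have c1 : (3/2 + t^2/20) * S ≤ (3/2 + t^2/20) * (W + W^2/2 + W^3/3 + W^4/(1-W)) :=
      mul_le_mul_of_nonneg_left hS_le hp2_pos.le
    have c3 : (1/2 - t^2/20) * (V + V^2/2 + V^3/3 + V^4/4 + V^5/5) ≤ (1/2 - t^2/20) * C :=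
      mul_le_mul_of_nonneg_left hC_ge hq2_pos
    linarith [c1, hIB, c3]
  have hcossq : Real.cos t ^ 2 = Real.exp (2 * Real.log (Real.cos t)) := by
    rw [show (2:ℝ) * Real.log (Real.cos t) = Real.log (Real.cos t) + Real.log (Real.cos t) by
      ring, Real.exp_add, Real.exp_log hcos]
    ring
  constructor
  · rw [Real.rpow_def_of_pos hbpos, hcossq]
    apply Real.exp_lt_exp.2
    rw [hlogb, hlogcos, hexp1]
    linarith [h2C]
  · rw [Real.rpow_def_of_pos hbpos, hcossq]
    apply Real.exp_lt_exp.2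
    rw [hlogb, hlogcos, hexp2]
    linarith [h2C']
end

section
/- For every x ∈ (0, π), the double inequality ((sin x)/x)^{p₁(x)} < cos²(x/2) < ((sin x)/x)^{p₂(x)} holds, where p₁(x) = 3/2 + x²/(2π²) and p₂(x) = 3/2 + x²/80. -/
open Real Filter Topology

lemma calc_lemma {v : ℝ} (h0 : 0 < v) (h1 : v < 1) :
    (1 - v) * (-Real.log (1 - v)) < 4 * (-Real.log (1 - v / 4)) := by
  set g : ℝ → ℝ := fun w => -4 * Real.log (1 - w / 4) + (1 - w) * Real.log (1 - w) with hg
  have key : StrictMonoOn g (Set.Icc 0 v) := by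
    apply strictMonoOn_of_deriv_pos (convex_Icc 0 v)
    · apply ContinuousOn.add
      · apply ContinuousOn.mul continuousOn_const
        apply ContinuousOn.log (by fun_prop)
        intro w hw
        simp only [Set.mem_Icc] at hw
        nlinarith [hw.1, hw.2]
      · apply ContinuousOn.mul (by fun_prop)
        apply ContinuousOn.log (by fun_prop)
        intro w hw
        simp only [Set.mem_Icc] at hw
        nlinarith [hw.1, hw.2]
    · intro w hw
      rw [interior_Icc] at hw
      obtain ⟨hw0, hwv⟩ := hw
      have hw1 : w < 1 := lt_trans hwv h1
      have h4 : (1 : ℝ) - w / 4 > 0 := by linarith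
      have hne4 : (1 : ℝ) - w / 4 ≠ 0 := ne_of_gt h4
      have hpos : (0:ℝ) < 1 - w := by linarith
      have hne : (1 : ℝ) - w ≠ 0 := ne_of_gt hpos
      have d1 : HasDerivAt (fun w : ℝ => 1 - w / 4) (-(1/4)) w := by
        simpa using ((hasDerivAt_id w).div_const 4).const_sub 1
      have d2 : HasDerivAt (fun w : ℝ => Real.log (1 - w / 4)) (-(1/4) / (1 - w / 4)) w :=
        d1.log hne4
      have d3 : HasDerivAt (fun w : ℝ => 1 - w) (-1) w := by
        simpa using (hasDerivAt_id w).const_sub 1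
      have d4 : HasDerivAt (fun w : ℝ => Real.log (1 - w)) (-1 / (1 - w)) w := d3.log hne
      have d5 : HasDerivAt (fun w : ℝ => (1 - w) * Real.log (1 - w))
          ((-1) * Real.log (1 - w) + (1 - w) * (-1 / (1 - w))) w := d3.mul d4
      have d6 : HasDerivAt g ((-4) * (-(1/4) / (1 - w / 4)) +
          ((-1) * Real.log (1 - w) + (1 - w) * (-1 / (1 - w)))) w :=
        ((d2.const_mul (-4)).add d5)
      rw [d6.deriv]
      have hlog : Real.log (1 - w) < 0 := Real.log_neg hpos (by linarith)
      have e1 : (1 - w) * (-1 / (1 - w)) = -1 := by field_simp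
      have e2 : (-4 : ℝ) * (-(1/4) / (1 - w / 4)) = 1 / (1 - w / 4) := by
        field_simp
      rw [e1, e2]
      have : (1:ℝ) < 1 / (1 - w / 4) := by
        rw [lt_div_iff₀ h4]; linarith
      linarith
  have h01 : (0:ℝ) ∈ Set.Icc (0:ℝ) v := Set.mem_Icc.2 ⟨le_refl _, h0.le⟩
  have hv1 : v ∈ Set.Icc (0:ℝ) v := Set.mem_Icc.2 ⟨h0.le, le_refl _⟩
  have := key h01 hv1 h0
  simp only [hg] at this
  norm_num at this
  linarith

lemma hasSum_L {t : ℝ} (h0 : 0 < t) (hπ : t < π) :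
    HasSum (fun k : ℕ => -Real.log (1 - t ^ 2 / (π ^ 2 * ((k : ℝ) + 1) ^ 2)))
      (Real.log t - Real.log (Real.sin t)) := by
  have hπ0 := Real.pi_pos
  set u : ℕ → ℝ := fun k => t ^ 2 / (π ^ 2 * ((k : ℝ) + 1) ^ 2) with hu
  have hu0 : ∀ k, 0 < u k := by
    intro k; apply div_pos (by positivity) (by positivity)
  have hu1 : ∀ k, u k < 1 := by
    intro k
    rw [div_lt_one (by positivity)]
    have h1 : (1:ℝ) ≤ ((k:ℝ)+1) := by exact_mod_cast Nat.one_le_iff_ne_zero.2 (Nat.succ_ne_zero k)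
    nlinarith [hπ0, sq_nonneg ((k:ℝ)+1-1), mul_pos hπ0 hπ0]
  have hfac : ∀ k, (0:ℝ) < 1 - u k := fun k => by linarith [hu1 k]
  -- Euler product
  have hsin : 0 < Real.sin t := Real.sin_pos_of_pos_of_lt_pi h0 hπ
  have heuler := Real.tendsto_euler_sin_prod (t / π)
  have h1 : π * (t / π) = t := by field_simp
  have h2 : Real.sin (π * (t / π)) = Real.sin t := by rw [h1]
  have heq : ∀ n : ℕ, π * (t / π) * ∏ j ∈ Finset.range n, (1 - (t / π) ^ 2 / ((j : ℝ) + 1) ^ 2)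
      = t * ∏ j ∈ Finset.range n, (1 - u j) := by
    intro n
    rw [h1]
    congr 1
    apply Finset.prod_congr rfl
    intro j _
    rw [hu]
    field_simp
  rw [h2] at heuler
  simp only [heq] at heuler
  -- take logs
  have hP : Tendsto (fun n : ℕ => ∑ j ∈ Finset.range n, Real.log (1 - u j)) atTop
      (𝓝 (Real.log (Real.sin t) - Real.log t)) := by
    have hlog : Tendsto (fun n : ℕ => Real.log (t * ∏ j ∈ Finset.range n, (1 - u j))) atTop
        (𝓝 (Real.log (Real.sin t))) :=
      (Real.continuousAt_log (ne_of_gt hsin)).tendsto.comp heuler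
    have : ∀ n : ℕ, Real.log (t * ∏ j ∈ Finset.range n, (1 - u j)) =
        Real.log t + ∑ j ∈ Finset.range n, Real.log (1 - u j) := by
      intro n
      rw [Real.log_mul (ne_of_gt h0), Real.log_prod]
      · intro j _; exact ne_of_gt (hfac j)
      · exact ne_of_gt (Finset.prod_pos (fun j _ => hfac j))
    simp only [this] at hlog
    have := hlog.sub_const (Real.log t)
    simpa using this
  have hP' : Tendsto (fun n : ℕ => ∑ j ∈ Finset.range n, -Real.log (1 - u j)) atTop
      (𝓝 (Real.log t - Real.log (Real.sin t))) := by
    have := hP.neg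
    simp only [← Finset.sum_neg_distrib] at this
    convert this using 2
    ring
  have hnn : ∀ k, 0 ≤ -Real.log (1 - u k) := by
    intro k
    simp only [neg_nonneg]
    exact Real.log_nonpos (le_of_lt (hfac k)) (by linarith [hu0 k])
  have hmono : Monotone (fun n : ℕ => ∑ j ∈ Finset.range n, -Real.log (1 - u j)) := by
    intro m n hmn
    exact Finset.sum_le_sum_of_subset_of_nonneg (Finset.range_subset_range.2 hmn)
      (fun j _ _ => hnn j)
  have hsummable : Summable (fun k : ℕ => -Real.log (1 - u k)) :=
    summable_of_sum_range_le hnn (fun n => hmono.ge_of_tendsto hP' n)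
  have := hsummable.hasSum.tendsto_sum_nat
  have heqsum := tendsto_nhds_unique this hP'
  rw [← heqsum]
  exact hsummable.hasSum

noncomputable def Znt (n : ℕ) : ℝ := ∑' k : ℕ, ((1 : ℝ) / ((k : ℝ) + 1) ^ 2) ^ (n + 1)

lemma Znt_summable (n : ℕ) : Summable (fun k : ℕ => ((1 : ℝ) / ((k : ℝ) + 1) ^ 2) ^ (n + 1)) := by
  have h2 : Summable (fun k : ℕ => (1 : ℝ) / ((k : ℝ) + 1) ^ 2) := by
    have := (summable_one_div_nat_pow (p := 2)).2 (by norm_num)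
    have := (summable_nat_add_iff (f := fun n : ℕ => (1 : ℝ) / (n : ℝ) ^ 2) 1).2 this
    simpa using this
  apply h2.of_nonneg_of_le (fun k => by positivity)
  intro k
  have hb0 : (0:ℝ) ≤ 1 / ((k : ℝ) + 1) ^ 2 := by positivity
  have hb1 : (1:ℝ) / ((k : ℝ) + 1) ^ 2 ≤ 1 := by
    rw [div_le_one (by positivity)]
    nlinarith [Nat.cast_nonneg (α := ℝ) k]
  calc ((1 : ℝ) / ((k : ℝ) + 1) ^ 2) ^ (n + 1) ≤ ((1 : ℝ) / ((k : ℝ) + 1) ^ 2) ^ 1 :=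
        pow_le_pow_of_le_one hb0 hb1 (by omega)
    _ = _ := pow_one _

lemma Znt_pos (n : ℕ) : 1 ≤ Znt n := by
  have h := Summable.le_tsum (Znt_summable n) 0 (fun j _ => by positivity)
  simp only [Nat.cast_zero, zero_add, one_pow, div_one, one_div] at h
  simpa [Znt] using h

lemma Znt_nonneg (n : ℕ) : 0 ≤ Znt n :=
  le_trans zero_le_one (Znt_pos n)

lemma Znt_two : Znt 0 = π ^ 2 / 6 := by
  have h := hasSum_zeta_two
  have h2 : HasSum (fun k : ℕ => (1 : ℝ) / ((k : ℝ) + 1) ^ 2) (π ^ 2 / 6) := by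
    rw [← hasSum_nat_add_iff' 1] at h
    simpa using h
  simpa [Znt] using h2.tsum_eq

lemma Znt_four : Znt 1 = π ^ 4 / 90 := by
  have h := hasSum_zeta_four
  have h2 : HasSum (fun k : ℕ => (1 : ℝ) / ((k : ℝ) + 1) ^ 4) (π ^ 4 / 90) := by
    rw [← hasSum_nat_add_iff' 1] at h
    simpa using h
  have : (fun k : ℕ => ((1 : ℝ) / ((k : ℝ) + 1) ^ 2) ^ 2) =
      (fun k : ℕ => (1 : ℝ) / ((k : ℝ) + 1) ^ 4) := by
    funext k; rw [div_pow, one_pow, ← pow_mul]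
  rw [Znt, this]
  exact h2.tsum_eq



lemma hasSum_series {t : ℝ} (h0 : 0 < t) (hπ : t < π) :
    HasSum (fun n : ℕ => (t ^ 2 / π ^ 2) ^ (n + 1) / ((n : ℝ) + 1) * Znt n)
      (Real.log t - Real.log (Real.sin t)) := by
  have hπ0 := Real.pi_pos
  have hu0 : ∀ k : ℕ, 0 < t ^ 2 / (π ^ 2 * ((k : ℝ) + 1) ^ 2) :=
    fun k => div_pos (by positivity) (by positivity)
  have hu1 : ∀ k : ℕ, t ^ 2 / (π ^ 2 * ((k : ℝ) + 1) ^ 2) < 1 := by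
    intro k
    rw [div_lt_one (by positivity)]
    nlinarith [hπ0, sq_nonneg ((k:ℝ)+1-1), mul_pos hπ0 hπ0, Nat.cast_nonneg (α := ℝ) k]
  have hFnn : ∀ p : ℕ × ℕ,
      0 ≤ (t ^ 2 / (π ^ 2 * ((p.1 : ℝ) + 1) ^ 2)) ^ (p.2 + 1) / ((p.2 : ℝ) + 1) := by
    intro p
    exact div_nonneg (pow_nonneg (hu0 p.1).le _) (by positivity)
  have hrow : ∀ k : ℕ, HasSum
      (fun n : ℕ => (t ^ 2 / (π ^ 2 * ((k : ℝ) + 1) ^ 2)) ^ (n + 1) / ((n : ℝ) + 1))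
      (-Real.log (1 - t ^ 2 / (π ^ 2 * ((k : ℝ) + 1) ^ 2))) := by
    intro k
    exact hasSum_pow_div_log_of_abs_lt_one (by rw [abs_of_pos (hu0 k)]; exact hu1 k)
  have hL := hasSum_L h0 hπ
  have hFsummable : Summable (fun p : ℕ × ℕ =>
      (t ^ 2 / (π ^ 2 * ((p.1 : ℝ) + 1) ^ 2)) ^ (p.2 + 1) / ((p.2 : ℝ) + 1)) := by
    apply (summable_prod_of_nonneg hFnn).2
    refine ⟨fun k => ?_, ?_⟩
    · simp only
      exact (hrow k).summable
    · apply hL.summable.congr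
      intro k
      simp only
      exact ((hrow k).tsum_eq).symm
  have hFS : HasSum (fun p : ℕ × ℕ =>
      (t ^ 2 / (π ^ 2 * ((p.1 : ℝ) + 1) ^ 2)) ^ (p.2 + 1) / ((p.2 : ℝ) + 1))
      (Real.log t - Real.log (Real.sin t)) := by
    have h1 : HasSum (fun k : ℕ => -Real.log (1 - t ^ 2 / (π ^ 2 * ((k : ℝ) + 1) ^ 2)))
        (∑' p : ℕ × ℕ, (t ^ 2 / (π ^ 2 * ((p.1 : ℝ) + 1) ^ 2)) ^ (p.2 + 1) / ((p.2 : ℝ) + 1)) := by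
      apply HasSum.prod_fiberwise hFsummable.hasSum
      intro k
      simp only
      exact hrow k
    rw [← tendsto_nhds_unique h1.tendsto_sum_nat hL.tendsto_sum_nat]
    exact hFsummable.hasSum
  have hswap : HasSum (fun p : ℕ × ℕ =>
      (t ^ 2 / (π ^ 2 * ((p.2 : ℝ) + 1) ^ 2)) ^ (p.1 + 1) / ((p.1 : ℝ) + 1))
      (Real.log t - Real.log (Real.sin t)) := by
    exact ((Equiv.prodComm ℕ ℕ).hasSum_iff).2 hFS
  apply HasSum.prod_fiberwise hswap
  intro n
  have hcol : HasSum (fun k : ℕ => (t ^ 2 / π ^ 2) ^ (n + 1) / ((n : ℝ) + 1) *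
      ((1 : ℝ) / ((k : ℝ) + 1) ^ 2) ^ (n + 1))
      ((t ^ 2 / π ^ 2) ^ (n + 1) / ((n : ℝ) + 1) * Znt n) :=
    (Znt_summable n).hasSum.mul_left _
  apply hcol.congr_fun
  intro k
  simp only
  have hbase : t ^ 2 / (π ^ 2 * ((k:ℝ) + 1) ^ 2) = t ^ 2 / π ^ 2 * (1 / ((k:ℝ) + 1) ^ 2) := by
    rw [div_mul_div_comm, mul_one]
  rw [hbase, mul_pow]
  ring

lemma ineqL {t : ℝ} (h0 : 0 < t) (ht : t < π / 2) :
    (π ^ 2 - 4 * t ^ 2) * (Real.log (2 * t) - Real.log (Real.sin (2 * t)))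
      < 4 * π ^ 2 * (Real.log t - Real.log (Real.sin t)) := by
  have hπ0 := Real.pi_pos
  have h2t : 0 < 2 * t := by linarith
  have h2tπ : 2 * t < π := by linarith
  have htπ : t < π := by linarith
  have h4t : 4 * t ^ 2 < π ^ 2 := by nlinarith
  have hL1 := hasSum_L h0 htπ
  have hL2 := hasSum_L h2t h2tπ
  have hkey : ∀ k : ℕ,
      (π ^ 2 - 4 * t ^ 2) * -Real.log (1 - (2 * t) ^ 2 / (π ^ 2 * ((k : ℝ) + 1) ^ 2))
      < 4 * π ^ 2 * -Real.log (1 - t ^ 2 / (π ^ 2 * ((k : ℝ) + 1) ^ 2)) := by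
    intro k
    have hk1 : (1:ℝ) ≤ ((k:ℝ) + 1) := by
      have : (0:ℝ) ≤ (k:ℝ) := Nat.cast_nonneg k
      linarith
    have hk2 : (1:ℝ) ≤ ((k:ℝ) + 1) ^ 2 := by nlinarith
    set u : ℝ := t ^ 2 / (π ^ 2 * ((k : ℝ) + 1) ^ 2) with hu
    have hu0 : 0 < u := div_pos (by positivity) (by positivity)
    have hu4 : 4 * u < 1 := by
      have h4u : 4 * u = 4 * t ^ 2 / (π ^ 2 * ((k:ℝ) + 1) ^ 2) := by rw [hu]; ring
      rw [h4u, div_lt_one (by positivity)]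
      nlinarith
    have hcl := calc_lemma (mul_pos (by norm_num : (0:ℝ) < 4) hu0) hu4
    have he4 : 4 * u / 4 = u := by ring
    rw [he4] at hcl
    have he2 : (2 * t) ^ 2 / (π ^ 2 * ((k : ℝ) + 1) ^ 2) = 4 * u := by
      rw [hu]; ring
    rw [he2]
    have hg2 : 0 ≤ -Real.log (1 - 4 * u) := by
      simp only [neg_nonneg]
      exact Real.log_nonpos (by linarith) (by linarith)
    have step1 : (π ^ 2 - 4 * t ^ 2) * -Real.log (1 - 4 * u)
        ≤ π ^ 2 * (1 - 4 * u) * -Real.log (1 - 4 * u) := by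
      apply mul_le_mul_of_nonneg_right _ hg2
      have : π ^ 2 * (1 - 4 * u) = π ^ 2 - 4 * (t ^ 2 / ((k:ℝ)+1) ^ 2) := by
        rw [hu]; field_simp
      rw [this]
      have : t ^ 2 / ((k:ℝ)+1) ^ 2 ≤ t ^ 2 := by
        rw [div_le_iff₀ (by positivity)]
        nlinarith [sq_nonneg t]
      linarith
    have step2 : π ^ 2 * (1 - 4 * u) * -Real.log (1 - 4 * u)
        < 4 * π ^ 2 * -Real.log (1 - u) := by
      have := mul_lt_mul_of_pos_left hcl (by positivity : (0:ℝ) < π ^ 2)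
      calc π ^ 2 * (1 - 4 * u) * -Real.log (1 - 4 * u)
          = π ^ 2 * ((1 - 4 * u) * -Real.log (1 - 4 * u)) := by ring
        _ < π ^ 2 * (4 * -Real.log (1 - u)) := this
        _ = 4 * π ^ 2 * -Real.log (1 - u) := by ring
    exact lt_of_le_of_lt step1 step2
  have hsum2 : Summable (fun k : ℕ =>
      (π ^ 2 - 4 * t ^ 2) * -Real.log (1 - (2 * t) ^ 2 / (π ^ 2 * ((k : ℝ) + 1) ^ 2))) :=
    hL2.summable.mul_left _
  have hsum1 : Summable (fun k : ℕ =>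
      4 * π ^ 2 * -Real.log (1 - t ^ 2 / (π ^ 2 * ((k : ℝ) + 1) ^ 2))) :=
    hL1.summable.mul_left _
  have := Summable.tsum_lt_tsum (fun k => (hkey k).le) (hkey 0) hsum2 hsum1
  rwa [(hL2.mul_left (π ^ 2 - 4 * t ^ 2)).tsum_eq, (hL1.mul_left (4 * π ^ 2)).tsum_eq] at this


lemma ineqR {t : ℝ} (h0 : 0 < t) (ht : t < π / 2) :
    40 * (Real.log t - Real.log (Real.sin t))
      < (10 - t ^ 2) * (Real.log (2 * t) - Real.log (Real.sin (2 * t))) := by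
  have hπ0 := Real.pi_pos
  have hπlt : π < 3.15 := by
    calc π < 3.141593 := Real.pi_lt_d6
      _ < 3.15 := by norm_num
  have h2t : 0 < 2 * t := by linarith
  have h2tπ : 2 * t < π := by linarith
  have htπ : t < π := by linarith
  have ht2 : t ^ 2 < 5 / 2 := by nlinarith
  have h1 := hasSum_series h0 htπ
  have h2 := hasSum_series h2t h2tπ
  have hdiff := (h2.mul_left (10 - t ^ 2)).sub (h1.mul_left 40)
  rw [← sub_pos, ← hdiff.tsum_eq]
  have hterm : ∀ n : ℕ,
      (10 - t ^ 2) * (((2 * t) ^ 2 / π ^ 2) ^ (n + 1) / ((n : ℝ) + 1) * Znt n)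
        - 40 * ((t ^ 2 / π ^ 2) ^ (n + 1) / ((n : ℝ) + 1) * Znt n)
      = ((10 - t ^ 2) * 4 ^ (n + 1) - 40) * ((t ^ 2 / π ^ 2) ^ (n + 1) / ((n : ℝ) + 1) * Znt n) := by
    intro n
    have : ((2 * t) ^ 2 / π ^ 2) ^ (n + 1) = 4 ^ (n + 1) * (t ^ 2 / π ^ 2) ^ (n + 1) := by
      rw [← mul_pow]
      congr 1
      ring
    rw [this]
    ring
  have hout : ∀ n ∉ Finset.range 3, (0:ℝ) ≤
      (10 - t ^ 2) * (((2 * t) ^ 2 / π ^ 2) ^ (n + 1) / ((n : ℝ) + 1) * Znt n)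
        - 40 * ((t ^ 2 / π ^ 2) ^ (n + 1) / ((n : ℝ) + 1) * Znt n) := by
    intro n hn
    rw [hterm n]
    have h4 : (16:ℝ) ≤ 4 ^ (n + 1) := by
      calc (16:ℝ) = 4 ^ 2 := by norm_num
        _ ≤ 4 ^ (n + 1) := by
          apply pow_le_pow_right₀ (by norm_num)
          simp only [Finset.mem_range] at hn
          omega
    have hcoef : (0:ℝ) ≤ (10 - t ^ 2) * 4 ^ (n + 1) - 40 := by nlinarith
    apply mul_nonneg hcoef
    apply mul_nonneg (div_nonneg (by positivity) (by positivity)) (Znt_nonneg n)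
  refine lt_of_lt_of_le ?_ (Summable.sum_le_tsum (Finset.range 3) hout hdiff.summable)
  rw [Finset.sum_range_succ, Finset.sum_range_succ, Finset.sum_range_succ,
    Finset.range_zero, Finset.sum_empty, hterm 0, hterm 1, hterm 2, Znt_two, Znt_four]
  have hZ2 := Znt_pos 2
  have hπne : π ≠ 0 := ne_of_gt hπ0
  set Z2 := Znt 2 with hZ2def
  norm_num
  have h3π : (0:ℝ) < 45 * π ^ 6 := by positivity
  have h6 : π ^ 6 < 977 := by
    have h2 : π ^ 2 < 9.9225 := by nlinarith
    have hp2 : (0:ℝ) ≤ π ^ 2 := by positivity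
    calc π ^ 6 = (π ^ 2) ^ 3 := by ring
      _ < 9.9225 ^ 3 := by exact pow_lt_pow_left₀ h2 hp2 (by norm_num)
      _ < 977 := by norm_num
  have e : ((10 - t ^ 2) * 4 - 40) * (t ^ 2 / π ^ 2 * (π ^ 2 / 6)) +
        ((10 - t ^ 2) * 16 - 40) * ((t ^ 2 / π ^ 2) ^ 2 / 2 * (π ^ 4 / 90)) +
      ((10 - t ^ 2) * 64 - 40) * ((t ^ 2 / π ^ 2) ^ 3 / 3 * Z2)
      = (15 * (600 - 64 * t ^ 2) * Z2 - 4 * π ^ 6) * t ^ 6 / (45 * π ^ 6) := by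
    field_simp
    ring
  rw [e]
  apply div_pos _ h3π
  apply mul_pos _ (pow_pos h0 6)
  nlinarith [hZ2, ht2, h6]

theorem poly_exp_inequality_on_pi (x : ℝ) (hx : x ∈ Set.Ioo (0 : ℝ) π) :
    (Real.sin x / x) ^ (3 / 2 + x ^ 2 / (2 * π ^ 2)) < Real.cos (x / 2) ^ 2 ∧
      Real.cos (x / 2) ^ 2 < (Real.sin x / x) ^ (3 / 2 + x ^ 2 / 80) := by
  obtain ⟨hx0, hxπ⟩ := hx
  have hπ0 := Real.pi_pos
  set t := x / 2 with htdef
  have hxt : x = 2 * t := by rw [htdef]; ring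
  have h0 : 0 < t := by rw [htdef]; linarith
  have ht : t < π / 2 := by rw [htdef]; linarith
  have hx2 : x ^ 2 = 4 * t ^ 2 := by rw [hxt]; ring
  have hsinx : 0 < Real.sin x := Real.sin_pos_of_pos_of_lt_pi hx0 hxπ
  have hsint : 0 < Real.sin t := Real.sin_pos_of_pos_of_lt_pi h0 (by linarith)
  have hcos : 0 < Real.cos t := Real.cos_pos_of_mem_Ioo ⟨by linarith, ht⟩
  have hs_pos : 0 < Real.sin x / x := div_pos hsinx hx0
  set S1 := Real.log t - Real.log (Real.sin t) with hS1
  set S2 := Real.log (2 * t) - Real.log (Real.sin (2 * t)) with hS2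
  have hlogs : Real.log (Real.sin x / x) = -S2 := by
    rw [Real.log_div (ne_of_gt hsinx) (ne_of_gt hx0), hS2, hxt]; ring
  have hlogc : Real.log (Real.cos t) = S1 - S2 := by
    have hsin2 : Real.sin (2 * t) = 2 * Real.sin t * Real.cos t := Real.sin_two_mul t
    have h1 : Real.log (Real.sin (2 * t)) =
        Real.log 2 + Real.log (Real.sin t) + Real.log (Real.cos t) := by
      rw [hsin2, Real.log_mul (by positivity) (ne_of_gt hcos),
        Real.log_mul (by norm_num) (ne_of_gt hsint)]
    have h2 : Real.log (2 * t) = Real.log 2 + Real.log t :=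
      Real.log_mul (by norm_num) (ne_of_gt h0)
    rw [hS1, hS2, h1, h2]; ring
  have hcos2 : Real.cos t ^ 2 = Real.exp (2 * (S1 - S2)) := by
    have hl : Real.log (Real.cos t ^ 2) = 2 * Real.log (Real.cos t) := by
      rw [Real.log_pow]; norm_num
    rw [← Real.exp_log (pow_pos hcos 2), hl, hlogc]
  have hkeyL : (π ^ 2 - 4 * t ^ 2) * S2 < 4 * π ^ 2 * S1 := ineqL h0 ht
  have hkeyR : 40 * S1 < (10 - t ^ 2) * S2 := ineqR h0 ht
  constructor
  · rw [Real.rpow_def_of_pos hs_pos, hcos2, Real.exp_lt_exp, hlogs, hx2]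
    have hP : (0 : ℝ) < 2 * π ^ 2 := by positivity
    apply lt_of_mul_lt_mul_left _ (le_of_lt hP)
    have e1 : 2 * π ^ 2 * (-S2 * (3 / 2 + 4 * t ^ 2 / (2 * π ^ 2)))
        = -3 * π ^ 2 * S2 - 4 * t ^ 2 * S2 := by
      field_simp; ring
    have e2 : 2 * π ^ 2 * (2 * (S1 - S2)) = 4 * π ^ 2 * S1 - 4 * π ^ 2 * S2 := by ring
    rw [e1, e2]
    nlinarith [hkeyL]
  · rw [Real.rpow_def_of_pos hs_pos, hcos2, Real.exp_lt_exp, hlogs, hx2]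
    have hP : (0 : ℝ) < 20 := by norm_num
    apply lt_of_mul_lt_mul_left _ (le_of_lt hP)
    have e1 : 20 * (-S2 * (3 / 2 + 4 * t ^ 2 / 80)) = -30 * S2 - t ^ 2 * S2 := by
      field_simp; ring
    have e2 : 20 * (2 * (S1 - S2)) = 40 * S1 - 40 * S2 := by ring
    rw [e1, e2]
    nlinarith [hkeyR]
end

section
/- For every a ∈ (3/2, 2) and every x ∈ (0, m_a), where m_a = √(2π²(a − 3/2)), the double inequality ((sin x)/x)^a < ((sin x)/x)^{3/2 + x²/(2π²)} < cos²(x/2) holds. -/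
open Real


private lemma mono_from_deriv {f f' : ℝ → ℝ}
    (H : ∀ t : ℝ, HasDerivAt f (f' t) t)
    (h' : ∀ t : ℝ, 0 < t → 0 ≤ f' t) {z : ℝ} (hz : 0 ≤ z) : f 0 ≤ f z := by
  have mono : MonotoneOn f (Set.Ici (0:ℝ)) := by
    apply monotoneOn_of_deriv_nonneg (convex_Ici 0)
    · exact fun t _ => (H t).continuousAt.continuousWithinAt
    · exact fun t ht => (H t).differentiableAt.differentiableWithinAt
    · intro t ht
      rw [interior_Ici] at ht
      rw [(H t).deriv]
      exact h' t ht
  exact mono Set.self_mem_Ici hz hz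

lemma sin_ge_poly {z : ℝ} (hz : 0 ≤ z) : z - z ^ 3 / 6 ≤ Real.sin z := by
  have H : ∀ t : ℝ, HasDerivAt (fun s : ℝ => Real.sin s - (s - s ^ 3 / 6))
      (Real.cos t - (1 - t ^ 2 / 2)) t := by
    intro t
    have h2 : HasDerivAt (fun s : ℝ => s - s ^ 3 / 6) (1 - t ^ 2 / 2) t := by
      have := (hasDerivAt_id t).sub ((hasDerivAt_pow 3 t).div_const 6)
      exact this.congr_deriv (by push_cast; ring)
    exact (Real.hasDerivAt_sin t).sub h2
  have := mono_from_deriv H (fun t ht => by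
    have := Real.one_sub_sq_div_two_le_cos (x := t); linarith) hz
  simpa using this

lemma cos_le_poly {z : ℝ} (hz : 0 ≤ z) : Real.cos z ≤ 1 - z ^ 2 / 2 + z ^ 4 / 24 := by
  have H : ∀ t : ℝ, HasDerivAt (fun s : ℝ => 1 - s ^ 2 / 2 + s ^ 4 / 24 - Real.cos s)
      (Real.sin t - (t - t ^ 3 / 6)) t := by
    intro t
    have h2 : HasDerivAt (fun s : ℝ => 1 - s ^ 2 / 2 + s ^ 4 / 24)
        (-(t) + t ^ 3 / 6) t := by
      have := ((hasDerivAt_const t (1:ℝ)).sub ((hasDerivAt_pow 2 t).div_const 2)).add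
        ((hasDerivAt_pow 4 t).div_const 24)
      exact this.congr_deriv (by push_cast; ring)
    have := h2.sub (Real.hasDerivAt_cos t)
    exact this.congr_deriv (by ring)
  have := mono_from_deriv H (fun t ht => by
    have := sin_ge_poly ht.le; linarith) hz
  simp at this
  linarith

lemma sin_le_poly {z : ℝ} (hz : 0 ≤ z) : Real.sin z ≤ z - z ^ 3 / 6 + z ^ 5 / 120 := by
  have H : ∀ t : ℝ, HasDerivAt (fun s : ℝ => s - s ^ 3 / 6 + s ^ 5 / 120 - Real.sin s)
      (1 - t ^ 2 / 2 + t ^ 4 / 24 - Real.cos t) t := by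
    intro t
    have h2 : HasDerivAt (fun s : ℝ => s - s ^ 3 / 6 + s ^ 5 / 120)
        (1 - t ^ 2 / 2 + t ^ 4 / 24) t := by
      have := ((hasDerivAt_id t).sub ((hasDerivAt_pow 3 t).div_const 6)).add
        ((hasDerivAt_pow 5 t).div_const 120)
      exact this.congr_deriv (by push_cast; ring)
    exact h2.sub (Real.hasDerivAt_sin t)
  have := mono_from_deriv H (fun t ht => by
    have := cos_le_poly ht.le; linarith) hz
  simp at this
  linarith

lemma cos_ge_poly {z : ℝ} (hz : 0 ≤ z) :
    1 - z ^ 2 / 2 + z ^ 4 / 24 - z ^ 6 / 720 ≤ Real.cos z := by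
  have H : ∀ t : ℝ, HasDerivAt
      (fun s : ℝ => Real.cos s - (1 - s ^ 2 / 2 + s ^ 4 / 24 - s ^ 6 / 720))
      ((t - t ^ 3 / 6 + t ^ 5 / 120) - Real.sin t) t := by
    intro t
    have h2 : HasDerivAt (fun s : ℝ => 1 - s ^ 2 / 2 + s ^ 4 / 24 - s ^ 6 / 720)
        (-(t) + t ^ 3 / 6 - t ^ 5 / 120) t := by
      have := (((hasDerivAt_const t (1:ℝ)).sub ((hasDerivAt_pow 2 t).div_const 2)).add
        ((hasDerivAt_pow 4 t).div_const 24)).sub ((hasDerivAt_pow 6 t).div_const 720)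
      exact this.congr_deriv (by push_cast; ring)
    have := (Real.hasDerivAt_cos t).sub h2
    exact this.congr_deriv (by ring)
  have := mono_from_deriv H (fun t ht => by
    have := sin_le_poly ht.le; linarith) hz
  simp at this
  linarith


lemma key_v {v : ℝ} (h0 : 0 ≤ v) (h1 : v ≤ 1.5625) :
    (9.8697:ℝ) * (v^3/15 - 5*v^4/432 + 13*v^5/14400 - v^6/28800 + v^7/1728000)
      ≤ 2*v^3 - 7*v^4/6 + v^5/4 - 5*v^6/216 + v^7/1296 := by
  nlinarith [mul_nonneg (mul_nonneg h0 h0) h0, sq_nonneg v, sq_nonneg (v-1),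
    mul_nonneg (mul_nonneg (mul_nonneg h0 h0) h0) (sub_nonneg.2 h1),
    mul_nonneg (mul_nonneg (mul_nonneg (mul_nonneg h0 h0) h0) h0) (sub_nonneg.2 h1),
    mul_nonneg (mul_nonneg (mul_nonneg (mul_nonneg (mul_nonneg h0 h0) h0) h0) h0) (sub_nonneg.2 h1),
    mul_nonneg (mul_nonneg (mul_nonneg (mul_nonneg (mul_nonneg (mul_nonneg h0 h0) h0) h0) h0) h0) (sub_nonneg.2 h1),
    mul_nonneg (mul_nonneg (mul_nonneg (mul_nonneg h0 h0) h0) h0) (mul_nonneg (sub_nonneg.2 h1) (sub_nonneg.2 h1))]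

lemma X_nonneg {v : ℝ} (h0 : 0 ≤ v) (h1 : v ≤ 1.5625) :
    0 ≤ v^3/15 - 5*v^4/432 + 13*v^5/14400 - v^6/28800 + v^7/1728000 := by
  nlinarith [mul_nonneg (mul_nonneg h0 h0) h0, sq_nonneg v,
    mul_nonneg (mul_nonneg (mul_nonneg h0 h0) h0) (sub_nonneg.2 h1),
    mul_nonneg (mul_nonneg (mul_nonneg (mul_nonneg h0 h0) h0) h0) (sub_nonneg.2 h1),
    mul_nonneg (mul_nonneg (mul_nonneg (mul_nonneg (mul_nonneg h0 h0) h0) h0) h0) (sub_nonneg.2 h1),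
    mul_nonneg (mul_nonneg (mul_nonneg (mul_nonneg h0 h0) h0) h0) (mul_nonneg (sub_nonneg.2 h1) (sub_nonneg.2 h1))]


lemma key_poly {u : ℝ} (h0 : 0 < u) (h1 : u ≤ 1.25) :
    π^2*(u - u^3/6 + u^5/120)^3 - 4*u^2*((u - u^3/6)^3*(u^2/2 - u^4/24))
      ≤ π^2*(u^3*(1 - u^2/2 + u^4/24 - u^6/720)) := by
  have hπ2 : π^2 ≤ 9.8697 := by nlinarith [pi_lt_d6, pi_gt_d6]
  have hv0 : (0:ℝ) ≤ u^2 := sq_nonneg u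
  have hv1 : u^2 ≤ 1.5625 := by nlinarith
  have e1 := key_v hv0 hv1
  have e2 := X_nonneg hv0 hv1
  have e3 : 0 ≤ u * ((2*(u^2)^3 - 7*(u^2)^4/6 + (u^2)^5/4 - 5*(u^2)^6/216 + (u^2)^7/1296)
      - 9.8697 * ((u^2)^3/15 - 5*(u^2)^4/432 + 13*(u^2)^5/14400 - (u^2)^6/28800 + (u^2)^7/1728000)) :=
    mul_nonneg h0.le (by linarith)
  have e4 : 0 ≤ u * ((9.8697 - π^2) * ((u^2)^3/15 - 5*(u^2)^4/432 + 13*(u^2)^5/14400 - (u^2)^6/28800 + (u^2)^7/1728000)) :=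
    mul_nonneg h0.le (mul_nonneg (by linarith) e2)
  nlinarith [e3, e4]


lemma claimA {u : ℝ} (h0 : 0 < u) (h1 : u ≤ 1.25) :
    Real.sin u ^ 3 * (π^2 - 4*u^2*(1 - Real.cos u)) ≤ π^2 * u^3 * Real.cos u := by
  have hsle := sin_le_poly h0.le
  have hsge := sin_ge_poly h0.le
  have hcle := cos_le_poly h0.le
  have hcge := cos_ge_poly h0.le
  have hsm0 : 0 ≤ u - u^3/6 := by nlinarith
  have hS0 : 0 ≤ Real.sin u := le_trans hsm0 hsge
  have h3le : Real.sin u ^ 3 ≤ (u - u^3/6 + u^5/120)^3 := by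
    exact pow_le_pow_left₀ hS0 hsle 3
  have h3ge : (u - u^3/6)^3 ≤ Real.sin u ^ 3 := by
    exact pow_le_pow_left₀ hsm0 hsge 3
  have homc : u^2/2 - u^4/24 ≤ 1 - Real.cos u := by linarith
  have homc0 : 0 ≤ u^2/2 - u^4/24 := by nlinarith
  have hπ2 : (0:ℝ) < π^2 := by positivity
  have t1 : π^2 * Real.sin u ^ 3 ≤ π^2 * (u - u^3/6 + u^5/120)^3 := by
    exact mul_le_mul_of_nonneg_left h3le hπ2.le
  have t2 : 4*u^2*((u - u^3/6)^3*(u^2/2 - u^4/24)) ≤ 4*u^2*(Real.sin u ^3*(1 - Real.cos u)) := by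
    have h := mul_le_mul h3ge homc homc0 (pow_nonneg hS0 3)
    nlinarith [sq_nonneg u]
  have t3 : π^2*(u^3*(1 - u^2/2 + u^4/24 - u^6/720)) ≤ π^2 * u^3 * Real.cos u := by
    have : u^3*(1 - u^2/2 + u^4/24 - u^6/720) ≤ u^3 * Real.cos u :=
      mul_le_mul_of_nonneg_left hcge (by positivity)
    nlinarith
  have kp := key_poly h0 h1
  nlinarith [t1, t2, t3, kp]

lemma region1 {u : ℝ} (h0 : 0 < u) (h1 : u ≤ 1.25) :
    (Real.sin u / u) ^ (3:ℝ) ≤ Real.cos u ^ (1 - 4 * u ^ 2 / π ^ 2) := by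
  have hπ := pi_gt_d6
  have hπ0 : (0:ℝ) < π := by linarith
  have hc0 : 0 < Real.cos u := Real.cos_pos_of_mem_Ioo ⟨by linarith, by linarith⟩
  have hr0 : (0:ℝ) ≤ 4 * u ^ 2 / π ^ 2 := by positivity
  have hr1 : 4 * u ^ 2 / π ^ 2 ≤ 1 := by
    rw [div_le_one (by positivity)]; nlinarith
  have hc1 : Real.cos u ≤ 1 := Real.cos_le_one u
  set r : ℝ := 4 * u ^ 2 / π ^ 2 with hr
  have hchord : Real.cos u ^ r ≤ 1 - r + r * Real.cos u := by
    have h := Real.geom_mean_le_arith_mean2_weighted (by linarith : (0:ℝ) ≤ 1 - r) hr0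
      zero_le_one hc0.le (by ring)
    simpa [Real.one_rpow] using h
  have hden0 : 0 < 1 - r + r * Real.cos u := by nlinarith
  have hA : (Real.sin u / u) ^ (3:ℕ) * (1 - r + r * Real.cos u) ≤ Real.cos u := by
    have hkey := claimA h0 h1
    have hrr : 1 - r + r * Real.cos u = (π^2 - 4*u^2*(1 - Real.cos u))/π^2 := by
      rw [hr]; field_simp; ring
    rw [div_pow, hrr, div_mul_div_comm, div_le_iff₀ (by positivity)]
    nlinarith [hkey]
  have hσ3 : (Real.sin u / u) ^ (3:ℝ) = (Real.sin u / u) ^ (3:ℕ) := by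
    rw [← Real.rpow_natCast]; norm_num
  have hcr : Real.cos u ^ ((1:ℝ) - r) * Real.cos u ^ r = Real.cos u := by
    rw [← Real.rpow_add hc0]; simp
  have h2 : Real.cos u ≤ Real.cos u ^ ((1:ℝ) - r) * (1 - r + r * Real.cos u) := by
    calc Real.cos u = Real.cos u ^ ((1:ℝ) - r) * Real.cos u ^ r := hcr.symm
    _ ≤ Real.cos u ^ ((1:ℝ) - r) * (1 - r + r * Real.cos u) :=
        mul_le_mul_of_nonneg_left hchord (Real.rpow_nonneg hc0.le _)
  rw [hσ3]
  calc (Real.sin u / u) ^ (3:ℕ) ≤ Real.cos u / (1 - r + r * Real.cos u) := by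
        rw [le_div_iff₀ hden0]; exact hA
  _ ≤ Real.cos u ^ ((1:ℝ) - r) := by
        rw [div_le_iff₀ hden0]; exact h2


set_option maxHeartbeats 1000000 in
lemma region2 {u : ℝ} (h1 : (1.25:ℝ) ≤ u) (h2 : u < π / 2) :
    Real.log (Real.sin u / u) * (3 + 4 * u ^ 2 / π ^ 2) <
      Real.log (Real.cos u) * (1 - 4 * u ^ 2 / π ^ 2) := by
  have hπ := pi_gt_d6
  have hπ' := pi_lt_d6
  have hu0 : (0:ℝ) < u := by linarith
  have huπ : u < π := by linarith
  have hsin0 : 0 < Real.sin u := Real.sin_pos_of_pos_of_lt_pi hu0 huπ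
  have hσ0 : 0 < Real.sin u / u := div_pos hsin0 hu0
  have hc0 : 0 < Real.cos u := Real.cos_pos_of_mem_Ioo ⟨by linarith, h2⟩
  -- log σ ≤ - log u
  have hσle : Real.sin u / u ≤ 1 / u := by
    gcongr
    exact Real.sin_le_one u
  have hlogσ : Real.log (Real.sin u / u) ≤ - Real.log u := by
    have h := (Real.log_le_log_iff hσ0 (by positivity)).2 hσle
    rwa [one_div, Real.log_inv] at h
  have hlogu : (0.2:ℝ) ≤ Real.log u := by
    have h5 : Real.log ((0.8:ℝ)) ≤ 0.8 - 1 := Real.log_le_sub_one_of_pos (by norm_num)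
    have h6 : Real.log ((0.8:ℝ)) + Real.log (1.25:ℝ) = 0 := by
      rw [← Real.log_mul (by norm_num) (by norm_num)]; norm_num
    have h7 : Real.log (1.25:ℝ) ≤ Real.log u := (Real.log_le_log_iff (by norm_num) hu0).2 h1
    linarith
  set ε : ℝ := π / 2 - u with hε
  have hε0 : 0 < ε := by rw [hε]; linarith
  have hε1 : ε ≤ 0.3208 := by rw [hε]; linarith
  have hcε : 0.97 * ε ≤ Real.cos u := by
    have h := sin_ge_poly hε0.le
    have h8 : Real.sin ε = Real.cos u := by rw [hε, Real.sin_pi_div_two_sub]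
    have hε2 : ε^2 ≤ 0.103 := by nlinarith
    nlinarith [mul_le_mul_of_nonneg_left hε2 hε0.le]
  have he1 : (2.7182818283:ℝ) < Real.exp 1 := Real.exp_one_gt_d9
  have hC0 : 0 ≤ - Real.log (Real.cos u) := by
    have := Real.log_nonpos hc0.le (Real.cos_le_one u); linarith
  have hC : - Real.log (Real.cos u) ≤ 1 / (0.97 * ε * Real.exp 1) := by
    have hA0 : (0:ℝ) < 1 / (0.97 * ε) := by positivity
    have h9 : Real.log (1/(0.97*ε) / Real.exp 1) ≤ 1/(0.97*ε)/Real.exp 1 - 1 :=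
      Real.log_le_sub_one_of_pos (by positivity)
    rw [Real.log_div (ne_of_gt hA0) (Real.exp_ne_zero 1), Real.log_exp] at h9
    have h10 : Real.log (0.97 * ε) ≤ Real.log (Real.cos u) :=
      (Real.log_le_log_iff (by positivity) hc0).2 hcε
    have h11 : Real.log (1/(0.97*ε)) = - Real.log (0.97*ε) := by
      rw [one_div, Real.log_inv]
    have h12 : 1/(0.97*ε)/Real.exp 1 = 1/(0.97*ε*Real.exp 1) := by
      field_simp
    linarith
  have h4t0 : 0 ≤ 1 - 4 * u ^ 2 / π ^ 2 := by
    rw [sub_nonneg, div_le_one (by positivity)]; nlinarith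
  have h4tε : 1 - 4 * u ^ 2 / π ^ 2 ≤ 4 * ε / π := by
    have hq : π^2 - 4*u^2 ≤ 4*ε*π := by rw [hε]; nlinarith [sq_nonneg (π - 2*u)]
    have e1 : 1 - 4 * u ^ 2 / π ^ 2 = (π^2 - 4*u^2)/π^2 := by field_simp
    have e2 : 4*ε/π = (4*ε*π)/π^2 := by rw [pow_two]; field_simp
    rw [e1, e2]
    gcongr
  have key1 : (1 - 4*u^2/π^2) * (- Real.log (Real.cos u)) ≤ (4*ε/π) * (1/(0.97*ε*Real.exp 1)) :=
    mul_le_mul h4tε hC hC0 (by positivity)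
  have key1' : (4*ε/π) * (1/(0.97*ε*Real.exp 1)) = 4/(0.97*π*Real.exp 1) := by
    field_simp
  have key2 : 4/(0.97*π*Real.exp 1) < 0.6 := by
    rw [div_lt_iff₀ (by positivity)]; nlinarith
  have hs0 : 0 < 4*u^2/π^2 := by positivity
  have hL : Real.log (Real.sin u/u) * (3 + 4*u^2/π^2) < -0.6 := by
    have hp : (0:ℝ) ≤ 3 + 4*u^2/π^2 := by linarith
    have hq : -Real.log u ≤ -0.2 := by linarith
    have hL1 : Real.log (Real.sin u/u) * (3 + 4*u^2/π^2) ≤ (-Real.log u) * (3 + 4*u^2/π^2) :=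
      mul_le_mul_of_nonneg_right hlogσ hp
    have hL2 : (-Real.log u) * (3 + 4*u^2/π^2) ≤ -0.2 * (3 + 4*u^2/π^2) :=
      mul_le_mul_of_nonneg_right hq hp
    nlinarith
  rw [key1'] at key1
  nlinarith [key1, key2, hL]


lemma keyT {u : ℝ} (h0 : 0 < u) (h2 : u < π / 2) :
    Real.log (Real.sin u / u) * (3 + 4 * u ^ 2 / π ^ 2) <
      Real.log (Real.cos u) * (1 - 4 * u ^ 2 / π ^ 2) := by
  rcases le_or_gt u 1.25 with hu | hu
  · have hπ := pi_gt_d6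
    have huπ : u < π := by linarith
    have hsin0 : 0 < Real.sin u := Real.sin_pos_of_pos_of_lt_pi h0 huπ
    have hσ0 : 0 < Real.sin u / u := div_pos hsin0 h0
    have hσ1 : Real.sin u / u < 1 := (div_lt_one h0).2 (Real.sin_lt h0)
    have hc0 : 0 < Real.cos u := Real.cos_pos_of_mem_Ioo ⟨by linarith, h2⟩
    have h3 : (Real.sin u / u) ^ ((3:ℝ) + 4 * u ^ 2 / π ^ 2) < (Real.sin u / u) ^ (3:ℝ) := by
      apply Real.rpow_lt_rpow_of_exponent_gt hσ0 hσ1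
      have : (0:ℝ) < 4 * u ^ 2 / π ^ 2 := by positivity
      linarith
    have h4 := h3.trans_le (region1 h0 hu)
    rw [Real.rpow_def_of_pos hσ0, Real.rpow_def_of_pos hc0] at h4
    exact Real.exp_lt_exp.1 h4
  · exact region2 hu.le h2

theorem const_vs_poly_exp (a : ℝ) (ha : a ∈ Set.Ioo (3 / 2 : ℝ) 2) (x : ℝ)
    (hx : x ∈ Set.Ioo (0 : ℝ) (Real.sqrt (2 * π ^ 2 * (a - 3 / 2)))) :
    (Real.sin x / x) ^ a < (Real.sin x / x) ^ (3 / 2 + x ^ 2 / (2 * π ^ 2)) ∧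
      (Real.sin x / x) ^ (3 / 2 + x ^ 2 / (2 * π ^ 2)) < Real.cos (x / 2) ^ 2 := by
  obtain ⟨ha1, ha2⟩ := ha
  obtain ⟨hx0, hxs⟩ := hx
  have hπ := pi_gt_d6
  have hπ0 : (0:ℝ) < π := by linarith
  have hM : x ^ 2 < 2 * π ^ 2 * (a - 3 / 2) := (Real.lt_sqrt hx0.le).1 hxs
  have hxπ : x < π := by nlinarith
  have hsin0 : 0 < Real.sin x := Real.sin_pos_of_pos_of_lt_pi hx0 hxπ
  have hy0 : 0 < Real.sin x / x := div_pos hsin0 hx0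
  have hy1 : Real.sin x / x < 1 := (div_lt_one hx0).2 (Real.sin_lt hx0)
  have hea : 3 / 2 + x ^ 2 / (2 * π ^ 2) < a := by
    rw [← lt_sub_iff_add_lt', ← sub_add_cancel a (3/2)] at *
    have : x ^ 2 / (2 * π ^ 2) < a - 3/2 := by
      rw [div_lt_iff₀ (by positivity)]; nlinarith
    linarith
  constructor
  · exact Real.rpow_lt_rpow_of_exponent_gt hy0 hy1 hea
  · -- second inequality
    set u : ℝ := x / 2 with hu
    have hu0 : 0 < u := by rw [hu]; linarith
    have hu2 : u < π / 2 := by rw [hu]; linarith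
    have hsinu : 0 < Real.sin u := Real.sin_pos_of_pos_of_lt_pi hu0 (by linarith)
    have hσ0 : 0 < Real.sin u / u := div_pos hsinu hu0
    have hc0 : 0 < Real.cos u := Real.cos_pos_of_mem_Ioo ⟨by linarith, hu2⟩
    have hy : Real.sin x / x = Real.sin u / u * Real.cos u := by
      have h := Real.sin_two_mul u
      have hx2 : 2 * u = x := by rw [hu]; ring
      rw [hx2] at h
      rw [h]; field_simp; ring
    have hT := keyT hu0 hu2
    have hexp : (Real.sin x / x) ^ (3 / 2 + x ^ 2 / (2 * π ^ 2))
        = Real.exp (Real.log (Real.sin x / x) * (3 / 2 + x ^ 2 / (2 * π ^ 2))) :=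
      Real.rpow_def_of_pos hy0 _
    have hcos2 : Real.cos u ^ 2 = Real.exp (Real.log (Real.cos u) * 2) := by
      rw [Real.exp_mul, Real.exp_log hc0]
      norm_num
    rw [hexp, hcos2]
    apply Real.exp_lt_exp.2
    have hlog : Real.log (Real.sin x / x) = Real.log (Real.sin u / u) + Real.log (Real.cos u) := by
      rw [hy, Real.log_mul (ne_of_gt hσ0) (ne_of_gt hc0)]
    rw [hlog]
    have hx2u : x ^ 2 = 4 * u ^ 2 := by rw [hu]; ring
    rw [hx2u]
    have hrw : 4 * u ^ 2 / (2 * π ^ 2) = 2 * (u ^ 2 / π ^ 2) := by ring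
    have hrw2 : 4 * u ^ 2 / π ^ 2 = 4 * (u ^ 2 / π ^ 2) := by ring
    rw [hrw]
    rw [hrw2] at hT
    set s : ℝ := u ^ 2 / π ^ 2 with hs
    nlinarith [hT]
end

section
/- For every a ∈ (3/2, 2) there exists δ > 0 such that for every x ∈ (0, δ) the inequality ((sin x)/x)^a < cos²(x/2) holds. -/
set_option maxHeartbeats 1000000


open Real

private lemma aux_log_lower {u : ℝ} (h0 : 0 ≤ u) (h : u ≤ 1 / 2) :
    -u - 2 * u ^ 2 ≤ Real.log (1 - u) := by
  have h1u : (0:ℝ) < 1 - u := by linarith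
  have hlog : 1 - (1 - u)⁻¹ ≤ Real.log (1 - u) := by
    have hl := Real.log_le_sub_one_of_pos (inv_pos.2 h1u)
    rw [Real.log_inv] at hl; linarith
  have hinv : (1 - u)⁻¹ ≤ 1 + u + 2 * u ^ 2 := by
    rw [inv_eq_one_div, div_le_iff₀ h1u]
    nlinarith
  linarith

theorem sinc_pow_lt_cos_sq_near_zero (a : ℝ) (ha : a ∈ Set.Ioo (3 / 2 : ℝ) 2) :
    ∃ δ > (0 : ℝ), ∀ x ∈ Set.Ioo (0 : ℝ) δ,
      (Real.sin x / x) ^ a < Real.cos (x / 2) ^ 2 := by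
  obtain ⟨ha1, ha2⟩ := ha
  refine ⟨min (1 / 2) ((a - 3 / 2) / 2), lt_min (by norm_num) (by linarith), ?_⟩
  intro x hx
  obtain ⟨hx0, hxδ⟩ := hx
  have hx1 : x < 1 / 2 := lt_of_lt_of_le hxδ (min_le_left _ _)
  have hxa : x < (a - 3 / 2) / 2 := lt_of_lt_of_le hxδ (min_le_right _ _)
  have hxabs : |x| ≤ 1 := by rw [abs_of_pos hx0]; linarith
  have hsb := Real.sin_bound hxabs
  have hcb := Real.cos_bound hxabs
  rw [abs_of_pos hx0] at hsb hcb
  have hsin_le : Real.sin x ≤ x - x ^ 3 / 6 + x ^ 4 * (5 / 96) := by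
    have := (abs_le.1 hsb).2; nlinarith [pow_pos hx0 4, hx1]
  have hcos_ge : 1 - x ^ 2 / 2 - x ^ 4 * (5 / 96) ≤ Real.cos x := by
    have := (abs_le.1 hcb).1; linarith
  clear hsb hcb hxabs hxδ
  have hsin_pos : 0 < Real.sin x :=
    Real.sin_pos_of_pos_of_lt_pi hx0 (by linarith [Real.pi_gt_three])
  have hsin_lt : Real.sin x < x := Real.sin_lt hx0
  have hs_pos : 0 < Real.sin x / x := div_pos hsin_pos hx0
  have hrhs : Real.cos (x / 2) ^ 2 = 1 - (1 - Real.cos x) / 2 := by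
    rw [Real.cos_sq]
    have h2 : 2 * (x / 2) = x := by ring
    rw [h2]; ring
  have hu_nonneg : 0 ≤ (1 - Real.cos x) / 2 := by
    have := Real.cos_le_one x; linarith
  have hx2q : x ^ 2 < 1 / 4 := by nlinarith
  have hx4q : x ^ 4 ≤ x ^ 2 / 4 := by nlinarith [sq_nonneg x]
  have hu_le : (1 - Real.cos x) / 2 ≤ x ^ 2 / 4 + x ^ 4 * (5 / 192) := by linarith
  have hu_le' : (1 - Real.cos x) / 2 ≤ x ^ 2 * (197 / 768) := by nlinarith
  have hu_half : (1 - Real.cos x) / 2 ≤ 1 / 2 := by nlinarith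
  have hc_pos : (0:ℝ) < 1 - (1 - Real.cos x) / 2 := by linarith
  have hlog_s : Real.log (Real.sin x / x) ≤ Real.sin x / x - 1 :=
    Real.log_le_sub_one_of_pos hs_pos
  have hlog_c : -((1 - Real.cos x) / 2) - 2 * ((1 - Real.cos x) / 2) ^ 2 ≤
      Real.log (1 - (1 - Real.cos x) / 2) := aux_log_lower hu_nonneg hu_half
  have hs1 : Real.sin x / x - 1 ≤ -x ^ 2 / 6 + x ^ 3 * (5 / 96) := by
    rw [div_sub_one hx0.ne', div_le_iff₀ hx0]
    have hr : (-x ^ 2 / 6 + x ^ 3 * (5 / 96)) * x = -(x ^ 3) / 6 + x ^ 4 * (5 / 96) := by ring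
    linarith
  have hE_neg : -x ^ 2 / 6 + x ^ 3 * (5 / 96) ≤ 0 := by nlinarith [sq_nonneg x]
  have hkey : a * Real.log (Real.sin x / x) < Real.log (1 - (1 - Real.cos x) / 2) := by
    have h1 : a * Real.log (Real.sin x / x) ≤ a * (Real.sin x / x - 1) :=
      mul_le_mul_of_nonneg_left hlog_s (by linarith)
    have h2 : a * (Real.sin x / x - 1) ≤ a * (-x ^ 2 / 6 + x ^ 3 * (5 / 96)) :=
      mul_le_mul_of_nonneg_left hs1 (by linarith)
    have h3 : a * (-x ^ 2 / 6 + x ^ 3 * (5 / 96)) ≤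
        (3 / 2 + 2 * x) * (-x ^ 2 / 6 + x ^ 3 * (5 / 96)) :=
      mul_le_mul_of_nonpos_right (by linarith) hE_neg
    have hu2 : ((1 - Real.cos x) / 2) ^ 2 ≤ x ^ 4 * (197 / 768) ^ 2 := by
      have : ((1 - Real.cos x) / 2) * ((1 - Real.cos x) / 2) ≤
          (x ^ 2 * (197 / 768)) * (x ^ 2 * (197 / 768)) :=
        mul_le_mul hu_le' hu_le' hu_nonneg (by positivity)
      nlinarith
    have h4 : (3 / 2 + 2 * x) * (-x ^ 2 / 6 + x ^ 3 * (5 / 96)) <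
        -((1 - Real.cos x) / 2) - 2 * ((1 - Real.cos x) / 2) ^ 2 := by
      have hx3 : 0 < x ^ 3 := pow_pos hx0 3
      have hx43 : x ^ 4 ≤ x ^ 3 / 2 := by nlinarith
      nlinarith
    linarith
  calc (Real.sin x / x) ^ a = Real.exp (Real.log (Real.sin x / x) * a) :=
        Real.rpow_def_of_pos hs_pos a
    _ < Real.exp (Real.log (1 - (1 - Real.cos x) / 2)) :=
        Real.exp_lt_exp.2 (by rw [mul_comm]; exact hkey)
    _ = 1 - (1 - Real.cos x) / 2 := Real.exp_log hc_pos
    _ = Real.cos (x / 2) ^ 2 := hrhs.symm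
end
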